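/- arXiv:2205.15287 — 5 statements merged into one kernel-verified Lean document; each statement's English description precedes it below -/
import Mathlib

section
/- Let h : S → ℝ be a non-negative superharmonic function and let (B_n) be a branching random walk with mean offspring m > 1 driven by P started at o. Then the sequence (⟨h, B̄_n⟩)_{n≥0} is a supermartingale with respect to the filtration (F_n)_{n≥0}. -/
open MeasureTheory Filter Topology
open scoped ENNReal NNReal

/-- For a non-negative superharmonic function `h` and a branching random walk `B`
with mean offspring `m > 1` driven by the stochastic matrix `P` started at `o`, the
sequence `⟨h, B̄ₙ⟩ = m⁻ⁿ ∑ₓ h(x) Bₙ(x)` is a supermartingale for the filtration `F`. -/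
theorem brw_nonneg_superharmonic_supermartingale
    {S : Type*} [Countable S] [DecidableEq S]
    (P : S → S → ℝ)
    (hP0 : ∀ x y, 0 ≤ P x y)
    (hP1 : ∀ x, HasSum (fun y => P x y) 1)
    (m : ℝ) (hm : 1 < m) (o : S)
    {Ω : Type*} {mΩ : MeasurableSpace Ω}
    (μ : Measure Ω) [IsProbabilityMeasure μ]
    (F : Filtration ℕ mΩ)
    (B : ℕ → Ω → S → ℕ)
    (hadapt : ∀ n x, Measurable[F n] (fun ω => B n ω x))
    (hfin : ∀ n ω, (Function.support (B n ω)).Finite)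
    (hint : ∀ n x, Integrable (fun ω => (B n ω x : ℝ)) μ)
    (hB0 : ∀ ω x, B 0 ω x = if x = o then 1 else 0)
    (hbranch : ∀ n x,
      μ[fun ω => (B (n + 1) ω x : ℝ)|F n]
        =ᵐ[μ] fun ω => m * ∑' y, (B n ω y : ℝ) * P y x)
    (h : S → ℝ)
    (hnonneg : ∀ x, 0 ≤ h x)
    (hsuper : ∀ x, ∃ s : ℝ, HasSum (fun y => P x y * h y) s ∧ s ≤ h x) :
    Supermartingale (fun n ω => (m ^ n)⁻¹ * ∑' x, h x * (B n ω x : ℝ)) F μ := by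
  have hm0 : (0:ℝ) < m := lt_trans zero_lt_one hm
  set em : ℝ≥0∞ := ENNReal.ofReal m with hem
  -- summability helpers
  have hsumh : ∀ n (ω : Ω), Summable fun x => h x * (B n ω x : ℝ) := by
    intro n ω
    apply summable_of_ne_finset_zero (s := (hfin n ω).toFinset)
    intro x hx
    have hx0 : B n ω x = 0 := by
      by_contra h0
      exact hx ((hfin n ω).mem_toFinset.2 (Function.mem_support.2 h0))
    simp [hx0]
  have hsumP : ∀ n (ω : Ω) x, Summable fun y => (B n ω y : ℝ) * P y x := by
    intro n ω x
    apply summable_of_ne_finset_zero (s := (hfin n ω).toFinset)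
    intro y hy
    have hy0 : B n ω y = 0 := by
      by_contra h0
      exact hy ((hfin n ω).mem_toFinset.2 (Function.mem_support.2 h0))
    simp [hy0]
  -- the ENNReal-valued total mass
  set G : ℕ → Ω → ℝ≥0∞ := fun n ω => ∑' x, ENNReal.ofReal (h x) * (B n ω x : ℝ≥0∞) with hG
  have hofReal : ∀ n (ω : Ω),
      ENNReal.ofReal (∑' x, h x * (B n ω x : ℝ)) = G n ω := by
    intro n ω
    rw [ENNReal.ofReal_tsum_of_nonneg
      (fun x => mul_nonneg (hnonneg x) (Nat.cast_nonneg _)) (hsumh n ω)]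
    exact tsum_congr fun x => by
      rw [ENNReal.ofReal_mul (hnonneg x), ENNReal.ofReal_natCast]
  have htoReal : ∀ n (ω : Ω), ∑' x, h x * (B n ω x : ℝ) = (G n ω).toReal := by
    intro n ω
    rw [← hofReal n ω, ENNReal.toReal_ofReal
      (tsum_nonneg fun x => mul_nonneg (hnonneg x) (Nat.cast_nonneg _))]
  -- measurability
  have mB : ∀ n x, Measurable fun ω => ((B n ω x : ℕ) : ℝ≥0∞) := fun n x =>
    measurable_from_top.comp ((hadapt n x).mono (F.le n) le_rfl)
  have mGF : ∀ n, Measurable[F n] (G n) := fun n =>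
    Measurable.ennreal_tsum fun x =>
      (measurable_from_top.comp (hadapt n x)).const_mul _
  have mG : ∀ n, Measurable (G n) := fun n => (mGF n).mono (F.le n) le_rfl
  -- superharmonicity in ℝ≥0∞
  have hPh : ∀ y, (∑' x, ENNReal.ofReal (P y x) * ENNReal.ofReal (h x))
      ≤ ENNReal.ofReal (h y) := by
    intro y
    obtain ⟨s, hs, hsle⟩ := hsuper y
    calc (∑' x, ENNReal.ofReal (P y x) * ENNReal.ofReal (h x))
        = ∑' x, ENNReal.ofReal (P y x * h x) :=
          tsum_congr fun x => (ENNReal.ofReal_mul (hP0 y x)).symm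
      _ = ENNReal.ofReal (∑' x, P y x * h x) :=
          (ENNReal.ofReal_tsum_of_nonneg
            (fun x => mul_nonneg (hP0 y x) (hnonneg x)) hs.summable).symm
      _ = ENNReal.ofReal s := by rw [hs.tsum_eq]
      _ ≤ _ := ENNReal.ofReal_le_ofReal hsle
  -- the key set-lintegral inequality
  have key : ∀ n (s : Set Ω), MeasurableSet[F n] s →
      (∫⁻ ω in s, G (n+1) ω ∂μ) ≤ em * ∫⁻ ω in s, G n ω ∂μ := by
    intro n s hs
    have hsΩ : MeasurableSet s := F.le n s hs
    have step2 : ∀ x, (∫⁻ ω in s, ((B (n+1) ω x : ℕ) : ℝ≥0∞) ∂μ)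
        = em * ∑' y, (∫⁻ ω in s, ((B n ω y : ℕ) : ℝ≥0∞) ∂μ) * ENNReal.ofReal (P y x) := by
      intro x
      have hrhsInt : Integrable (fun ω => m * ∑' y, (B n ω y : ℝ) * P y x) μ :=
        integrable_condExp.congr (hbranch n x)
      have heq : (∫ ω in s, ((B (n+1) ω x : ℕ) : ℝ) ∂μ)
          = ∫ ω in s, (m * ∑' y, (B n ω y : ℝ) * P y x) ∂μ := by
        rw [← setIntegral_condExp (F.le n) (hint (n+1) x) hs]
        exact setIntegral_congr_ae hsΩ ((hbranch n x).mono fun ω hω _ => hω)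
      have l1 : ENNReal.ofReal (∫ ω in s, ((B (n+1) ω x : ℕ) : ℝ) ∂μ)
          = ∫⁻ ω in s, ((B (n+1) ω x : ℕ) : ℝ≥0∞) ∂μ := by
        rw [ofReal_integral_eq_lintegral_ofReal ((hint (n+1) x).restrict)
          (ae_of_all _ fun ω => Nat.cast_nonneg _)]
        exact lintegral_congr fun ω => by rw [ENNReal.ofReal_natCast]
      have l2 : ENNReal.ofReal (∫ ω in s, (m * ∑' y, (B n ω y : ℝ) * P y x) ∂μ)
          = em * ∑' y, (∫⁻ ω in s, ((B n ω y : ℕ) : ℝ≥0∞) ∂μ) * ENNReal.ofReal (P y x) := by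
        rw [ofReal_integral_eq_lintegral_ofReal hrhsInt.restrict
          (ae_of_all _ fun ω => mul_nonneg hm0.le
            (tsum_nonneg fun y => mul_nonneg (Nat.cast_nonneg _) (hP0 y x)))]
        have hpt : ∀ ω, ENNReal.ofReal (m * ∑' y, (B n ω y : ℝ) * P y x)
            = em * ∑' y, ((B n ω y : ℕ) : ℝ≥0∞) * ENNReal.ofReal (P y x) := by
          intro ω
          rw [ENNReal.ofReal_mul hm0.le, ENNReal.ofReal_tsum_of_nonneg
            (fun y => mul_nonneg (Nat.cast_nonneg _) (hP0 y x)) (hsumP n ω x)]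
          exact congrArg (em * ·) (tsum_congr fun y => by
            rw [ENNReal.ofReal_mul (Nat.cast_nonneg _), ENNReal.ofReal_natCast])
        rw [lintegral_congr hpt,
          lintegral_const_mul _ (Measurable.ennreal_tsum fun y => (mB n y).mul_const _),
          lintegral_tsum fun y => ((mB n y).mul_const _).aemeasurable]
        exact congrArg (em * ·) (tsum_congr fun y => lintegral_mul_const _ (mB n y))
      rw [← l1, heq, l2]
    set I : S → ℝ≥0∞ := fun y => ∫⁻ ω in s, ((B n ω y : ℕ) : ℝ≥0∞) ∂μ with hI
    calc (∫⁻ ω in s, G (n+1) ω ∂μ)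
        = ∑' x, ∫⁻ ω in s, ENNReal.ofReal (h x) * ((B (n+1) ω x : ℕ) : ℝ≥0∞) ∂μ :=
          lintegral_tsum fun x => ((mB (n+1) x).const_mul _).aemeasurable
      _ = ∑' x, ENNReal.ofReal (h x) * ∫⁻ ω in s, ((B (n+1) ω x : ℕ) : ℝ≥0∞) ∂μ :=
          tsum_congr fun x => lintegral_const_mul _ (mB (n+1) x)
      _ = ∑' x, ENNReal.ofReal (h x)
            * (em * ∑' y, I y * ENNReal.ofReal (P y x)) :=
          tsum_congr fun x => by rw [step2 x]
      _ = ∑' x, em * ∑' y, I y * (ENNReal.ofReal (P y x) * ENNReal.ofReal (h x)) := by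
          refine tsum_congr fun x => ?_
          rw [show ENNReal.ofReal (h x) * (em * ∑' y, I y * ENNReal.ofReal (P y x))
              = em * ((∑' y, I y * ENNReal.ofReal (P y x)) * ENNReal.ofReal (h x)) by ring,
            ← ENNReal.tsum_mul_right]
          exact congrArg (em * ·) (tsum_congr fun y => by ring)
      _ = em * ∑' y, ∑' x, I y * (ENNReal.ofReal (P y x) * ENNReal.ofReal (h x)) := by
          rw [ENNReal.tsum_mul_left, ENNReal.tsum_comm]
      _ = em * ∑' y, I y * ∑' x, ENNReal.ofReal (P y x) * ENNReal.ofReal (h x) := by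
          exact congrArg (em * ·) (tsum_congr fun y => ENNReal.tsum_mul_left)
      _ ≤ em * ∑' y, I y * ENNReal.ofReal (h y) :=
          mul_le_mul_right (ENNReal.tsum_le_tsum fun y => mul_le_mul_right (hPh y) (I y)) em
      _ = em * ∫⁻ ω in s, G n ω ∂μ := by
          refine congrArg (em * ·) ?_
          rw [lintegral_tsum fun y => ((mB n y).const_mul _).aemeasurable]
          exact tsum_congr fun y => by
            rw [lintegral_const_mul _ (mB n y), mul_comm]
  -- finiteness of total mass
  have hLfin : ∀ n, (∫⁻ ω, G n ω ∂μ) < ⊤ := by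
    intro n
    induction n with
    | zero =>
      have hG0 : ∀ ω : Ω, G 0 ω = ENNReal.ofReal (h o) := by
        intro ω
        show (∑' x, ENNReal.ofReal (h x) * ((B 0 ω x : ℕ) : ℝ≥0∞)) = _
        rw [tsum_eq_single o (fun x hx => by simp [hB0 ω x, hx])]
        simp [hB0 ω o]
      rw [lintegral_congr hG0]
      simp [ENNReal.ofReal_lt_top]
    | succ n ih =>
      have hk := key n Set.univ MeasurableSet.univ
      rw [Measure.restrict_univ] at hk
      exact lt_of_le_of_lt hk (ENNReal.mul_lt_top ENNReal.ofReal_lt_top ih)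
  -- nonneg of X
  have hXnn : ∀ n (ω : Ω), 0 ≤ (m ^ n)⁻¹ * ∑' x, h x * (B n ω x : ℝ) := by
    intro n ω
    exact mul_nonneg (inv_nonneg.2 (pow_nonneg hm0.le n))
      (tsum_nonneg fun x => mul_nonneg (hnonneg x) (Nat.cast_nonneg _))
  have hofRealX : ∀ n (ω : Ω),
      ENNReal.ofReal ((m ^ n)⁻¹ * ∑' x, h x * (B n ω x : ℝ))
        = ENNReal.ofReal ((m ^ n)⁻¹) * G n ω := by
    intro n ω
    rw [ENNReal.ofReal_mul (inv_nonneg.2 (pow_nonneg hm0.le n)), hofReal n ω]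
  -- integrability
  have hXint : ∀ n, Integrable (fun ω => (m ^ n)⁻¹ * ∑' x, h x * (B n ω x : ℝ)) μ := by
    intro n
    have heqf : (fun ω => (m ^ n)⁻¹ * ∑' x, h x * (B n ω x : ℝ))
        = fun ω => (m ^ n)⁻¹ * (G n ω).toReal := funext fun ω => by rw [htoReal n ω]
    have hmeas : Measurable fun ω => (m ^ n)⁻¹ * ∑' x, h x * (B n ω x : ℝ) := by
      rw [heqf]; exact ((mG n).ennreal_toReal).const_mul _
    refine ⟨hmeas.aestronglyMeasurable, ?_⟩
    rw [hasFiniteIntegral_iff_ofReal (ae_of_all _ fun ω => hXnn n ω)]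
    rw [lintegral_congr (hofRealX n), lintegral_const_mul _ (mG n)]
    exact ENNReal.mul_lt_top ENNReal.ofReal_lt_top (hLfin n)
  -- adaptedness
  have hadp : StronglyAdapted F (fun n ω => (m ^ n)⁻¹ * ∑' x, h x * (B n ω x : ℝ)) := by
    intro n
    have heqf : (fun ω => (m ^ n)⁻¹ * ∑' x, h x * (B n ω x : ℝ))
        = fun ω => (m ^ n)⁻¹ * (G n ω).toReal := funext fun ω => by rw [htoReal n ω]
    show StronglyMeasurable[F n] fun ω => (m ^ n)⁻¹ * ∑' x, h x * (B n ω x : ℝ)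
    rw [heqf]
    exact (((mGF n).ennreal_toReal).const_mul _).stronglyMeasurable
  -- conclude
  refine supermartingale_of_setIntegral_succ_le hadp hXint ?_
  intro n s hs
  have hintn : ∀ k, 0 ≤ ∫ ω in s, ((m ^ k)⁻¹ * ∑' x, h x * (B k ω x : ℝ)) ∂μ :=
    fun k => integral_nonneg fun ω => hXnn k ω
  rw [← ENNReal.ofReal_le_ofReal_iff (hintn n)]
  have hconv : ∀ k, ENNReal.ofReal (∫ ω in s, ((m ^ k)⁻¹ * ∑' x, h x * (B k ω x : ℝ)) ∂μ)
      = ENNReal.ofReal ((m ^ k)⁻¹) * ∫⁻ ω in s, G k ω ∂μ := by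
    intro k
    rw [ofReal_integral_eq_lintegral_ofReal ((hXint k).restrict)
      (ae_of_all _ fun ω => hXnn k ω)]
    rw [lintegral_congr (hofRealX k), lintegral_const_mul _ (mG k)]
  rw [hconv n, hconv (n+1)]
  calc ENNReal.ofReal ((m ^ (n+1))⁻¹) * ∫⁻ ω in s, G (n+1) ω ∂μ
      ≤ ENNReal.ofReal ((m ^ (n+1))⁻¹) * (em * ∫⁻ ω in s, G n ω ∂μ) :=
        mul_le_mul_right (key n s hs) _
    _ = ENNReal.ofReal ((m ^ n)⁻¹) * ∫⁻ ω in s, G n ω ∂μ := by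
        rw [← mul_assoc]
        congr 1
        rw [hem, ← ENNReal.ofReal_mul (inv_nonneg.2 (pow_nonneg hm0.le (n+1)))]
        congr 1
        rw [pow_succ, mul_inv, mul_assoc, inv_mul_cancel₀ (ne_of_gt hm0), mul_one]
end

section
/- Let h : S → ℝ be a non-negative superharmonic function and let (B_n) be a branching random walk with mean offspring m > 1 driven by P started at o. Then the sequence (⟨h, B̄_n⟩)_{n≥0} converges almost surely to a finite limit as n → ∞. -/
open MeasureTheory Filter Topology ENNReal

section helpers

variable {S : Type*}

lemma brw_summable_aux (f : S → ℝ) (b : S → ℕ) (hb : (Function.support b).Finite)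
    (hf : ∀ x, b x = 0 → f x = 0) : Summable f := by
  classical
  refine summable_of_ne_finset_zero (s := hb.toFinset) fun x hx => ?_
  refine hf x ?_
  by_contra hbx
  exact hx (hb.mem_toFinset.2 hbx)

lemma brw_tsum_eq (c : S → ℝ) (hc : ∀ x, 0 ≤ c x) (b : S → ℕ)
    (hb : (Function.support b).Finite) :
    (∑' x, c x * (b x : ℝ) = (∑' x, ENNReal.ofReal (c x) * (b x : ℝ≥0∞)).toReal)
      ∧ (∑' x, ENNReal.ofReal (c x) * (b x : ℝ≥0∞)) ≠ ∞ := by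
  classical
  have hz : ∀ x ∉ hb.toFinset, b x = 0 := by
    intro x hx
    by_contra hbx
    exact hx (hb.mem_toFinset.2 hbx)
  have h1 : ∑' x, c x * (b x : ℝ) = ∑ x ∈ hb.toFinset, c x * (b x : ℝ) :=
    tsum_eq_sum (fun x hx => by simp [hz x hx])
  have h2 : (∑' x, ENNReal.ofReal (c x) * (b x : ℝ≥0∞))
      = ∑ x ∈ hb.toFinset, ENNReal.ofReal (c x) * (b x : ℝ≥0∞) :=
    tsum_eq_sum (fun x hx => by simp [hz x hx])
  have hne : ∀ x ∈ hb.toFinset, ENNReal.ofReal (c x) * (b x : ℝ≥0∞) ≠ ∞ :=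
    fun x _ => ENNReal.mul_ne_top ENNReal.ofReal_ne_top (ENNReal.natCast_ne_top _)
  constructor
  · rw [h1, h2, ENNReal.toReal_sum hne]
    refine Finset.sum_congr rfl fun x _ => ?_
    rw [ENNReal.toReal_mul, ENNReal.toReal_ofReal (hc x), ENNReal.toReal_natCast]
  · rw [h2]
    exact (ENNReal.sum_lt_top.2 fun x hx => lt_top_iff_ne_top.2 (hne x hx)).ne

lemma brw_ofReal_tsum (c : S → ℝ) (hc : ∀ x, 0 ≤ c x) (b : S → ℕ)
    (hb : (Function.support b).Finite) :
    ENNReal.ofReal (∑' x, (b x : ℝ) * c x) = ∑' x, (b x : ℝ≥0∞) * ENNReal.ofReal (c x) := by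
  have hsum : Summable fun x => (b x : ℝ) * c x :=
    brw_summable_aux _ b hb (fun x hx => by simp [hx])
  rw [ENNReal.ofReal_tsum_of_nonneg (fun x => mul_nonneg (Nat.cast_nonneg _) (hc x)) hsum]
  exact tsum_congr fun x => by rw [ENNReal.ofReal_mul (Nat.cast_nonneg _), ENNReal.ofReal_natCast]

end helpers

/-- For a non-negative superharmonic function `h` and a branching random walk `B`
with mean offspring `m > 1` driven by the stochastic matrix `P` started at `o`, the
sequence `⟨h, B̄ₙ⟩ = m⁻ⁿ ∑ₓ h(x) Bₙ(x)` converges almost surely to a finite limit. -/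
theorem brw_nonneg_superharmonic_converges
    {S : Type*} [Countable S] [DecidableEq S]
    (P : S → S → ℝ)
    (hP0 : ∀ x y, 0 ≤ P x y)
    (hP1 : ∀ x, HasSum (fun y => P x y) 1)
    (m : ℝ) (hm : 1 < m) (o : S)
    {Ω : Type*} {mΩ : MeasurableSpace Ω}
    (μ : Measure Ω) [IsProbabilityMeasure μ]
    (F : Filtration ℕ mΩ)
    (B : ℕ → Ω → S → ℕ)
    (hadapt : ∀ n x, Measurable[F n] (fun ω => B n ω x))
    (hfin : ∀ n ω, (Function.support (B n ω)).Finite)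
    (hint : ∀ n x, Integrable (fun ω => (B n ω x : ℝ)) μ)
    (hB0 : ∀ ω x, B 0 ω x = if x = o then 1 else 0)
    (hbranch : ∀ n x,
      μ[fun ω => (B (n + 1) ω x : ℝ)|F n]
        =ᵐ[μ] fun ω => m * ∑' y, (B n ω y : ℝ) * P y x)
    (h : S → ℝ)
    (hnonneg : ∀ x, 0 ≤ h x)
    (hsuper : ∀ x, ∃ s : ℝ, HasSum (fun y => P x y * h y) s ∧ s ≤ h x) :
    ∀ᵐ ω ∂μ, ∃ L : ℝ,
      Tendsto (fun n => (m ^ n)⁻¹ * ∑' x, h x * (B n ω x : ℝ)) atTop (𝓝 L) := by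
  classical
  have hm0 : 0 < m := lt_trans one_pos hm
  have hmne : m ≠ 0 := ne_of_gt hm0
  choose sfun hs1 hs2 using hsuper
  have hs0 : ∀ y, 0 ≤ sfun y := fun y => by
    rw [← (hs1 y).tsum_eq]
    exact tsum_nonneg fun x => mul_nonneg (hP0 y x) (hnonneg x)
  -- measurability of the counting functions, valued in ℝ≥0∞
  have hBme : ∀ n x, Measurable[F n] fun ω => ((B n ω x : ℕ) : ℝ≥0∞) :=
    fun n x => measurable_from_top.comp (hadapt n x)
  have hBme0 : ∀ n x, Measurable fun ω => ((B n ω x : ℕ) : ℝ≥0∞) :=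
    fun n x => (hBme n x).mono (F.le n) le_rfl
  -- the ℝ≥0∞-valued weighted population
  set T : ℕ → Ω → ℝ≥0∞ := fun n ω => ∑' x, ENNReal.ofReal (h x) * (B n ω x : ℝ≥0∞) with hTdef
  have hTm : ∀ n, Measurable[F n] (T n) :=
    fun n => Measurable.ennreal_tsum fun x => (hBme n x).const_mul _
  have hTm0 : ∀ n, Measurable (T n) := fun n => (hTm n).mono (F.le n) le_rfl
  have hYeq : ∀ n ω, (∑' x, h x * (B n ω x : ℝ)) = (T n ω).toReal :=
    fun n ω => (brw_tsum_eq h hnonneg (B n ω) (hfin n ω)).1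
  have hTne : ∀ n ω, T n ω ≠ ∞ := fun n ω => (brw_tsum_eq h hnonneg (B n ω) (hfin n ω)).2
  set X : ℕ → Ω → ℝ := fun n ω => (m ^ n)⁻¹ * (T n ω).toReal with hXdef
  have hXm : ∀ n, StronglyMeasurable[F n] (X n) :=
    fun n => ((ENNReal.measurable_toReal.comp (hTm n)).const_mul _).stronglyMeasurable
  -- set-lintegral recursion from the branching property
  have hsetlin : ∀ n (A : Set Ω), MeasurableSet[F n] A → ∀ x,
      ∫⁻ ω in A, (B (n+1) ω x : ℝ≥0∞) ∂μ
        = ENNReal.ofReal m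
            * ∑' y, (∫⁻ ω in A, (B n ω y : ℝ≥0∞) ∂μ) * ENNReal.ofReal (P y x) := by
    intro n A hA x
    have hAm : MeasurableSet A := F.le n A hA
    set g : Ω → ℝ := fun ω => ∑' y, (B n ω y : ℝ) * P y x with hg
    have hgnn : ∀ ω, 0 ≤ g ω :=
      fun ω => tsum_nonneg fun y => mul_nonneg (Nat.cast_nonneg _) (hP0 y x)
    have hmg_int : Integrable (fun ω => m * g ω) μ := integrable_condExp.congr (hbranch n x)
    have hgint : Integrable g μ := by
      have h2 := hmg_int.const_mul m⁻¹
      simpa [inv_mul_cancel_left₀ hmne] using h2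
    have h1 : ∫ ω in A, (B (n+1) ω x : ℝ) ∂μ = ∫ ω in A, m * g ω ∂μ := by
      rw [← setIntegral_condExp (F.le n) (hint (n+1) x) hA]
      exact setIntegral_congr_ae hAm ((hbranch n x).mono fun ω hω _ => hω)
    calc ∫⁻ ω in A, (B (n+1) ω x : ℝ≥0∞) ∂μ
        = ∫⁻ ω in A, ENNReal.ofReal ((B (n+1) ω x : ℝ)) ∂μ := by
          simp [ENNReal.ofReal_natCast]
      _ = ENNReal.ofReal (∫ ω in A, (B (n+1) ω x : ℝ) ∂μ) :=
          (ofReal_integral_eq_lintegral_ofReal ((hint (n+1) x).integrableOn)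
            (ae_of_all _ fun ω => Nat.cast_nonneg _)).symm
      _ = ENNReal.ofReal (m * ∫ ω in A, g ω ∂μ) := by rw [h1, integral_const_mul]
      _ = ENNReal.ofReal m * ENNReal.ofReal (∫ ω in A, g ω ∂μ) := ENNReal.ofReal_mul hm0.le
      _ = ENNReal.ofReal m * ∫⁻ ω in A, ENNReal.ofReal (g ω) ∂μ := by
          rw [ofReal_integral_eq_lintegral_ofReal hgint.integrableOn (ae_of_all _ hgnn)]
      _ = ENNReal.ofReal m
            * ∫⁻ ω in A, ∑' y, (B n ω y : ℝ≥0∞) * ENNReal.ofReal (P y x) ∂μ := by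
          congr 1
          exact lintegral_congr fun ω =>
            brw_ofReal_tsum (fun y => P y x) (fun y => hP0 y x) (B n ω) (hfin n ω)
      _ = ENNReal.ofReal m
            * ∑' y, ∫⁻ ω in A, (B n ω y : ℝ≥0∞) * ENNReal.ofReal (P y x) ∂μ := by
          rw [lintegral_tsum fun y => ((hBme0 n y).mul_const _).aemeasurable]
      _ = ENNReal.ofReal m
            * ∑' y, (∫⁻ ω in A, (B n ω y : ℝ≥0∞) ∂μ) * ENNReal.ofReal (P y x) := by
          congr 1
          exact tsum_congr fun y => lintegral_mul_const _ (hBme0 n y)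
  -- the key double-sum computation
  have hswap : ∀ e : S → ℝ≥0∞,
      (∑' x, ENNReal.ofReal (h x)
          * (ENNReal.ofReal m * ∑' y, e y * ENNReal.ofReal (P y x)))
        = ENNReal.ofReal m * ∑' y, ENNReal.ofReal (sfun y) * e y := by
    intro e
    have hx1 : ∀ x, ENNReal.ofReal (h x)
        * (ENNReal.ofReal m * ∑' y, e y * ENNReal.ofReal (P y x))
        = ENNReal.ofReal m * ∑' y, e y * ENNReal.ofReal (P y x) * ENNReal.ofReal (h x) := by
      intro x
      rw [ENNReal.tsum_mul_right]
      ring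
    calc (∑' x, ENNReal.ofReal (h x)
          * (ENNReal.ofReal m * ∑' y, e y * ENNReal.ofReal (P y x)))
        = ∑' x, ENNReal.ofReal m
            * ∑' y, e y * ENNReal.ofReal (P y x) * ENNReal.ofReal (h x) :=
          tsum_congr hx1
      _ = ENNReal.ofReal m
            * ∑' x, ∑' y, e y * ENNReal.ofReal (P y x) * ENNReal.ofReal (h x) :=
          ENNReal.tsum_mul_left
      _ = ENNReal.ofReal m
            * ∑' y, ∑' x, e y * ENNReal.ofReal (P y x) * ENNReal.ofReal (h x) := by
          rw [ENNReal.tsum_comm]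
      _ = ENNReal.ofReal m * ∑' y, ENNReal.ofReal (sfun y) * e y := by
          congr 1
          refine tsum_congr fun y => ?_
          calc ∑' x, e y * ENNReal.ofReal (P y x) * ENNReal.ofReal (h x)
              = ∑' x, e y * (ENNReal.ofReal (P y x) * ENNReal.ofReal (h x)) :=
                tsum_congr fun x => by ring
            _ = e y * ∑' x, ENNReal.ofReal (P y x) * ENNReal.ofReal (h x) :=
                ENNReal.tsum_mul_left
            _ = e y * ∑' x, ENNReal.ofReal (P y x * h x) := by
                congr 1
                exact tsum_congr fun x => (ENNReal.ofReal_mul (hP0 y x)).symm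
            _ = e y * ENNReal.ofReal (sfun y) := by
                rw [← ENNReal.ofReal_tsum_of_nonneg
                  (fun x => mul_nonneg (hP0 y x) (hnonneg x)) (hs1 y).summable,
                  (hs1 y).tsum_eq]
            _ = ENNReal.ofReal (sfun y) * e y := mul_comm _ _
  -- expectation identities and bound
  have hElin : ∀ n, ∫⁻ ω, T n ω ∂μ
      = ∑' x, ENNReal.ofReal (h x) * ∫⁻ ω, (B n ω x : ℝ≥0∞) ∂μ := by
    intro n
    rw [hTdef, lintegral_tsum fun x => ((hBme0 n x).const_mul _).aemeasurable]
    exact tsum_congr fun x => lintegral_const_mul _ (hBme0 n x)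
  have hEbound : ∀ n, ∫⁻ ω, T n ω ∂μ ≤ ENNReal.ofReal (m ^ n * h o) := by
    intro n
    induction n with
    | zero =>
      have hB0' : ∀ x, ∫⁻ ω, (B 0 ω x : ℝ≥0∞) ∂μ = if x = o then 1 else 0 := by
        intro x
        simp [hB0, apply_ite (fun k : ℕ => (k : ℝ≥0∞))]
      rw [hElin 0]
      have hsingle : (∑' x, ENNReal.ofReal (h x) * ∫⁻ ω, (B 0 ω x : ℝ≥0∞) ∂μ)
          = ENNReal.ofReal (h o) := by
        rw [tsum_eq_single o]
        · simp [hB0' o]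
        · intro x hx; simp [hB0' x, hx]
      rw [hsingle]
      simp
    | succ n ih =>
      rw [hElin (n+1)]
      have hx : ∀ x, ∫⁻ ω, (B (n+1) ω x : ℝ≥0∞) ∂μ
          = ENNReal.ofReal m
              * ∑' y, (∫⁻ ω, (B n ω y : ℝ≥0∞) ∂μ) * ENNReal.ofReal (P y x) := by
        intro x
        have h2 := hsetlin n Set.univ MeasurableSet.univ x
        simpa using h2
      calc (∑' x, ENNReal.ofReal (h x) * ∫⁻ ω, (B (n+1) ω x : ℝ≥0∞) ∂μ)
          = ENNReal.ofReal m
              * ∑' y, ENNReal.ofReal (sfun y) * ∫⁻ ω, (B n ω y : ℝ≥0∞) ∂μ := by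
            rw [tsum_congr fun x => by rw [hx x]]
            exact hswap _
        _ ≤ ENNReal.ofReal m
              * ∑' y, ENNReal.ofReal (h y) * ∫⁻ ω, (B n ω y : ℝ≥0∞) ∂μ := by
            refine mul_le_mul_right (ENNReal.tsum_le_tsum fun y => ?_) _
            exact mul_le_mul_left (ENNReal.ofReal_le_ofReal (hs2 y)) _
        _ = ENNReal.ofReal m * ∫⁻ ω, T n ω ∂μ := by rw [← hElin n]
        _ ≤ ENNReal.ofReal m * ENNReal.ofReal (m ^ n * h o) := mul_le_mul_right ih _
        _ = ENNReal.ofReal (m ^ (n+1) * h o) := by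
            rw [← ENNReal.ofReal_mul hm0.le]
            ring_nf
  have hTint : ∀ n, ∫⁻ ω, T n ω ∂μ ≠ ∞ :=
    fun n => (lt_of_le_of_lt (hEbound n) ENNReal.ofReal_lt_top).ne
  have hYint : ∀ n, Integrable (fun ω => (T n ω).toReal) μ :=
    fun n => integrable_toReal_of_lintegral_ne_top (hTm0 n).aemeasurable (hTint n)
  have hXint : ∀ n, Integrable (X n) μ := fun n => (hYint n).const_mul _
  -- the supermartingale step
  have hstep : ∀ n, μ[X (n+1) | F n] ≤ᵐ[μ] X n := by
    intro n
    set U : Ω → ℝ≥0∞ := fun ω => ∑' y, ENNReal.ofReal (sfun y) * (B n ω y : ℝ≥0∞) with hUdef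
    have hUm : Measurable[F n] U := Measurable.ennreal_tsum fun y => (hBme n y).const_mul _
    have hUm0 : Measurable U := hUm.mono (F.le n) le_rfl
    have hUne : ∀ ω, U ω ≠ ∞ := fun ω => (brw_tsum_eq sfun hs0 (B n ω) (hfin n ω)).2
    have hUT : ∀ ω, U ω ≤ T n ω := fun ω =>
      ENNReal.tsum_le_tsum fun y =>
        mul_le_mul_left (ENNReal.ofReal_le_ofReal (hs2 y)) _
    set Z : Ω → ℝ := fun ω => m * (U ω).toReal with hZdef
    have hZm : StronglyMeasurable[F n] Z :=
      ((ENNReal.measurable_toReal.comp hUm).const_mul m).stronglyMeasurable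
    have hZint : Integrable Z μ := by
      refine Integrable.mono ((hYint n).const_mul m)
        (hZm.mono (F.le n)).aestronglyMeasurable (ae_of_all _ fun ω => ?_)
      have h1 : (U ω).toReal ≤ (T n ω).toReal := ENNReal.toReal_mono (hTne n ω) (hUT ω)
      have h2 : (0:ℝ) ≤ m * (U ω).toReal := mul_nonneg hm0.le ENNReal.toReal_nonneg
      have h3 : (0:ℝ) ≤ m * (T n ω).toReal := mul_nonneg hm0.le ENNReal.toReal_nonneg
      rw [Real.norm_eq_abs, Real.norm_eq_abs, abs_of_nonneg h2, abs_of_nonneg h3]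
      exact mul_le_mul_of_nonneg_left h1 hm0.le
    have hZcond : Z =ᵐ[μ] μ[(fun ω => (T (n+1) ω).toReal) | F n] := by
      refine ae_eq_condExp_of_forall_setIntegral_eq (F.le n) (hYint (n+1))
        (fun A hA _ => hZint.integrableOn) (fun A hA _ => ?_)
        (StronglyMeasurable.aestronglyMeasurable hZm)
      have key : ∫⁻ ω in A, T (n+1) ω ∂μ = ∫⁻ ω in A, ENNReal.ofReal m * U ω ∂μ := by
        calc ∫⁻ ω in A, T (n+1) ω ∂μ
            = ∑' x, ENNReal.ofReal (h x) * ∫⁻ ω in A, (B (n+1) ω x : ℝ≥0∞) ∂μ := by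
              rw [hTdef, lintegral_tsum fun x => ((hBme0 (n+1) x).const_mul _).aemeasurable]
              exact tsum_congr fun x => lintegral_const_mul _ (hBme0 (n+1) x)
          _ = ∑' x, ENNReal.ofReal (h x)
                * (ENNReal.ofReal m
                    * ∑' y, (∫⁻ ω in A, (B n ω y : ℝ≥0∞) ∂μ) * ENNReal.ofReal (P y x)) :=
              tsum_congr fun x => by rw [hsetlin n A hA x]
          _ = ENNReal.ofReal m
                * ∑' y, ENNReal.ofReal (sfun y) * ∫⁻ ω in A, (B n ω y : ℝ≥0∞) ∂μ :=
              hswap _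
          _ = ENNReal.ofReal m * ∫⁻ ω in A, U ω ∂μ := by
              congr 1
              rw [hUdef, lintegral_tsum fun y => ((hBme0 n y).const_mul _).aemeasurable]
              exact tsum_congr fun y => (lintegral_const_mul _ (hBme0 n y)).symm
          _ = ∫⁻ ω in A, ENNReal.ofReal m * U ω ∂μ := (lintegral_const_mul _ hUm0).symm
      have e1 : ∫ ω in A, Z ω ∂μ = (∫⁻ ω in A, ENNReal.ofReal m * U ω ∂μ).toReal := by
        have hZU : ∀ ω, Z ω = (ENNReal.ofReal m * U ω).toReal := fun ω => by
          rw [ENNReal.toReal_mul, ENNReal.toReal_ofReal hm0.le]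
        calc ∫ ω in A, Z ω ∂μ = ∫ ω in A, (ENNReal.ofReal m * U ω).toReal ∂μ :=
              integral_congr_ae (ae_of_all _ hZU)
          _ = (∫⁻ ω in A, ENNReal.ofReal m * U ω ∂μ).toReal :=
              integral_toReal ((hUm0.const_mul _).aemeasurable)
                (ae_of_all _ fun ω => lt_top_iff_ne_top.2
                  (ENNReal.mul_ne_top ENNReal.ofReal_ne_top (hUne ω)))
      have e2 : ∫ ω in A, (T (n+1) ω).toReal ∂μ = (∫⁻ ω in A, T (n+1) ω ∂μ).toReal :=
        integral_toReal (hTm0 (n+1)).aemeasurable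
          (ae_of_all _ fun ω => lt_top_iff_ne_top.2 (hTne (n+1) ω))
      rw [e1, e2, key]
    have hXsm : X (n+1) = (m ^ (n+1))⁻¹ • (fun ω => (T (n+1) ω).toReal) := rfl
    calc μ[X (n+1)|F n]
        =ᵐ[μ] (m ^ (n+1))⁻¹ • μ[(fun ω => (T (n+1) ω).toReal)|F n] := by
          rw [hXsm]; exact condExp_smul _ _ _
      _ =ᵐ[μ] fun ω => (m ^ (n+1))⁻¹ * Z ω :=
          hZcond.symm.mono fun ω hω => by simp [hω]
      _ ≤ᵐ[μ] X n := by
          refine ae_of_all _ fun ω => ?_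
          have h1 : (U ω).toReal ≤ (T n ω).toReal := ENNReal.toReal_mono (hTne n ω) (hUT ω)
          have h2 : (m ^ (n+1))⁻¹ * (m * (U ω).toReal) = (m ^ n)⁻¹ * (U ω).toReal := by
            rw [pow_succ, mul_inv, mul_assoc, ← mul_assoc m⁻¹, inv_mul_cancel₀ hmne, one_mul]
          show (m ^ (n+1))⁻¹ * Z ω ≤ X n ω
          rw [hZdef]
          calc (m ^ (n+1))⁻¹ * (m * (U ω).toReal) = (m ^ n)⁻¹ * (U ω).toReal := h2
            _ ≤ (m ^ n)⁻¹ * (T n ω).toReal :=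
                mul_le_mul_of_nonneg_left h1 (inv_nonneg.2 (pow_nonneg hm0.le n))
  have hsuperm : Supermartingale X F μ :=
    supermartingale_nat (fun n => hXm n) hXint hstep
  -- L¹ bound
  have hL1 : ∀ n, eLpNorm (X n) 1 μ ≤ ((h o).toNNReal : ℝ≥0∞) := by
    intro n
    rw [eLpNorm_one_eq_lintegral_enorm]
    calc ∫⁻ ω, (‖X n ω‖₊ : ℝ≥0∞) ∂μ
        = ∫⁻ ω, ENNReal.ofReal ((m ^ n)⁻¹) * T n ω ∂μ := by
          refine lintegral_congr fun ω => ?_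
          have hXnn : 0 ≤ X n ω :=
            mul_nonneg (inv_nonneg.2 (pow_nonneg hm0.le n)) ENNReal.toReal_nonneg
          rw [← enorm_eq_nnnorm, Real.enorm_eq_ofReal hXnn, hXdef,
            ENNReal.ofReal_mul (inv_nonneg.2 (pow_nonneg hm0.le n)),
            ENNReal.ofReal_toReal (hTne n ω)]
      _ = ENNReal.ofReal ((m ^ n)⁻¹) * ∫⁻ ω, T n ω ∂μ := lintegral_const_mul _ (hTm0 n)
      _ ≤ ENNReal.ofReal ((m ^ n)⁻¹) * ENNReal.ofReal (m ^ n * h o) :=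
          mul_le_mul_right (hEbound n) _
      _ = ENNReal.ofReal ((m ^ n)⁻¹ * (m ^ n * h o)) :=
          (ENNReal.ofReal_mul (inv_nonneg.2 (pow_nonneg hm0.le n))).symm
      _ = ENNReal.ofReal (h o) := by
          rw [← mul_assoc, inv_mul_cancel₀ (pow_ne_zero n hmne), one_mul]
      _ = ((h o).toNNReal : ℝ≥0∞) := rfl
  have hsub : Submartingale (-X) F μ := hsuperm.neg
  have hconv := hsub.ae_tendsto_limitProcess (R := (h o).toNNReal)
    (fun n => by rw [show (-X) n = -(X n) from rfl, eLpNorm_neg]; exact hL1 n)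
  filter_upwards [hconv] with ω hω
  refine ⟨-(F.limitProcess (-X) μ ω), ?_⟩
  have hXt : Tendsto (fun n => X n ω) atTop (𝓝 (-(F.limitProcess (-X) μ ω))) := by
    have := hω.neg
    simpa using this
  have hfun : (fun n => (m ^ n)⁻¹ * ∑' x, h x * (B n ω x : ℝ)) = fun n => X n ω :=
    funext fun n => by rw [hYeq n ω]
  rw [hfun]
  exact hXt
end

section
/- Let h : S → ℝ be a bounded superharmonic function and let (B_n) be a branching random walk with mean offspring m > 1 driven by P started at o. Then the sequence (⟨h, B̄_n⟩)_{n≥0} converges almost surely to a finite limit as n → ∞. -/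
open MeasureTheory Filter Topology

/-- Auxiliary: a pointwise `tsum` of strongly measurable functions over a countable
index type is strongly measurable, provided it is everywhere summable. -/
lemma brw_sm_tsum {S : Type*} [Countable S] {Ω : Type*} {m' : MeasurableSpace Ω}
    (f : S → Ω → ℝ) (hf : ∀ x, Measurable[m'] (f x))
    (hsum : ∀ ω, Summable (fun x => f x ω)) :
    StronglyMeasurable[m'] (fun ω => ∑' x, f x ω) := by
  classical
  rcases isEmpty_or_nonempty S with hS | hS
  · simpa [tsum_empty] using stronglyMeasurable_const
  obtain ⟨e, he⟩ := exists_surjective_nat S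
  set u : ℕ → Finset S := fun k => (Finset.range k).image e with hu_def
  have hu : Monotone u := fun a b hab =>
    Finset.image_subset_image (Finset.range_subset_range.2 hab)
  have hcov : ∀ x : S, ∃ k, x ∈ u k := by
    intro x
    obtain ⟨n, rfl⟩ := he x
    exact ⟨n + 1, Finset.mem_image_of_mem _ (Finset.mem_range.2 (Nat.lt_succ_self n))⟩
  have hten : Tendsto u atTop atTop := tendsto_atTop_finset_of_monotone hu hcov
  refine stronglyMeasurable_of_tendsto (f := fun k ω => ∑ x ∈ u k, f x ω) atTop
    (fun k => ?_) ?_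
  · exact (Finset.measurable_sum (u k) fun x _ => hf x).stronglyMeasurable
  · rw [tendsto_pi_nhds]
    intro ω
    exact ((hsum ω).hasSum).comp hten

/-- For a bounded superharmonic function `h` and a branching random walk `B`
with mean offspring `m > 1` driven by the stochastic matrix `P` started at `o`, the
sequence `⟨h, B̄ₙ⟩ = m⁻ⁿ ∑ₓ h(x) Bₙ(x)` converges almost surely to a finite limit. -/
theorem brw_bounded_superharmonic_converges
    {S : Type*} [Countable S] [DecidableEq S]
    (P : S → S → ℝ)
    (hP0 : ∀ x y, 0 ≤ P x y)
    (hP1 : ∀ x, HasSum (fun y => P x y) 1)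
    (m : ℝ) (hm : 1 < m) (o : S)
    {Ω : Type*} {mΩ : MeasurableSpace Ω}
    (μ : Measure Ω) [IsProbabilityMeasure μ]
    (F : Filtration ℕ mΩ)
    (B : ℕ → Ω → S → ℕ)
    (hadapt : ∀ n x, Measurable[F n] (fun ω => B n ω x))
    (hfin : ∀ n ω, (Function.support (B n ω)).Finite)
    (hint : ∀ n x, Integrable (fun ω => (B n ω x : ℝ)) μ)
    (hB0 : ∀ ω x, B 0 ω x = if x = o then 1 else 0)
    (hbranch : ∀ n x,
      μ[fun ω => (B (n + 1) ω x : ℝ)|F n]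
        =ᵐ[μ] fun ω => m * ∑' y, (B n ω y : ℝ) * P y x)
    (h : S → ℝ)
    (hbdd : ∃ Cb : ℝ, ∀ x, |h x| ≤ Cb)
    (hsuper : ∀ x, ∃ s : ℝ, HasSum (fun y => P x y * h y) s ∧ s ≤ h x) :
    ∀ᵐ ω ∂μ, ∃ L : ℝ,
      Tendsto (fun n => (m ^ n)⁻¹ * ∑' x, h x * (B n ω x : ℝ)) atTop (𝓝 L) := by
  classical
  obtain ⟨C, hC⟩ := hbdd
  have hC0 : 0 ≤ C := le_trans (abs_nonneg _) (hC o)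
  have hm0 : (0:ℝ) < m := lt_trans one_pos hm
  have hBnn : ∀ n ω x, (0:ℝ) ≤ (B n ω x : ℝ) := fun n ω x => Nat.cast_nonneg _
  have hPle1 : ∀ y x, P y x ≤ 1 := fun y x =>
    le_hasSum (hP1 y) x (fun j _ => hP0 y j)
  -- summability of weighted occupation sums (finite support)
  have hsummB : ∀ (n : ℕ) (ω : Ω) (f : S → ℝ),
      Summable (fun x => f x * (B n ω x : ℝ)) := by
    intro n ω f
    apply summable_of_finite_support
    apply (hfin n ω).subset
    intro x hx
    simp only [Function.mem_support] at hx ⊢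
    intro hzero
    exact hx (by simp [hzero])
  have hsummB1 : ∀ (n : ℕ) (ω : Ω), Summable (fun x => (B n ω x : ℝ)) := by
    intro n ω
    simpa using hsummB n ω (fun _ => (1:ℝ))
  -- measurability of coordinates
  have hmeasBF : ∀ n x, Measurable[F n] (fun ω => (B n ω x : ℝ)) := fun n x =>
    ((continuous_of_discreteTopology : Continuous (Nat.cast : ℕ → ℝ)).measurable).comp
      (hadapt n x)
  have hmeasB : ∀ n x, Measurable (fun ω => (B n ω x : ℝ)) := fun n x =>
    (hmeasBF n x).mono (F.le n) le_rfl
  -- mean occupation measure and its total mass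
  set W : ℕ → S → ℝ := fun n x => ∫ ω, (B n ω x : ℝ) ∂μ with hW_def
  have hW0 : ∀ n x, 0 ≤ W n x := fun n x =>
    integral_nonneg (fun ω => hBnn n ω x)
  set T : ℕ → ENNReal := fun n => ∑' x, ENNReal.ofReal (W n x) with hT_def
  have hlin : ∀ n x, ∫⁻ ω, ENNReal.ofReal ((B n ω x : ℝ)) ∂μ = ENNReal.ofReal (W n x) :=
    fun n x => (ofReal_integral_eq_lintegral_ofReal (hint n x)
      (ae_of_all _ fun ω => hBnn n ω x)).symm
  -- generic lintegral bound for weighted sums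
  have bound1 : ∀ (n : ℕ) (a : S → ℝ) (c : ℝ), (∀ x, 0 ≤ a x) → (∀ x, a x ≤ c) →
      ∀ (A : Set Ω),
        ∑' x, ∫⁻ ω in A, ‖a x * (B n ω x : ℝ)‖₊ ∂μ ≤ ENNReal.ofReal c * T n := by
    intro n a c ha0 hac A
    calc ∑' x, ∫⁻ ω in A, ‖a x * (B n ω x : ℝ)‖₊ ∂μ
        ≤ ∑' x, ENNReal.ofReal c * ∫⁻ ω, ENNReal.ofReal ((B n ω x : ℝ)) ∂μ := by
          refine ENNReal.tsum_le_tsum fun x => ?_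
          have hpt : ∀ ω, (‖a x * (B n ω x : ℝ)‖₊ : ENNReal)
              = ENNReal.ofReal (a x) * ENNReal.ofReal ((B n ω x : ℝ)) := by
            intro ω
            rw [← enorm_eq_nnnorm, Real.enorm_eq_ofReal (mul_nonneg (ha0 x) (hBnn n ω x)),
              ENNReal.ofReal_mul (ha0 x)]
          calc ∫⁻ ω in A, ‖a x * (B n ω x : ℝ)‖₊ ∂μ
              ≤ ∫⁻ ω, ‖a x * (B n ω x : ℝ)‖₊ ∂μ := setLIntegral_le_lintegral _ _
            _ = ENNReal.ofReal (a x) * ∫⁻ ω, ENNReal.ofReal ((B n ω x : ℝ)) ∂μ := by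
                simp_rw [hpt]
                exact lintegral_const_mul' _ _ ENNReal.ofReal_ne_top
            _ ≤ ENNReal.ofReal c * ∫⁻ ω, ENNReal.ofReal ((B n ω x : ℝ)) ∂μ :=
                mul_le_mul_left (ENNReal.ofReal_le_ofReal (hac x)) _
      _ = ENNReal.ofReal c * T n := by
          rw [ENNReal.tsum_mul_left]
          congr 1
          exact tsum_congr fun x => hlin n x
  -- lintegral bound for the branching kernel sums
  have bound2 : ∀ (n : ℕ) (x : S) (A : Set Ω),
      ∑' y, ∫⁻ ω in A, ‖(B n ω y : ℝ) * P y x‖₊ ∂μ ≤ T n := by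
    intro n x A
    calc ∑' y, ∫⁻ ω in A, ‖(B n ω y : ℝ) * P y x‖₊ ∂μ
        ≤ ∑' y, ENNReal.ofReal (W n y) := by
          refine ENNReal.tsum_le_tsum fun y => ?_
          have hpt : ∀ ω, (‖(B n ω y : ℝ) * P y x‖₊ : ENNReal)
              = ENNReal.ofReal ((B n ω y : ℝ)) * ENNReal.ofReal (P y x) := by
            intro ω
            rw [← enorm_eq_nnnorm, Real.enorm_eq_ofReal (mul_nonneg (hBnn n ω y) (hP0 y x)),
              ENNReal.ofReal_mul (hBnn n ω y)]
          calc ∫⁻ ω in A, ‖(B n ω y : ℝ) * P y x‖₊ ∂μ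
              ≤ ∫⁻ ω, ‖(B n ω y : ℝ) * P y x‖₊ ∂μ := setLIntegral_le_lintegral _ _
            _ = (∫⁻ ω, ENNReal.ofReal ((B n ω y : ℝ)) ∂μ) * ENNReal.ofReal (P y x) := by
                simp_rw [hpt]
                exact lintegral_mul_const' _ _ ENNReal.ofReal_ne_top
            _ ≤ (∫⁻ ω, ENNReal.ofReal ((B n ω y : ℝ)) ∂μ) * 1 :=
                mul_le_mul_right (by
                  simpa using ENNReal.ofReal_le_ofReal (hPle1 y x)) _
            _ = ENNReal.ofReal (W n y) := by rw [mul_one, hlin n y]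
      _ = T n := rfl
  -- key one-step set-integral identity
  have key : ∀ (n : ℕ), T n ≠ ⊤ → ∀ (A : Set Ω), MeasurableSet[F n] A → ∀ (x : S),
      ∫ ω in A, (B (n+1) ω x : ℝ) ∂μ
        = m * ∑' y, (∫ ω in A, (B n ω y : ℝ) ∂μ) * P y x := by
    intro n hTn A hA x
    haveI : SigmaFinite (μ.trim (F.le n)) := by
      haveI := isFiniteMeasure_trim (μ := μ) (F.le n)
      infer_instance
    have h1 : ∫ ω in A, (B (n+1) ω x : ℝ) ∂μ
        = ∫ ω in A, (μ[fun ω => ((B (n+1) ω x : ℝ))|F n]) ω ∂μ :=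
      (setIntegral_condExp (F.le n) (hint (n+1) x) hA).symm
    have h2 : ∫ ω in A, (μ[fun ω => ((B (n+1) ω x : ℝ))|F n]) ω ∂μ
        = ∫ ω in A, m * ∑' y, (B n ω y : ℝ) * P y x ∂μ :=
      integral_congr_ae (ae_restrict_of_ae (hbranch n x))
    have h3 : ∫ ω in A, m * ∑' y, (B n ω y : ℝ) * P y x ∂μ
        = m * ∫ ω in A, ∑' y, (B n ω y : ℝ) * P y x ∂μ :=
      integral_const_mul m _
    have h4 : ∫ ω in A, ∑' y, (B n ω y : ℝ) * P y x ∂μ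
        = ∑' y, ∫ ω in A, (B n ω y : ℝ) * P y x ∂μ := by
      refine integral_tsum (fun y => ((hmeasB n y).mul_const _).aestronglyMeasurable) ?_
      exact ne_top_of_le_ne_top hTn (bound2 n x A)
    have h5 : ∀ y, ∫ ω in A, (B n ω y : ℝ) * P y x ∂μ
        = (∫ ω in A, (B n ω y : ℝ) ∂μ) * P y x := fun y => integral_mul_const _ _
    rw [h1, h2, h3, h4]
    congr 1
    exact tsum_congr h5
  -- finiteness of the total mean mass, by induction
  have hT : ∀ n, T n ≠ ⊤ := by
    intro n
    induction n with
    | zero =>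
        have hW0x : ∀ x, W 0 x = if x = o then (1:ℝ) else 0 := by
          intro x
          have : (fun ω => ((B 0 ω x : ℝ))) = fun _ => (if x = o then (1:ℝ) else 0) := by
            funext ω
            rw [hB0 ω x]
            split <;> simp
          rw [hW_def]
          simp only [this]
          simp
        have : T 0 = ∑' x, (if x = o then (1:ENNReal) else 0) := by
          rw [hT_def]
          refine tsum_congr fun x => ?_
          rw [hW0x x]
          split <;> simp
        rw [this, tsum_ite_eq]
        exact ENNReal.one_ne_top
    | succ n ih =>
        have hWsum : Summable (W n) := by
          have := ENNReal.summable_toReal ih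
          refine this.congr fun x => ?_
          rw [ENNReal.toReal_ofReal (hW0 n x)]
        have hkey := key n ih Set.univ MeasurableSet.univ
        have hWsucc : ∀ x, W (n+1) x = m * ∑' y, W n y * P y x := by
          intro x
          have := hkey x
          rw [Measure.restrict_univ] at this
          exact this
        have hsummWP : ∀ x, Summable (fun y => W n y * P y x) := by
          intro x
          refine Summable.of_nonneg_of_le
            (fun y => mul_nonneg (hW0 n y) (hP0 y x))
            (fun y => ?_) hWsum
          calc W n y * P y x ≤ W n y * 1 :=
                mul_le_mul_of_nonneg_left (hPle1 y x) (hW0 n y)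
            _ = W n y := mul_one _
        have hTsucc : T (n+1)
            = ENNReal.ofReal m * ∑' x, ∑' y,
                ENNReal.ofReal (W n y) * ENNReal.ofReal (P y x) := by
          rw [hT_def]
          rw [← ENNReal.tsum_mul_left]
          refine tsum_congr fun x => ?_
          rw [hWsucc x, ENNReal.ofReal_mul (le_of_lt hm0)]
          congr 1
          rw [ENNReal.ofReal_tsum_of_nonneg
            (fun y => mul_nonneg (hW0 n y) (hP0 y x)) (hsummWP x)]
          exact tsum_congr fun y => ENNReal.ofReal_mul (hW0 n y)
        rw [hTsucc, ENNReal.tsum_comm]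
        have hrow : ∀ y, ∑' x, ENNReal.ofReal (W n y) * ENNReal.ofReal (P y x)
            = ENNReal.ofReal (W n y) := by
          intro y
          rw [ENNReal.tsum_mul_left]
          have : ∑' x, ENNReal.ofReal (P y x) = 1 := by
            rw [← ENNReal.ofReal_tsum_of_nonneg (fun x => hP0 y x) (hP1 y).summable,
              (hP1 y).tsum_eq, ENNReal.ofReal_one]
          rw [this, mul_one]
        rw [tsum_congr hrow]
        exact ENNReal.mul_ne_top ENNReal.ofReal_ne_top ih
  -- summability of the mean occupation measure
  have hWsumm : ∀ n, Summable (W n) := by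
    intro n
    have := ENNReal.summable_toReal (hT n)
    refine this.congr fun x => ?_
    rw [ENNReal.toReal_ofReal (hW0 n x)]
  -- MAIN LEMMA: convergence for nonnegative bounded superharmonic weights
  have main : ∀ (g : S → ℝ) (c : ℝ), 0 ≤ c → (∀ x, 0 ≤ g x) → (∀ x, g x ≤ c) →
      (∀ y, ∃ s : ℝ, HasSum (fun x => P y x * g x) s ∧ s ≤ g y) →
      ∀ᵐ ω ∂μ, ∃ L : ℝ,
        Tendsto (fun n => (m ^ n)⁻¹ * ∑' x, g x * (B n ω x : ℝ)) atTop (𝓝 L) := by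
    intro g c hc0 hg0 hgc hgsuper
    set X : ℕ → Ω → ℝ := fun n ω => ∑' x, g x * (B n ω x : ℝ) with hX_def
    have hX0 : ∀ n ω, 0 ≤ X n ω := fun n ω =>
      tsum_nonneg fun x => mul_nonneg (hg0 x) (hBnn n ω x)
    have hXsm : ∀ n, StronglyMeasurable[F n] (X n) := by
      intro n
      exact brw_sm_tsum (fun x ω => g x * (B n ω x : ℝ))
        (fun x => (hmeasBF n x).const_mul (g x)) (fun ω => hsummB n ω g)
    have hXint : ∀ n, Integrable (X n) μ := by
      intro n
      refine ⟨((hXsm n).mono (F.le n)).aestronglyMeasurable, ?_⟩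
      show (∫⁻ ω, ‖X n ω‖₊ ∂μ) < ⊤
      calc ∫⁻ ω, ‖X n ω‖₊ ∂μ
          ≤ ENNReal.ofReal c * T n := by
            have heq : ∀ ω, (‖X n ω‖₊ : ENNReal)
                ≤ ∑' x, (‖g x * (B n ω x : ℝ)‖₊ : ENNReal) := by
              intro ω
              rw [← enorm_eq_nnnorm, Real.enorm_eq_ofReal (hX0 n ω)]
              rw [ENNReal.ofReal_tsum_of_nonneg
                (fun x => mul_nonneg (hg0 x) (hBnn n ω x)) (hsummB n ω g)]
              refine ENNReal.tsum_le_tsum fun x => ?_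
              rw [← enorm_eq_nnnorm, Real.enorm_eq_ofReal (mul_nonneg (hg0 x) (hBnn n ω x))]
            calc ∫⁻ ω, ‖X n ω‖₊ ∂μ
                ≤ ∫⁻ ω, ∑' x, (‖g x * (B n ω x : ℝ)‖₊ : ENNReal) ∂μ :=
                  lintegral_mono fun ω => heq ω
              _ = ∑' x, ∫⁻ ω, ‖g x * (B n ω x : ℝ)‖₊ ∂μ := by
                  rw [lintegral_tsum]
                  intro x
                  exact ((hmeasB n x).const_mul (g x)).enorm.aemeasurable
              _ = ∑' x, ∫⁻ ω in Set.univ, ‖g x * (B n ω x : ℝ)‖₊ ∂μ := by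
                  simp
              _ ≤ ENNReal.ofReal c * T n := bound1 n g c hg0 hgc Set.univ
        _ < ⊤ := ENNReal.mul_lt_top ENNReal.ofReal_lt_top (lt_top_iff_ne_top.2 (hT n))
    -- set-integral expansions
    have hXsetint : ∀ (n : ℕ) (A : Set Ω), MeasurableSet A →
        ∫ ω in A, X n ω ∂μ = ∑' x, g x * ∫ ω in A, (B n ω x : ℝ) ∂μ := by
      intro n A _
      have := integral_tsum
        (f := fun x ω => g x * (B n ω x : ℝ)) (μ := μ.restrict A)
        (fun x => ((hmeasB n x).const_mul (g x)).aestronglyMeasurable)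
        (ne_top_of_le_ne_top
          (ENNReal.mul_ne_top ENNReal.ofReal_ne_top (hT n)) (bound1 n g c hg0 hgc A))
      rw [hX_def]
      simp only []
      rw [this]
      exact tsum_congr fun x => integral_const_mul (g x) _
    -- the one-step supermartingale inequality
    have hstep : ∀ (n : ℕ) (A : Set Ω), MeasurableSet[F n] A →
        ∫ ω in A, X (n+1) ω ∂μ ≤ m * ∫ ω in A, X n ω ∂μ := by
      intro n A hA
      set w : S → ℝ := fun y => ∫ ω in A, (B n ω y : ℝ) ∂μ with hw_def
      have hw0 : ∀ y, 0 ≤ w y := fun y =>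
        integral_nonneg fun ω => hBnn n ω y
      have hwW : ∀ y, w y ≤ W n y := fun y =>
        setIntegral_le_integral (hint n y) (ae_of_all _ fun ω => hBnn n ω y)
      have hwsumm : Summable w :=
        Summable.of_nonneg_of_le hw0 hwW (hWsumm n)
      -- summability of the double family
      have hrow : ∀ x, Summable (fun y => g x * (w y * P y x)) := by
        intro x
        refine Summable.of_nonneg_of_le
          (fun y => mul_nonneg (hg0 x) (mul_nonneg (hw0 y) (hP0 y x)))
          (fun y => ?_) (hwsumm.mul_left c)
        calc g x * (w y * P y x) ≤ c * (w y * P y x) :=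
              mul_le_mul_of_nonneg_right (hgc x)
                (mul_nonneg (hw0 y) (hP0 y x))
          _ ≤ c * (w y * 1) := by
              refine mul_le_mul_of_nonneg_left ?_ hc0
              exact mul_le_mul_of_nonneg_left (hPle1 y x) (hw0 y)
          _ = c * w y := by rw [mul_one]
      have hcol : ∀ y, Summable (fun x => g x * (w y * P y x)) := by
        intro y
        refine Summable.of_nonneg_of_le
          (fun x => mul_nonneg (hg0 x) (mul_nonneg (hw0 y) (hP0 y x)))
          (fun x => ?_) (((hP1 y).summable).mul_left (c * w y))
        calc g x * (w y * P y x) ≤ c * (w y * P y x) :=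
              mul_le_mul_of_nonneg_right (hgc x)
                (mul_nonneg (hw0 y) (hP0 y x))
          _ = c * w y * P y x := by ring
      have huncurry : Summable (Function.uncurry (fun x y => g x * (w y * P y x))) := by
        refine summable_of_sum_le (c := c * ∑' y, w y) ?_ ?_
        · intro p
          exact mul_nonneg (hg0 p.1) (mul_nonneg (hw0 p.2) (hP0 p.2 p.1))
        · intro u
          have hsubset : u ⊆ (u.image Prod.fst) ×ˢ (u.image Prod.snd) := by
            intro p hp
            rw [Finset.mem_product]
            exact ⟨Finset.mem_image_of_mem _ hp, Finset.mem_image_of_mem _ hp⟩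
          calc ∑ p ∈ u, Function.uncurry (fun x y => g x * (w y * P y x)) p
              ≤ ∑ p ∈ (u.image Prod.fst) ×ˢ (u.image Prod.snd),
                  Function.uncurry (fun x y => g x * (w y * P y x)) p := by
                refine Finset.sum_le_sum_of_subset_of_nonneg hsubset ?_
                intro p _ _
                exact mul_nonneg (hg0 p.1) (mul_nonneg (hw0 p.2) (hP0 p.2 p.1))
            _ = ∑ x ∈ u.image Prod.fst, ∑ y ∈ u.image Prod.snd,
                  g x * (w y * P y x) := by
                rw [Finset.sum_product]
                rfl
            _ = ∑ y ∈ u.image Prod.snd, ∑ x ∈ u.image Prod.fst,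
                  g x * (w y * P y x) := Finset.sum_comm
            _ ≤ ∑ y ∈ u.image Prod.snd, c * w y := by
                refine Finset.sum_le_sum fun y _ => ?_
                have hinner : ∑ x ∈ u.image Prod.fst, g x * (w y * P y x)
                    = w y * ∑ x ∈ u.image Prod.fst, g x * P y x := by
                  rw [Finset.mul_sum]
                  exact Finset.sum_congr rfl fun x _ => by ring
                rw [hinner]
                have h1 : ∑ x ∈ u.image Prod.fst, g x * P y x
                    ≤ ∑ x ∈ u.image Prod.fst, c * P y x :=
                  Finset.sum_le_sum fun x _ =>
                    mul_le_mul_of_nonneg_right (hgc x) (hP0 y x)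
                have h2 : ∑ x ∈ u.image Prod.fst, c * P y x
                    = c * ∑ x ∈ u.image Prod.fst, P y x := by
                  rw [Finset.mul_sum]
                have h3 : ∑ x ∈ u.image Prod.fst, P y x ≤ 1 := by
                  have := Summable.sum_le_tsum (u.image Prod.fst)
                    (fun x _ => hP0 y x) (hP1 y).summable
                  rwa [(hP1 y).tsum_eq] at this
                calc w y * ∑ x ∈ u.image Prod.fst, g x * P y x
                    ≤ w y * (c * 1) := by
                      refine mul_le_mul_of_nonneg_left ?_ (hw0 y)
                      refine le_trans h1 ?_
                      rw [h2]
                      exact mul_le_mul_of_nonneg_left h3 hc0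
                  _ = c * w y := by ring
            _ ≤ c * ∑' y, w y := by
                rw [← Finset.mul_sum]
                refine mul_le_mul_of_nonneg_left ?_ hc0
                exact Summable.sum_le_tsum _ (fun y _ => hw0 y) hwsumm
      -- expand the (n+1)-integral
      have hexp : ∫ ω in A, X (n+1) ω ∂μ
          = m * ∑' (y : S) (x : S), g x * (w y * P y x) := by
        rw [hXsetint (n+1) A ((F.le n) A hA)]
        have hterm : ∀ x, g x * ∫ ω in A, (B (n+1) ω x : ℝ) ∂μ
            = m * ∑' y, g x * (w y * P y x) := by
          intro x
          rw [key n (hT n) A hA x, tsum_mul_left]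
          ring
        rw [tsum_congr hterm, tsum_mul_left]
        congr 1
        exact (Summable.tsum_comm' huncurry hrow hcol).symm
      -- bound the inner sums with superharmonicity
      have hinner_le : ∀ y, ∑' x, g x * (w y * P y x) ≤ w y * g y := by
        intro y
        obtain ⟨s, hs, hsle⟩ := hgsuper y
        have h1 : ∑' x, g x * (w y * P y x) = w y * s := by
          rw [← hs.tsum_eq, ← tsum_mul_left]
          exact tsum_congr fun x => by ring
        rw [h1]
        exact mul_le_mul_of_nonneg_left hsle (hw0 y)
      have hinner_nonneg : ∀ y, 0 ≤ ∑' x, g x * (w y * P y x) := fun y =>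
        tsum_nonneg fun x => mul_nonneg (hg0 x) (mul_nonneg (hw0 y) (hP0 y x))
      have hsum_le : ∑' (y : S) (x : S), g x * (w y * P y x)
          ≤ ∑' y, g y * w y := by
        refine Summable.tsum_le_tsum (fun y => le_trans (hinner_le y) (le_of_eq (mul_comm _ _)))
          ?_ ?_
        · refine Summable.of_nonneg_of_le hinner_nonneg
            (fun y => le_trans (hinner_le y) ?_) (hwsumm.mul_left c)
          calc w y * g y ≤ w y * c := mul_le_mul_of_nonneg_left (hgc y) (hw0 y)
            _ = c * w y := mul_comm _ _
        · refine Summable.of_nonneg_of_le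
            (fun y => mul_nonneg (hg0 y) (hw0 y)) (fun y => ?_) (hwsumm.mul_left c)
          exact mul_le_mul_of_nonneg_right (hgc y) (hw0 y)
      have hXn : ∫ ω in A, X n ω ∂μ = ∑' y, g y * w y := hXsetint n A ((F.le n) A hA)
      rw [hexp, hXn]
      exact mul_le_mul_of_nonneg_left hsum_le (le_of_lt hm0)
    -- build the supermartingale
    set f : ℕ → Ω → ℝ := fun n ω => (m ^ n)⁻¹ * X n ω with hf_def
    have hf0 : ∀ n ω, 0 ≤ f n ω := fun n ω =>
      mul_nonneg (inv_nonneg.2 (pow_nonneg (le_of_lt hm0) n)) (hX0 n ω)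
    have hfint : ∀ n, Integrable (f n) μ := fun n => (hXint n).const_mul _
    have hsupermart : Supermartingale f F μ := by
      refine supermartingale_of_setIntegral_succ_le
        (fun n => ((hXsm n).const_mul _)) hfint ?_
      intro n A hA
      have h1 : ∫ ω in A, f (n+1) ω ∂μ = (m ^ (n+1))⁻¹ * ∫ ω in A, X (n+1) ω ∂μ :=
        integral_const_mul _ _
      have h2 : ∫ ω in A, f n ω ∂μ = (m ^ n)⁻¹ * ∫ ω in A, X n ω ∂μ :=
        integral_const_mul _ _
      rw [h1, h2]
      calc (m ^ (n+1))⁻¹ * ∫ ω in A, X (n+1) ω ∂μ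
          ≤ (m ^ (n+1))⁻¹ * (m * ∫ ω in A, X n ω ∂μ) := by
            refine mul_le_mul_of_nonneg_left (hstep n A hA) ?_
            exact inv_nonneg.2 (pow_nonneg (le_of_lt hm0) _)
        _ = (m ^ n)⁻¹ * ∫ ω in A, X n ω ∂μ := by
            have hmne : (m:ℝ) ≠ 0 := ne_of_gt hm0
            have hpn : (m ^ n : ℝ) ≠ 0 := pow_ne_zero _ hmne
            rw [pow_succ]
            field_simp
    -- L¹ boundedness
    set R : NNReal := (∫ ω, f 0 ω ∂μ).toNNReal with hR_def
    have hbddL1 : ∀ n, eLpNorm (f n) 1 μ ≤ (R : ENNReal) := by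
      intro n
      have h1 : eLpNorm (f n) 1 μ = ∫⁻ ω, ‖f n ω‖₊ ∂μ := by
        exact eLpNorm_one_eq_lintegral_enorm
      have h2 : ∫⁻ ω, ‖f n ω‖₊ ∂μ = ENNReal.ofReal (∫ ω, f n ω ∂μ) := by
        rw [ofReal_integral_eq_lintegral_ofReal (hfint n)
          (ae_of_all _ fun ω => hf0 n ω)]
        refine lintegral_congr fun ω => ?_
        rw [← enorm_eq_nnnorm, Real.enorm_eq_ofReal (hf0 n ω)]
      have h3 : ∫ ω, f n ω ∂μ ≤ ∫ ω, f 0 ω ∂μ := by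
        have := hsupermart.setIntegral_le (Nat.zero_le n)
          (MeasurableSet.univ : MeasurableSet[F 0] Set.univ)
        simpa [Measure.restrict_univ] using this
      rw [h1, h2]
      calc ENNReal.ofReal (∫ ω, f n ω ∂μ) ≤ ENNReal.ofReal (∫ ω, f 0 ω ∂μ) :=
            ENNReal.ofReal_le_ofReal h3
        _ = (R : ENNReal) := rfl
    -- convergence of the negated submartingale
    have hneg : Submartingale (-f) F μ := hsupermart.neg
    have hnegbdd : ∀ n, eLpNorm ((-f) n) 1 μ ≤ (R : ENNReal) := by
      intro n
      rw [show (-f) n = -(f n) from rfl, eLpNorm_neg]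
      exact hbddL1 n
    have hconv := hneg.ae_tendsto_limitProcess hnegbdd
    filter_upwards [hconv] with ω hω
    refine ⟨-(F.limitProcess (-f) μ ω), ?_⟩
    have : Tendsto (fun n => -((-f) n ω)) atTop (𝓝 (-(F.limitProcess (-f) μ ω))) :=
      hω.neg
    simpa [hf_def] using this
  -- apply to g = h + C and to the constant C
  have hg1 := main (fun x => h x + C) (C + C) (by linarith)
    (fun x => by have := abs_le.1 (hC x); show 0 ≤ h x + C; linarith)
    (fun x => by have := abs_le.1 (hC x); show h x + C ≤ C + C; linarith)
    (by
      intro y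
      obtain ⟨s, hs, hsle⟩ := hsuper y
      refine ⟨s + C, ?_, by show s + C ≤ h y + C; linarith⟩
      have h2 : HasSum (fun x => P y x * C) (1 * C) := (hP1 y).mul_right C
      have := hs.add h2
      rw [one_mul] at this
      convert this using 1
      funext x
      ring)
  have hg2 := main (fun _ => C) C hC0 (fun _ => hC0) (fun _ => le_rfl)
    (by
      intro y
      refine ⟨C, ?_, le_rfl⟩
      have h2 : HasSum (fun x => P y x * C) (1 * C) := (hP1 y).mul_right C
      rwa [one_mul] at h2)
  filter_upwards [hg1, hg2] with ω hω1 hω2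
  obtain ⟨L1, hL1⟩ := hω1
  obtain ⟨L2, hL2⟩ := hω2
  refine ⟨L1 - L2, ?_⟩
  have hdecomp : ∀ n, (m ^ n)⁻¹ * ∑' x, h x * (B n ω x : ℝ)
      = (m ^ n)⁻¹ * ∑' x, (h x + C) * (B n ω x : ℝ)
        - (m ^ n)⁻¹ * ∑' x, C * (B n ω x : ℝ) := by
    intro n
    have hsplit : ∑' x, (h x + C) * (B n ω x : ℝ)
        = (∑' x, h x * (B n ω x : ℝ)) + ∑' x, C * (B n ω x : ℝ) := by
      rw [← Summable.tsum_add (hsummB n ω h) (hsummB n ω (fun _ => C))]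
      exact tsum_congr fun x => by ring
    rw [hsplit]
    ring
  have := hL1.sub hL2
  refine this.congr fun n => ?_
  rw [← hdecomp n]
end

section
/- Let V ⊆ ∂ be closed in C and define h : S → [0,1] by h(x) := 𝐏_x(X_∞ ∈ V). Then almost surely the limit lim_{n→∞} ⟨h, B̄_n⟩ exists, and every subsequential weak limit W of the sequence of random finite measures (B̄_n)_{n≥0} on C satisfies W(V) ≤ lim_{n→∞} ⟨h, B̄_n⟩. -/
open MeasureTheory Filter Topology

/-- The (rescaled) branching random walk configuration `w : S → ℝ≥0∞`, viewed as a finite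
measure on the compactification `C` via the embedding `ι`: the measure `∑ₓ w(x) δ_{ι(x)}`. -/
noncomputable def brwMeasure {S C : Type*} [MeasurableSpace C] (ι : S → C) (w : S → ENNReal) :
    MeasureTheory.Measure C :=
  MeasureTheory.Measure.sum fun x => w x • MeasureTheory.Measure.dirac (ι x)

/-- `W` is a subsequential weak limit of the sequence of finite measures `μs` on `C`:
along some strictly increasing subsequence, the integrals of every bounded continuous
function converge to the corresponding integral against `W`. -/
def IsSubseqWeakLimit {C : Type*} [TopologicalSpace C] [MeasurableSpace C]
    (μs : ℕ → MeasureTheory.Measure C) (W : MeasureTheory.Measure C) : Prop :=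
  ∃ φ : ℕ → ℕ, StrictMono φ ∧
    ∀ f : BoundedContinuousFunction C ℝ,
      Filter.Tendsto (fun k => ∫ c, f c ∂(μs (φ k))) Filter.atTop (nhds (∫ c, f c ∂W))

set_option linter.unusedSectionVars false
namespace BRW8

variable {S : Type*}

def shf : (ℕ → S) → ℕ → S := fun ω n => ω (n + 1)

def Cyl (n : ℕ) (s : ℕ → S) : Set (ℕ → S) := {ω | ∀ i ≤ n, ω i = s i}

def scons (a : S) (s : ℕ → S) : ℕ → S := fun n => Nat.casesOn n a s

@[simp] lemma scons_zero (a : S) (s : ℕ → S) : scons a s 0 = a := rfl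
@[simp] lemma scons_succ (a : S) (s : ℕ → S) (n : ℕ) : scons a s (n + 1) = s n := rfl

section Meas
variable [Countable S] [MeasurableSpace S] [MeasurableSingletonClass S]

lemma measurable_shf : Measurable (shf : (ℕ → S) → ℕ → S) :=
  measurable_pi_lambda _ fun n => measurable_pi_apply (n + 1)

lemma measurableSet_cyl (n : ℕ) (s : ℕ → S) : MeasurableSet (Cyl n s) := by
  have h : Cyl n s = ⋂ i ∈ Set.Iic n, (fun ω : ℕ → S => ω i) ⁻¹' {s i} := by
    ext ω; simp [Cyl]
  rw [h]
  exact MeasurableSet.biInter (Set.to_countable _)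
    fun i _ => (measurable_pi_apply i) (measurableSet_singleton _)

lemma isPiSystem_cyl : IsPiSystem {t : Set (ℕ → S) | ∃ n s, t = Cyl n s} := by
  rintro _ ⟨n, s, rfl⟩ _ ⟨k, t, rfl⟩ ⟨ω, hω1, hω2⟩
  rcases le_total n k with h | h
  · refine ⟨k, t, ?_⟩
    apply subset_antisymm Set.inter_subset_right
    intro ω' hω'
    refine ⟨fun i hi => ?_, hω'⟩
    rw [hω' i (hi.trans h), ← hω2 i (hi.trans h)]
    exact hω1 i hi
  · refine ⟨n, s, ?_⟩
    apply subset_antisymm Set.inter_subset_left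
    intro ω' hω'
    refine ⟨hω', fun i hi => ?_⟩
    rw [hω' i (hi.trans h), ← hω1 i (hi.trans h)]
    exact hω2 i hi

lemma generateFrom_cyl [Nonempty S] :
    (MeasurableSpace.pi : MeasurableSpace (ℕ → S)) =
      MeasurableSpace.generateFrom {t : Set (ℕ → S) | ∃ n s, t = Cyl n s} := by
  refine le_antisymm ?_ (MeasurableSpace.generateFrom_le ?_)
  · refine iSup_le fun i => measurable_iff_comap_le.mp
      (@measurable_to_countable' S (ℕ → S) _ _
        (MeasurableSpace.generateFrom {t : Set (ℕ → S) | ∃ n s, t = Cyl n s})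
        (fun ω => ω i) fun a => ?_)
    have h : (fun ω : ℕ → S => ω i) ⁻¹' {a} =
        ⋃ (v : {j // j ≤ i} → S) (_ : v ⟨i, le_refl i⟩ = a),
          Cyl i (fun n => if h : n ≤ i then v ⟨n, h⟩ else Classical.arbitrary S) := by
      ext ω
      simp only [Set.mem_preimage, Set.mem_singleton_iff, Set.mem_iUnion]
      constructor
      · intro hω
        refine ⟨fun j => ω j.1, hω, fun j hj => ?_⟩
        simp only [hj, dif_pos]
      · rintro ⟨v, hv, hω⟩
        have := hω i le_rfl
        simpa [hv] using this
    rw [h]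
    exact MeasurableSet.biUnion (Set.to_countable _)
      fun v _ => MeasurableSpace.measurableSet_generateFrom ⟨i, _, rfl⟩
  · rintro _ ⟨n, s, rfl⟩
    exact measurableSet_cyl n s

end Meas

section Markov
variable [Countable S] [MeasurableSpace S] [MeasurableSingletonClass S]

lemma shf_preimage_cyl (n : ℕ) (s : ℕ → S) :
    shf ⁻¹' Cyl n s = ⋃ a : S, Cyl (n + 1) (scons a s) := by
  ext ω
  simp only [Set.mem_preimage, Set.mem_iUnion, Cyl, Set.mem_setOf_eq, shf]
  constructor
  · intro hω
    refine ⟨ω 0, fun i hi => ?_⟩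
    cases i with
    | zero => rfl
    | succ j => exact hω j (Nat.succ_le_succ_iff.mp hi)
  · rintro ⟨a, ha⟩ i hi
    exact ha (i + 1) (Nat.succ_le_succ hi)

lemma tsum_ofReal_P (P : S → S → ℝ) (hP0 : ∀ x y, 0 ≤ P x y)
    (hP1 : ∀ x, HasSum (fun y => P x y) 1) (x : S) :
    ∑' y, ENNReal.ofReal (P x y) = 1 := by
  rw [← ENNReal.ofReal_tsum_of_nonneg (hP0 x) (hP1 x).summable, (hP1 x).tsum_eq,
    ENNReal.ofReal_one]

lemma markov [Nonempty S] [DecidableEq S]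
    (P : S → S → ℝ) (hP0 : ∀ x y, 0 ≤ P x y) (hP1 : ∀ x, HasSum (fun y => P x y) 1)
    (Q : S → Measure (ℕ → S)) (hQprob : ∀ x, IsProbabilityMeasure (Q x))
    (hQcyl : ∀ (x : S) (n : ℕ) (s : ℕ → S),
      Q x {ω | ∀ i ≤ n, ω i = s i} =
        (if s 0 = x then 1 else 0) *
          ∏ i ∈ Finset.range n, ENNReal.ofReal (P (s i) (s (i + 1))))
    (x : S) :
    (Q x).map shf = Measure.sum (fun y => ENNReal.ofReal (P x y) • Q y) := by
  haveI := hQprob x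
  haveI : IsProbabilityMeasure ((Q x).map shf) :=
    Measure.isProbabilityMeasure_map measurable_shf.aemeasurable
  refine ext_of_generate_finite _ generateFrom_cyl isPiSystem_cyl ?_ ?_
  · rintro _ ⟨n, s, rfl⟩
    have hdisj : Pairwise (Function.onFun Disjoint fun a : S => Cyl (n + 1) (scons a s)) := by
      intro a b hab
      rw [Function.onFun, Set.disjoint_left]
      intro ω h1 h2
      have e1 : ω 0 = a := h1 0 (Nat.zero_le _)
      have e2 : ω 0 = b := h2 0 (Nat.zero_le _)
      exact hab (e1 ▸ e2)
    rw [Measure.map_apply measurable_shf (measurableSet_cyl n s), shf_preimage_cyl,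
      measure_iUnion hdisj (fun a => measurableSet_cyl _ _),
      Measure.sum_apply _ (measurableSet_cyl n s)]
    have hL : ∀ a : S, Q x (Cyl (n + 1) (scons a s)) =
        (if a = x then 1 else 0) *
          ∏ i ∈ Finset.range (n + 1),
            ENNReal.ofReal (P (scons a s i) (scons a s (i + 1))) := by
      intro a
      exact hQcyl x (n + 1) (scons a s)
    have hR : ∀ y : S, (ENNReal.ofReal (P x y) • Q y) (Cyl n s) =
        ENNReal.ofReal (P x y) * ((if s 0 = y then 1 else 0) *
          ∏ i ∈ Finset.range n, ENNReal.ofReal (P (s i) (s (i + 1)))) := by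
      intro y
      rw [Measure.smul_apply, smul_eq_mul]
      exact congrArg (fun z => ENNReal.ofReal (P x y) * z) (hQcyl y n s)
    simp only [hL, hR]
    rw [tsum_eq_single x (by intro b hb; simp [hb]),
      tsum_eq_single (s 0) (by intro b hb; simp [Ne.symm hb])]
    simp only [if_pos rfl]
    rw [Finset.prod_range_succ']
    simp only [scons_succ, scons_zero]
    ring
  · rw [Measure.sum_apply _ MeasurableSet.univ]
    have : ∀ y : S, (ENNReal.ofReal (P x y) • Q y) Set.univ = ENNReal.ofReal (P x y) := by
      intro y
      haveI := hQprob y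
      rw [Measure.smul_apply, smul_eq_mul, measure_univ, mul_one]
    simp only [this]
    rw [tsum_ofReal_P P hP0 hP1 x, measure_univ]

lemma markov_apply [Nonempty S] [DecidableEq S]
    (P : S → S → ℝ) (hP0 : ∀ x y, 0 ≤ P x y) (hP1 : ∀ x, HasSum (fun y => P x y) 1)
    (Q : S → Measure (ℕ → S)) (hQprob : ∀ x, IsProbabilityMeasure (Q x))
    (hQcyl : ∀ (x : S) (n : ℕ) (s : ℕ → S),
      Q x {ω | ∀ i ≤ n, ω i = s i} =
        (if s 0 = x then 1 else 0) *
          ∏ i ∈ Finset.range n, ENNReal.ofReal (P (s i) (s (i + 1))))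
    (x : S) {A : Set (ℕ → S)} (hA : MeasurableSet A) :
    Q x (shf ⁻¹' A) = ∑' y, ENNReal.ofReal (P x y) * Q y A := by
  rw [← Measure.map_apply measurable_shf hA, markov P hP0 hP1 Q hQprob hQcyl x,
    Measure.sum_apply _ hA]
  simp only [Measure.smul_apply, smul_eq_mul]

end Markov

end BRW8
set_option maxHeartbeats 1000000

namespace BRW8

section BRWside

variable {S : Type*} [Countable S] [DecidableEq S]
  {Ω : Type*} {mΩ : MeasurableSpace Ω}

/-- The rescaled population weighted by `f`. -/
noncomputable def Mf (m : ℝ) (B : ℕ → Ω → S → ℕ) (f : S → ℝ) (n : ℕ) (ω : Ω) : ℝ :=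
  (m ^ n)⁻¹ * ∑' x, f x * (B n ω x : ℝ)

lemma tsum_toReal_ofReal' {v : S → ℝ} (h0 : ∀ x, 0 ≤ v x) (hs : Summable v) :
    ∑' x, v x = (∑' x, ENNReal.ofReal (v x)).toReal := by
  rw [← ENNReal.ofReal_tsum_of_nonneg h0 hs, ENNReal.toReal_ofReal (tsum_nonneg fun x => h0 x)]

variable (μ : Measure Ω) [IsProbabilityMeasure μ] (F : Filtration ℕ mΩ)
  (B : ℕ → Ω → S → ℕ) (P : S → S → ℝ) (m : ℝ) (o : S)

lemma summable_mul_B {g : S → ℝ} {n : ℕ} {ω : Ω}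
    (hfin : (Function.support (B n ω)).Finite) :
    Summable fun x => g x * (B n ω x : ℝ) := by
  refine summable_of_ne_finset_zero (s := hfin.toFinset) fun x hx => ?_
  have : B n ω x = 0 := by
    by_contra h
    exact hx (hfin.mem_toFinset.mpr h)
  simp [this]

lemma summable_B_mul {g : S → ℝ} {n : ℕ} {ω : Ω}
    (hfin : (Function.support (B n ω)).Finite) :
    Summable fun x => (B n ω x : ℝ) * g x := by
  simpa [mul_comm] using summable_mul_B B (g := g) hfin

lemma measB (hadapt : ∀ n x, Measurable[F n] (fun ω => B n ω x)) (n : ℕ) (x : S) :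
    Measurable[F n] fun ω => ((B n ω x : ℝ)) :=
  (measurable_of_countable (fun k : ℕ => (k : ℝ))).comp (hadapt n x)

lemma measB' (hadapt : ∀ n x, Measurable[F n] (fun ω => B n ω x)) (n : ℕ) (x : S) :
    Measurable fun ω => ((B n ω x : ℝ)) :=
  (measB F B hadapt n x).mono (F.le n) le_rfl

lemma lint_branch
    (hadapt : ∀ n x, Measurable[F n] (fun ω => B n ω x))
    (hfin : ∀ n ω, (Function.support (B n ω)).Finite)
    (hint : ∀ n x, Integrable (fun ω => (B n ω x : ℝ)) μ)
    (hbranch : ∀ n x,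
      μ[fun ω => (B (n + 1) ω x : ℝ)|F n]
        =ᵐ[μ] fun ω => m * ∑' y, (B n ω y : ℝ) * P y x)
    (hP0 : ∀ x y, 0 ≤ P x y) (hm : 1 < m)
    (n : ℕ) (x : S) {s : Set Ω} (hs : MeasurableSet[F n] s) :
    ∫⁻ ω in s, ENNReal.ofReal ((B (n + 1) ω x : ℝ)) ∂μ
      = ENNReal.ofReal m *
        ∑' y, (∫⁻ ω in s, ENNReal.ofReal ((B n ω y : ℝ)) ∂μ) * ENNReal.ofReal (P y x) := by
  have hm0 : (0 : ℝ) ≤ m := (zero_lt_one.trans hm).le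
  have hRHSint : Integrable (fun ω => m * ∑' y, (B n ω y : ℝ) * P y x) μ :=
    integrable_condExp.congr (hbranch n x)
  have hreal : ∫ ω in s, ((B (n + 1) ω x : ℝ)) ∂μ
      = ∫ ω in s, (m * ∑' y, (B n ω y : ℝ) * P y x) ∂μ := by
    rw [← setIntegral_condExp (F.le n) (hint (n + 1) x) hs]
    exact integral_congr_ae (ae_restrict_of_ae (hbranch n x))
  have hpt : ∀ ω : Ω, ENNReal.ofReal (m * ∑' y, (B n ω y : ℝ) * P y x)
      = ENNReal.ofReal m * ∑' y, ENNReal.ofReal ((B n ω y : ℝ)) * ENNReal.ofReal (P y x) := by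
    intro ω
    rw [ENNReal.ofReal_mul hm0,
      ENNReal.ofReal_tsum_of_nonneg (fun y => mul_nonneg (Nat.cast_nonneg _) (hP0 y x))
        (summable_B_mul B (hfin n ω))]
    exact congrArg (fun z => ENNReal.ofReal m * z)
      (tsum_congr fun y => ENNReal.ofReal_mul (Nat.cast_nonneg _))
  have hmeasg : ∀ y, Measurable fun ω => ENNReal.ofReal ((B n ω y : ℝ)) * ENNReal.ofReal (P y x) :=
    fun y => ((measB' F B hadapt n y).ennreal_ofReal).mul_const _
  calc ∫⁻ ω in s, ENNReal.ofReal ((B (n + 1) ω x : ℝ)) ∂μ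
      = ENNReal.ofReal (∫ ω in s, ((B (n + 1) ω x : ℝ)) ∂μ) :=
        (ofReal_integral_eq_lintegral_ofReal ((hint (n + 1) x).restrict)
          (Eventually.of_forall fun ω => Nat.cast_nonneg _)).symm
    _ = ENNReal.ofReal (∫ ω in s, (m * ∑' y, (B n ω y : ℝ) * P y x) ∂μ) := by rw [hreal]
    _ = ∫⁻ ω in s, ENNReal.ofReal (m * ∑' y, (B n ω y : ℝ) * P y x) ∂μ :=
        ofReal_integral_eq_lintegral_ofReal (hRHSint.restrict)
          (Eventually.of_forall fun ω => mul_nonneg hm0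
            (tsum_nonneg fun y => mul_nonneg (Nat.cast_nonneg _) (hP0 y x)))
    _ = ∫⁻ ω in s, (ENNReal.ofReal m *
          ∑' y, ENNReal.ofReal ((B n ω y : ℝ)) * ENNReal.ofReal (P y x)) ∂μ :=
        lintegral_congr hpt
    _ = ENNReal.ofReal m * ∫⁻ ω in s,
          (∑' y, ENNReal.ofReal ((B n ω y : ℝ)) * ENNReal.ofReal (P y x)) ∂μ :=
        lintegral_const_mul _ (Measurable.ennreal_tsum hmeasg)
    _ = ENNReal.ofReal m *
          ∑' y, ∫⁻ ω in s, ENNReal.ofReal ((B n ω y : ℝ)) * ENNReal.ofReal (P y x) ∂μ := by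
        rw [lintegral_tsum fun y => (hmeasg y).aemeasurable]
    _ = ENNReal.ofReal m *
          ∑' y, (∫⁻ ω in s, ENNReal.ofReal ((B n ω y : ℝ)) ∂μ) * ENNReal.ofReal (P y x) := by
        congr 1
        exact tsum_congr fun y =>
          lintegral_mul_const _ ((measB' F B hadapt n y).ennreal_ofReal)

lemma tsum_LB
    (hadapt : ∀ n x, Measurable[F n] (fun ω => B n ω x))
    (hfin : ∀ n ω, (Function.support (B n ω)).Finite)
    (hint : ∀ n x, Integrable (fun ω => (B n ω x : ℝ)) μ)
    (hB0 : ∀ ω x, B 0 ω x = if x = o then 1 else 0)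
    (hbranch : ∀ n x,
      μ[fun ω => (B (n + 1) ω x : ℝ)|F n]
        =ᵐ[μ] fun ω => m * ∑' y, (B n ω y : ℝ) * P y x)
    (hP0 : ∀ x y, 0 ≤ P x y) (hP1 : ∀ x, HasSum (fun y => P x y) 1) (hm : 1 < m) :
    ∀ n, ∑' x, ∫⁻ ω, ENNReal.ofReal ((B n ω x : ℝ)) ∂μ = (ENNReal.ofReal m) ^ n := by
  have hPsum : ∀ y, ∑' x, ENNReal.ofReal (P y x) = 1 := by
    intro y
    rw [← ENNReal.ofReal_tsum_of_nonneg (hP0 y) (hP1 y).summable, (hP1 y).tsum_eq,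
      ENNReal.ofReal_one]
  intro n
  induction n with
  | zero =>
    have h1 : ∀ x, ∫⁻ ω, ENNReal.ofReal ((B 0 ω x : ℝ)) ∂μ = if x = o then 1 else 0 := by
      intro x
      have h2 : ∀ ω : Ω, ENNReal.ofReal ((B 0 ω x : ℝ)) = if x = o then 1 else 0 := by
        intro ω
        rw [hB0 ω x]
        split <;> simp
      rw [lintegral_congr h2, lintegral_const, measure_univ, mul_one]
    simp only [h1]
    rw [pow_zero, tsum_eq_single o (fun b hb => by simp [hb])]
    simp
  | succ n ih =>
    have hx : ∀ x, ∫⁻ ω, ENNReal.ofReal ((B (n + 1) ω x : ℝ)) ∂μ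
        = ENNReal.ofReal m *
          ∑' y, (∫⁻ ω, ENNReal.ofReal ((B n ω y : ℝ)) ∂μ) * ENNReal.ofReal (P y x) := by
      intro x
      have h := lint_branch μ F B P m hadapt hfin hint hbranch hP0 hm n x
        (s := Set.univ) MeasurableSet.univ
      rwa [Measure.restrict_univ] at h
    simp only [hx]
    rw [ENNReal.tsum_mul_left, ENNReal.tsum_comm]
    have h3 : ∀ y, ∑' x, (∫⁻ ω, ENNReal.ofReal ((B n ω y : ℝ)) ∂μ) * ENNReal.ofReal (P y x)
        = ∫⁻ ω, ENNReal.ofReal ((B n ω y : ℝ)) ∂μ := by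
      intro y
      rw [ENNReal.tsum_mul_left, hPsum y, mul_one]
    rw [tsum_congr h3, ih, pow_succ, mul_comm]

lemma Mf_nonneg {f : S → ℝ} (hf0 : ∀ x, 0 ≤ f x) (hm : 1 < m) (n : ℕ) (ω : Ω) :
    0 ≤ Mf m B f n ω :=
  mul_nonneg (inv_nonneg.mpr (pow_nonneg (zero_lt_one.trans hm).le n))
    (tsum_nonneg fun x => mul_nonneg (hf0 x) (Nat.cast_nonneg _))

lemma ofReal_Mf {f : S → ℝ} (hf0 : ∀ x, 0 ≤ f x) (hm : 1 < m)
    (hfin : ∀ n ω, (Function.support (B n ω)).Finite) (n : ℕ) (ω : Ω) :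
    ENNReal.ofReal (Mf m B f n ω)
      = ENNReal.ofReal ((m ^ n)⁻¹)
        * ∑' x, ENNReal.ofReal (f x) * ENNReal.ofReal ((B n ω x : ℝ)) := by
  rw [Mf, ENNReal.ofReal_mul (inv_nonneg.mpr (pow_nonneg (zero_lt_one.trans hm).le n)),
    ENNReal.ofReal_tsum_of_nonneg (fun x => mul_nonneg (hf0 x) (Nat.cast_nonneg _))
      (summable_mul_B B (hfin n ω))]
  exact congrArg (fun z => ENNReal.ofReal ((m ^ n)⁻¹) * z)
    (tsum_congr fun x => ENNReal.ofReal_mul (hf0 x))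

lemma Mf_meas (hadapt : ∀ n x, Measurable[F n] (fun ω => B n ω x))
    (hfin : ∀ n ω, (Function.support (B n ω)).Finite)
    {f : S → ℝ} (hf0 : ∀ x, 0 ≤ f x) (n : ℕ) :
    Measurable[F n] (Mf m B f n) := by
  have hrepr : Mf m B f n = fun ω =>
      (m ^ n)⁻¹ * (∑' x, ENNReal.ofReal (f x * (B n ω x : ℝ))).toReal := by
    funext ω
    rw [Mf, tsum_toReal_ofReal' (fun x => mul_nonneg (hf0 x) (Nat.cast_nonneg _))
      (summable_mul_B B (hfin n ω))]
  rw [hrepr]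
  refine Measurable.const_mul (Measurable.ennreal_toReal ?_) _
  exact Measurable.ennreal_tsum fun x =>
    ((measB F B hadapt n x).const_mul (f x)).ennreal_ofReal

lemma lint_Mf_restrict (hadapt : ∀ n x, Measurable[F n] (fun ω => B n ω x))
    (hfin : ∀ n ω, (Function.support (B n ω)).Finite)
    {f : S → ℝ} (hf0 : ∀ x, 0 ≤ f x) (hm : 1 < m) (n : ℕ) (s : Set Ω) :
    ∫⁻ ω in s, ENNReal.ofReal (Mf m B f n ω) ∂μ
      = ENNReal.ofReal ((m ^ n)⁻¹)
        * ∑' x, ENNReal.ofReal (f x) * ∫⁻ ω in s, ENNReal.ofReal ((B n ω x : ℝ)) ∂μ := by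
  have hmeasx : ∀ x : S, Measurable fun ω => ENNReal.ofReal (f x)
      * ENNReal.ofReal ((B n ω x : ℝ)) :=
    fun x => ((measB' F B hadapt n x).ennreal_ofReal).const_mul _
  rw [lintegral_congr (ofReal_Mf B m hf0 hm hfin n),
    lintegral_const_mul _ (Measurable.ennreal_tsum hmeasx),
    lintegral_tsum fun x => (hmeasx x).aemeasurable]
  exact congrArg (fun z => ENNReal.ofReal ((m ^ n)⁻¹) * z)
    (tsum_congr fun x => lintegral_const_mul _ ((measB' F B hadapt n x).ennreal_ofReal))

lemma lint_Mf_le (hadapt : ∀ n x, Measurable[F n] (fun ω => B n ω x))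
    (hfin : ∀ n ω, (Function.support (B n ω)).Finite)
    (hint : ∀ n x, Integrable (fun ω => (B n ω x : ℝ)) μ)
    (hB0 : ∀ ω x, B 0 ω x = if x = o then 1 else 0)
    (hbranch : ∀ n x,
      μ[fun ω => (B (n + 1) ω x : ℝ)|F n]
        =ᵐ[μ] fun ω => m * ∑' y, (B n ω y : ℝ) * P y x)
    (hP0 : ∀ x y, 0 ≤ P x y) (hP1 : ∀ x, HasSum (fun y => P x y) 1) (hm : 1 < m)
    {f : S → ℝ} (hf0 : ∀ x, 0 ≤ f x) (hf1 : ∀ x, f x ≤ 1) (n : ℕ) :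
    ∫⁻ ω, ENNReal.ofReal (Mf m B f n ω) ∂μ ≤ 1 := by
  have hm0 : (0:ℝ) < m := zero_lt_one.trans hm
  have h := lint_Mf_restrict μ F B m hadapt hfin hf0 hm n Set.univ
  rw [Measure.restrict_univ] at h
  rw [h]
  have hle : ∑' x, ENNReal.ofReal (f x) * ∫⁻ ω, ENNReal.ofReal ((B n ω x : ℝ)) ∂μ
      ≤ ∑' x, ∫⁻ ω, ENNReal.ofReal ((B n ω x : ℝ)) ∂μ := by
    refine ENNReal.tsum_le_tsum fun x => ?_
    calc ENNReal.ofReal (f x) * ∫⁻ ω, ENNReal.ofReal ((B n ω x : ℝ)) ∂μ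
        ≤ 1 * ∫⁻ ω, ENNReal.ofReal ((B n ω x : ℝ)) ∂μ := by
          gcongr
          exact ENNReal.ofReal_le_one.mpr (hf1 x)
      _ = _ := one_mul _
  calc ENNReal.ofReal ((m ^ n)⁻¹)
        * ∑' x, ENNReal.ofReal (f x) * ∫⁻ ω, ENNReal.ofReal ((B n ω x : ℝ)) ∂μ
      ≤ ENNReal.ofReal ((m ^ n)⁻¹) * (ENNReal.ofReal m) ^ n := by
        rw [tsum_LB μ F B P m o hadapt hfin hint hB0 hbranch hP0 hP1 hm n] at hle
        exact mul_le_mul_right hle _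
    _ = 1 := by
        rw [← ENNReal.ofReal_pow hm0.le, ← ENNReal.ofReal_mul
          (inv_nonneg.mpr (pow_nonneg hm0.le n)), inv_mul_cancel₀ (pow_ne_zero n hm0.ne'),
          ENNReal.ofReal_one]

lemma Mf_int (hadapt : ∀ n x, Measurable[F n] (fun ω => B n ω x))
    (hfin : ∀ n ω, (Function.support (B n ω)).Finite)
    (hint : ∀ n x, Integrable (fun ω => (B n ω x : ℝ)) μ)
    (hB0 : ∀ ω x, B 0 ω x = if x = o then 1 else 0)
    (hbranch : ∀ n x,
      μ[fun ω => (B (n + 1) ω x : ℝ)|F n]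
        =ᵐ[μ] fun ω => m * ∑' y, (B n ω y : ℝ) * P y x)
    (hP0 : ∀ x y, 0 ≤ P x y) (hP1 : ∀ x, HasSum (fun y => P x y) 1) (hm : 1 < m)
    {f : S → ℝ} (hf0 : ∀ x, 0 ≤ f x) (hf1 : ∀ x, f x ≤ 1) (n : ℕ) :
    Integrable (Mf m B f n) μ := by
  refine ⟨(((Mf_meas F B m hadapt hfin hf0 n).mono (F.le n) le_rfl)).aestronglyMeasurable, ?_⟩
  rw [HasFiniteIntegral]
  have heq : ∀ ω : Ω, (‖Mf m B f n ω‖₊ : ENNReal) = ENNReal.ofReal (Mf m B f n ω) := by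
    intro ω
    rw [← Real.enorm_eq_ofReal (Mf_nonneg B m hf0 hm n ω), enorm_eq_nnnorm]
  calc ∫⁻ ω, (‖Mf m B f n ω‖₊ : ENNReal) ∂μ
      = ∫⁻ ω, ENNReal.ofReal (Mf m B f n ω) ∂μ := lintegral_congr heq
    _ ≤ 1 := lint_Mf_le μ F B P m o hadapt hfin hint hB0 hbranch hP0 hP1 hm hf0 hf1 n
    _ < ⊤ := ENNReal.one_lt_top


lemma condexp_Mf (hadapt : ∀ n x, Measurable[F n] (fun ω => B n ω x))
    (hfin : ∀ n ω, (Function.support (B n ω)).Finite)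
    (hint : ∀ n x, Integrable (fun ω => (B n ω x : ℝ)) μ)
    (hB0 : ∀ ω x, B 0 ω x = if x = o then 1 else 0)
    (hbranch : ∀ n x,
      μ[fun ω => (B (n + 1) ω x : ℝ)|F n]
        =ᵐ[μ] fun ω => m * ∑' y, (B n ω y : ℝ) * P y x)
    (hP0 : ∀ x y, 0 ≤ P x y) (hP1 : ∀ x, HasSum (fun y => P x y) 1) (hm : 1 < m)
    {f : S → ℝ} (hf0 : ∀ x, 0 ≤ f x) (hf1 : ∀ x, f x ≤ 1) (n : ℕ) :
    Mf m B (fun y => ∑' x, P y x * f x) n =ᵐ[μ] μ[Mf m B f (n + 1)|F n] := by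
  have hm0 : (0:ℝ) < m := zero_lt_one.trans hm
  set Pf : S → ℝ := fun y => ∑' x, P y x * f x with hPf
  have hPfsummable : ∀ y, Summable fun x => P y x * f x := fun y =>
    Summable.of_nonneg_of_le (fun x => mul_nonneg (hP0 y x) (hf0 x))
      (fun x => mul_le_of_le_one_right (hP0 y x) (hf1 x)) (hP1 y).summable
  have hPf0 : ∀ y, 0 ≤ Pf y := fun y => tsum_nonneg fun x => mul_nonneg (hP0 y x) (hf0 x)
  have hPf1 : ∀ y, Pf y ≤ 1 := by
    intro y
    calc Pf y ≤ ∑' x, P y x :=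
          Summable.tsum_le_tsum (fun x => mul_le_of_le_one_right (hP0 y x) (hf1 x))
            (hPfsummable y) (hP1 y).summable
      _ = 1 := (hP1 y).tsum_eq
  have hofRealPf : ∀ y, ENNReal.ofReal (Pf y)
      = ∑' x, ENNReal.ofReal (P y x) * ENNReal.ofReal (f x) := by
    intro y
    rw [hPf]
    rw [ENNReal.ofReal_tsum_of_nonneg (fun x => mul_nonneg (hP0 y x) (hf0 x))
      (hPfsummable y)]
    exact tsum_congr fun x => ENNReal.ofReal_mul (hP0 y x)
  refine ae_eq_condExp_of_forall_setIntegral_eq (F.le n)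
    (Mf_int μ F B P m o hadapt hfin hint hB0 hbranch hP0 hP1 hm hf0 hf1 (n + 1))
    (fun s _ _ =>
      (Mf_int μ F B P m o hadapt hfin hint hB0 hbranch hP0 hP1 hm hPf0 hPf1 n).integrableOn)
    (fun s hs _ => ?_)
    (((Mf_meas F B m hadapt hfin hPf0 n).stronglyMeasurable).aestronglyMeasurable)
  have e1 : ∫ ω in s, Mf m B Pf n ω ∂μ
      = (∫⁻ ω in s, ENNReal.ofReal (Mf m B Pf n ω) ∂μ).toReal := by
    rw [integral_eq_lintegral_of_nonneg_ae
      (Eventually.of_forall fun ω => Mf_nonneg B m hPf0 hm n ω)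
      ((((Mf_meas F B m hadapt hfin hPf0 n).mono (F.le n)
        le_rfl)).aestronglyMeasurable.restrict)]
  have e2 : ∫ ω in s, Mf m B f (n + 1) ω ∂μ
      = (∫⁻ ω in s, ENNReal.ofReal (Mf m B f (n + 1) ω) ∂μ).toReal := by
    rw [integral_eq_lintegral_of_nonneg_ae
      (Eventually.of_forall fun ω => Mf_nonneg B m hf0 hm (n + 1) ω)
      ((((Mf_meas F B m hadapt hfin hf0 (n + 1)).mono (F.le (n + 1))
        le_rfl)).aestronglyMeasurable.restrict)]
  rw [e1, e2]
  congr 1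
  rw [lint_Mf_restrict μ F B m hadapt hfin hPf0 hm n s,
    lint_Mf_restrict μ F B m hadapt hfin hf0 hm (n + 1) s]
  have hbr : ∀ x, ∫⁻ ω in s, ENNReal.ofReal ((B (n + 1) ω x : ℝ)) ∂μ
      = ENNReal.ofReal m *
        ∑' y, (∫⁻ ω in s, ENNReal.ofReal ((B n ω y : ℝ)) ∂μ) * ENNReal.ofReal (P y x) :=
    fun x => lint_branch μ F B P m hadapt hfin hint hbranch hP0 hm n x hs
  simp only [hbr]
  set L : S → ENNReal := fun y => ∫⁻ ω in s, ENNReal.ofReal ((B n ω y : ℝ)) ∂μ with hL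
  calc ENNReal.ofReal ((m ^ n)⁻¹) * ∑' y, ENNReal.ofReal (Pf y) * L y
      = ENNReal.ofReal ((m ^ n)⁻¹)
        * ∑' y, (∑' x, ENNReal.ofReal (P y x) * ENNReal.ofReal (f x)) * L y := by
        exact congrArg _ (tsum_congr fun y => by rw [hofRealPf y])
    _ = ENNReal.ofReal ((m ^ n)⁻¹)
        * ∑' y, ∑' x, ENNReal.ofReal (f x) * (L y * ENNReal.ofReal (P y x)) := by
        refine congrArg _ (tsum_congr fun y => ?_)
        rw [← ENNReal.tsum_mul_right]
        exact tsum_congr fun x => by ring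
    _ = ENNReal.ofReal ((m ^ n)⁻¹)
        * ∑' x, ENNReal.ofReal (f x) * ∑' y, L y * ENNReal.ofReal (P y x) := by
        rw [ENNReal.tsum_comm]
        exact congrArg _ (tsum_congr fun x => ENNReal.tsum_mul_left)
    _ = ENNReal.ofReal ((m ^ (n + 1))⁻¹)
        * ∑' x, ENNReal.ofReal (f x)
          * (ENNReal.ofReal m * ∑' y, L y * ENNReal.ofReal (P y x)) := by
        rw [show (∑' x, ENNReal.ofReal (f x)
            * (ENNReal.ofReal m * ∑' y, L y * ENNReal.ofReal (P y x)))
          = ENNReal.ofReal m * ∑' x, ENNReal.ofReal (f x)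
            * ∑' y, L y * ENNReal.ofReal (P y x) from by
            rw [← ENNReal.tsum_mul_left]
            exact tsum_congr fun x => by ring]
        rw [← mul_assoc, ← ENNReal.ofReal_mul (inv_nonneg.mpr (pow_nonneg hm0.le (n + 1)))]
        have hcm : (m ^ (n + 1))⁻¹ * m = (m ^ n)⁻¹ := by
          rw [pow_succ, mul_inv, mul_assoc, inv_mul_cancel₀ hm0.ne', mul_one]
        rw [hcm]

lemma Mf_supermartingale (hadapt : ∀ n x, Measurable[F n] (fun ω => B n ω x))
    (hfin : ∀ n ω, (Function.support (B n ω)).Finite)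
    (hint : ∀ n x, Integrable (fun ω => (B n ω x : ℝ)) μ)
    (hB0 : ∀ ω x, B 0 ω x = if x = o then 1 else 0)
    (hbranch : ∀ n x,
      μ[fun ω => (B (n + 1) ω x : ℝ)|F n]
        =ᵐ[μ] fun ω => m * ∑' y, (B n ω y : ℝ) * P y x)
    (hP0 : ∀ x y, 0 ≤ P x y) (hP1 : ∀ x, HasSum (fun y => P x y) 1) (hm : 1 < m)
    {f : S → ℝ} (hf0 : ∀ x, 0 ≤ f x) (hf1 : ∀ x, f x ≤ 1)
    (hsuper : ∀ x, ∑' y, P x y * f y ≤ f x) :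
    Supermartingale (Mf m B f) F μ := by
  have hm0 : (0:ℝ) < m := zero_lt_one.trans hm
  refine supermartingale_nat
    (fun n => (Mf_meas F B m hadapt hfin hf0 n).stronglyMeasurable)
    (fun n => Mf_int μ F B P m o hadapt hfin hint hB0 hbranch hP0 hP1 hm hf0 hf1 n)
    (fun n => ?_)
  have hce := condexp_Mf μ F B P m o hadapt hfin hint hB0 hbranch hP0 hP1 hm hf0 hf1 n
  filter_upwards [hce] with ω hω
  rw [← hω]
  refine mul_le_mul_of_nonneg_left ?_ (inv_nonneg.mpr (pow_nonneg hm0.le n))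
  refine Summable.tsum_le_tsum (fun x => ?_) (summable_mul_B B (hfin n ω)) (summable_mul_B B (hfin n ω))
  exact mul_le_mul_of_nonneg_right (hsuper x) (Nat.cast_nonneg _)

lemma Mf_zero (hB0 : ∀ ω x, B 0 ω x = if x = o then 1 else 0)
    (f : S → ℝ) (ω : Ω) : Mf m B f 0 ω = f o := by
  rw [Mf, pow_zero, inv_one, one_mul]
  have h1 : ∀ x : S, f x * (B 0 ω x : ℝ) = if x = o then f o else 0 := by
    intro x
    rw [hB0 ω x]
    split
    · rename_i hxo
      subst hxo
      simp
    · simp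
  rw [tsum_congr h1, tsum_eq_single o (fun b hb => by simp [hb])]
  simp

lemma integral_Mf_zero (hB0 : ∀ ω x, B 0 ω x = if x = o then 1 else 0)
    (f : S → ℝ) : ∫ ω, Mf m B f 0 ω ∂μ = f o := by
  rw [integral_congr_ae (Eventually.of_forall (Mf_zero B m o hB0 f)), integral_const]
  simp

lemma super_conv {M : ℕ → Ω → ℝ} (hsm : Supermartingale M F μ) (h0 : ∀ n ω, 0 ≤ M n ω) :
    (∀ᵐ ω ∂μ, Tendsto (fun n => M n ω) atTop
      (𝓝 ((Filter.liminf (fun n => ENNReal.ofReal (M n ω)) atTop).toReal))) ∧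
    ∫⁻ ω, Filter.liminf (fun n => ENNReal.ofReal (M n ω)) atTop ∂μ
      ≤ ENNReal.ofReal (∫ ω, M 0 ω ∂μ) := by
  have hmono : ∀ n, ∫ ω, M n ω ∂μ ≤ ∫ ω, M 0 ω ∂μ := by
    intro n
    calc ∫ ω, M n ω ∂μ = ∫ ω, (μ[M n|F 0]) ω ∂μ := (integral_condExp (F.le 0)).symm
      _ ≤ ∫ ω, M 0 ω ∂μ :=
          integral_mono_ae integrable_condExp (hsm.integrable 0) (hsm.2.1 0 n (Nat.zero_le n))
  have hlint : ∀ n, ∫⁻ ω, ENNReal.ofReal (M n ω) ∂μ = ENNReal.ofReal (∫ ω, M n ω ∂μ) :=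
    fun n => (ofReal_integral_eq_lintegral_ofReal (hsm.integrable n)
      (Eventually.of_forall fun ω => h0 n ω)).symm
  have hbdd' : ∀ n, eLpNorm ((-M) n) 1 μ ≤ (∫ ω, M 0 ω ∂μ).toNNReal := by
    intro n
    have hneg : (-M) n = -(M n) := rfl
    rw [hneg, eLpNorm_neg, eLpNorm_one_eq_lintegral_enorm]
    have hnn : ∀ ω : Ω, ‖M n ω‖ₑ = ENNReal.ofReal (M n ω) :=
      fun ω => Real.enorm_eq_ofReal (h0 n ω)
    rw [lintegral_congr hnn, hlint n]
    calc ENNReal.ofReal (∫ ω, M n ω ∂μ) ≤ ENNReal.ofReal (∫ ω, M 0 ω ∂μ) :=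
          ENNReal.ofReal_le_ofReal (hmono n)
      _ = ((∫ ω, M 0 ω ∂μ).toNNReal : ENNReal) := rfl
  have hconv := hsm.neg.exists_ae_tendsto_of_bdd hbdd'
  constructor
  · filter_upwards [hconv] with ω hω
    obtain ⟨c, hc⟩ := hω
    have hc' : Tendsto (fun n => M n ω) atTop (𝓝 (-c)) := by
      have h2 := hc.neg
      simp only [Pi.neg_apply, neg_neg] at h2
      exact h2
    have hge : 0 ≤ -c := ge_of_tendsto' hc' fun n => h0 n ω
    have hlim : Filter.liminf (fun n => ENNReal.ofReal (M n ω)) atTop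
        = ENNReal.ofReal (-c) :=
      ((ENNReal.continuous_ofReal.tendsto _).comp hc').liminf_eq
    rw [hlim, ENNReal.toReal_ofReal hge]
    exact hc'
  · calc ∫⁻ ω, Filter.liminf (fun n => ENNReal.ofReal (M n ω)) atTop ∂μ
        ≤ Filter.liminf (fun n => ∫⁻ ω, ENNReal.ofReal (M n ω) ∂μ) atTop :=
          lintegral_liminf_le fun n =>
            ((hsm.stronglyMeasurable n).measurable.mono (F.le n) le_rfl).ennreal_ofReal
      _ ≤ ENNReal.ofReal (∫ ω, M 0 ω ∂μ) := by
          refine Filter.liminf_le_of_frequently_le' (Filter.Frequently.of_forall fun n => ?_)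
          rw [hlint n]
          exact ENNReal.ofReal_le_ofReal (hmono n)

end BRWside

end BRW8


/-- Let `V ⊆ ∂` be closed and `h(x) := 𝐏ₓ(X_∞ ∈ V)`. Almost surely the
limit `limₙ ⟨h, B̄ₙ⟩` exists, and every subsequential weak limit `W` of the random measures
`B̄ₙ` on `C` satisfies `W(V) ≤ limₙ ⟨h, B̄ₙ⟩`. -/
theorem brw_closed_set_upper_bound
    {S : Type*} [Countable S] [DecidableEq S]
    (P : S → S → ℝ)
    (hP0 : ∀ x y, 0 ≤ P x y)
    (hP1 : ∀ x, HasSum (fun y => P x y) 1)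
    (m : ℝ) (hm : 1 < m) (o : S)
    {Ω : Type*} {mΩ : MeasurableSpace Ω}
    (μ : Measure Ω) [IsProbabilityMeasure μ]
    (F : Filtration ℕ mΩ)
    (B : ℕ → Ω → S → ℕ)
    (hadapt : ∀ n x, Measurable[F n] (fun ω => B n ω x))
    (hfin : ∀ n ω, (Function.support (B n ω)).Finite)
    (hint : ∀ n x, Integrable (fun ω => (B n ω x : ℝ)) μ)
    (hB0 : ∀ ω x, B 0 ω x = if x = o then 1 else 0)
    (hbranch : ∀ n x,
      μ[fun ω => (B (n + 1) ω x : ℝ)|F n]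
        =ᵐ[μ] fun ω => m * ∑' y, (B n ω y : ℝ) * P y x)
    {C : Type*} [TopologicalSpace C] [CompactSpace C]
    [TopologicalSpace.MetrizableSpace C] [MeasurableSpace C] [BorelSpace C]
    [TopologicalSpace S] [DiscreteTopology S]
    (ι : S → C) (hι : IsOpenEmbedding ι)
    [MeasurableSpace S] [MeasurableSingletonClass S]
    (Q : S → Measure (ℕ → S))
    (hQprob : ∀ x, IsProbabilityMeasure (Q x))
    (hQcyl : ∀ (x : S) (n : ℕ) (s : ℕ → S),
      Q x {ω | ∀ i ≤ n, ω i = s i} =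
        (if s 0 = x then 1 else 0) *
          ∏ i ∈ Finset.range n, ENNReal.ofReal (P (s i) (s (i + 1))))
    (Xinf : (ℕ → S) → C)
    (hXmeas : Measurable Xinf)
    (hXconv : ∀ x : S, ∀ᵐ ω ∂(Q x),
      Xinf ω ∈ (Set.range ι)ᶜ ∧ Tendsto (fun n => ι (ω n)) atTop (𝓝 (Xinf ω)))
    (V : Set C) (hVclosed : IsClosed V) (hVsub : V ⊆ (Set.range ι)ᶜ) :
    ∀ᵐ ω ∂μ, ∃ L : ℝ,
      Tendsto (fun n => (m ^ n)⁻¹ * ∑' x, (Q x (Xinf ⁻¹' V)).toReal * (B n ω x : ℝ))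
        atTop (𝓝 L) ∧
      ∀ W : Measure C, IsFiniteMeasure W →
        IsSubseqWeakLimit
          (fun n => brwMeasure ι fun x => ENNReal.ofReal ((m ^ n)⁻¹ * (B n ω x : ℝ))) W →
        W V ≤ ENNReal.ofReal L := by
  
  classical
  haveI : Nonempty S := ⟨o⟩
  letI : MetricSpace C := TopologicalSpace.metrizableSpaceMetric C
  have hm0 : (0:ℝ) < m := zero_lt_one.trans hm
  have hVmeas : MeasurableSet V := hVclosed.measurableSet
  have hXpre : MeasurableSet (Xinf ⁻¹' V) := hXmeas hVmeas
  -- trivial case `V = ∅`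
  rcases Set.eq_empty_or_nonempty V with hVemp | hVne
  · subst hVemp
    refine Eventually.of_forall fun ω => ⟨0, ?_, ?_⟩
    · have hzero : ∀ n : ℕ,
          (m ^ n)⁻¹ * ∑' x, (Q x (Xinf ⁻¹' (∅ : Set C))).toReal * (B n ω x : ℝ) = 0 := by
        intro n
        simp
      simp only [hzero]
      exact tendsto_const_nhds
    · intro W _ _
      simp
  -- main case
  have hQfin : ∀ (y : S) (A : Set (ℕ → S)), Q y A ≠ ⊤ := by
    intro y A
    haveI := hQprob y
    exact measure_ne_top _ _
  have hQle1 : ∀ (y : S) (A : Set (ℕ → S)), Q y A ≤ 1 := by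
    intro y A
    haveI := hQprob y
    exact prob_le_one
  set h : S → ℝ := fun x => (Q x (Xinf ⁻¹' V)).toReal with hh
  have hh0 : ∀ x, 0 ≤ h x := fun x => ENNReal.toReal_nonneg
  have hh1 : ∀ x, h x ≤ 1 := by
    intro x
    calc h x ≤ (1 : ENNReal).toReal := ENNReal.toReal_mono ENNReal.one_ne_top (hQle1 x _)
      _ = 1 := ENNReal.toReal_one
  -- measurability of the convergence event
  have hGmeas : MeasurableSet {ω' : ℕ → S | Xinf ω' ∈ (Set.range ι)ᶜ ∧
      Tendsto (fun n => ι (ω' n)) atTop (𝓝 (Xinf ω'))} := by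
    have h1 : MeasurableSet {ω' : ℕ → S | Xinf ω' ∈ (Set.range ι)ᶜ} :=
      hXmeas hι.isOpen_range.measurableSet.compl
    have hdist : ∀ n : ℕ, Measurable fun ω' : ℕ → S => dist (ι (ω' n)) (Xinf ω') :=
      fun n => ((measurable_of_countable ι).comp (measurable_pi_apply n)).dist hXmeas
    have h2 : {ω' : ℕ → S | Tendsto (fun n => ι (ω' n)) atTop (𝓝 (Xinf ω'))}
        = ⋂ (j : ℕ), ⋃ (N : ℕ), ⋂ (n : ℕ) (_ : N ≤ n),
            {ω' : ℕ → S | dist (ι (ω' n)) (Xinf ω') < 1 / ((j : ℝ) + 1)} := by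
      ext ω'
      simp only [Set.mem_setOf_eq, Set.mem_iInter, Set.mem_iUnion]
      constructor
      · intro ht j
        obtain ⟨N, hN⟩ := (Metric.tendsto_atTop.mp ht) (1 / ((j : ℝ) + 1)) (by positivity)
        exact ⟨N, fun n hn => hN n hn⟩
      · intro hω
        refine Metric.tendsto_atTop.mpr fun ε hε => ?_
        obtain ⟨j, hj⟩ := exists_nat_one_div_lt hε
        obtain ⟨N, hN⟩ := hω j
        exact ⟨N, fun n hn => (hN n hn).trans hj⟩
    rw [Set.setOf_and]
    refine h1.inter ?_
    rw [h2]
    exact MeasurableSet.iInter fun j => MeasurableSet.iUnion fun N =>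
      MeasurableSet.iInter fun n => MeasurableSet.iInter fun _ =>
        measurableSet_lt (hdist n) measurable_const
  -- the limit function commutes with the shift, a.e.
  have hGae : ∀ x : S, ∀ᵐ ω' ∂(Q x), Xinf (BRW8.shf ω') ∈ (Set.range ι)ᶜ ∧
      Tendsto (fun n => ι (BRW8.shf ω' n)) atTop (𝓝 (Xinf (BRW8.shf ω'))) := by
    intro x
    have h1 : ∀ᵐ ω' ∂((Q x).map BRW8.shf), Xinf ω' ∈ (Set.range ι)ᶜ ∧
        Tendsto (fun n => ι (ω' n)) atTop (𝓝 (Xinf ω')) := by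
      rw [BRW8.markov P hP0 hP1 Q hQprob hQcyl x]
      exact Measure.ae_sum_iff.mpr fun y => Measure.ae_smul_measure (hXconv y) _
    exact ae_of_ae_map BRW8.measurable_shf.aemeasurable h1
  have hshift_eq : ∀ x : S, ∀ᵐ ω' ∂(Q x), Xinf (BRW8.shf ω') = Xinf ω' := by
    intro x
    filter_upwards [hGae x, hXconv x] with ω' h1 h2
    have ht1 : Tendsto (fun n => ι (ω' (n + 1))) atTop (𝓝 (Xinf ω')) :=
      h2.2.comp (tendsto_add_atTop_nat 1)
    exact tendsto_nhds_unique h1.2 ht1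
  -- h is harmonic
  have hhar : ∀ x, Q x (Xinf ⁻¹' V) = ∑' y, ENNReal.ofReal (P x y) * Q y (Xinf ⁻¹' V) := by
    intro x
    rw [← BRW8.markov_apply P hP0 hP1 Q hQprob hQcyl x hXpre]
    refine measure_congr ?_
    rw [Filter.eventuallyEq_set]
    filter_upwards [hshift_eq x] with ω' hω'
    show (ω' ∈ Xinf ⁻¹' V) ↔ (ω' ∈ BRW8.shf ⁻¹' (Xinf ⁻¹' V))
    simp only [Set.mem_preimage]
    rw [hω']
  have hharR : ∀ x, h x = ∑' y, P x y * h y := by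
    intro x
    rw [hh]
    simp only
    rw [hhar x, ENNReal.tsum_toReal_eq
      (fun y => ENNReal.mul_ne_top ENNReal.ofReal_ne_top (hQfin y _))]
    exact tsum_congr fun y => by
      rw [ENNReal.toReal_mul, ENNReal.toReal_ofReal (hP0 x y)]
  -- neighborhoods of V and the hitting events
  set A : ℕ → Set S := fun k => {x | Metric.infDist (ι x) V < 1 / ((k : ℝ) + 1)} with hA
  set E : ℕ → Set (ℕ → S) := fun k => {ω' | ∃ n, ω' n ∈ A k} with hE
  have hEmeas : ∀ k, MeasurableSet (E k) := by
    intro k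
    have : E k = ⋃ n : ℕ, (fun ω' : ℕ → S => ω' n) ⁻¹' (A k) := by
      ext ω'; simp [hE]
    rw [this]
    exact MeasurableSet.iUnion fun n =>
      measurable_pi_apply n (MeasurableSet.of_discrete)
  have hAanti : ∀ k l : ℕ, k ≤ l → A l ⊆ A k := by
    intro k l hkl x hx
    simp only [hA, Set.mem_setOf_eq] at hx ⊢
    refine lt_of_lt_of_le hx ?_
    apply one_div_le_one_div_of_le
    · positivity
    · have : (k : ℝ) ≤ l := Nat.cast_le.mpr hkl
      linarith
  have hEanti : Antitone E := by
    intro k l hkl ω' hω'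
    obtain ⟨n, hn⟩ := hω'
    exact ⟨n, hAanti k l hkl hn⟩
  set sk : ℕ → S → ℝ := fun k x => (Q x (E k)).toReal with hsk
  have hsk0 : ∀ k x, 0 ≤ sk k x := fun k x => ENNReal.toReal_nonneg
  have hsk1' : ∀ k x, sk k x ≤ 1 := by
    intro k x
    calc sk k x ≤ (1 : ENNReal).toReal := ENNReal.toReal_mono ENNReal.one_ne_top (hQle1 x _)
      _ = 1 := ENNReal.toReal_one
  have hq1 : ∀ x : S, Q x {ω' : ℕ → S | ω' 0 = x} = 1 := by
    intro x
    have heq : {ω' : ℕ → S | ω' 0 = x} = {ω' : ℕ → S | ∀ i ≤ 0, ω' i = (fun _ => x) i} := by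
      ext ω'
      constructor
      · intro hω' i hi
        rw [Nat.le_zero.mp hi]
        exact hω'
      · intro hω'
        exact hω' 0 le_rfl
    rw [heq, hQcyl x 0 (fun _ => x)]
    simp
  have hsk_one : ∀ k x, x ∈ A k → sk k x = 1 := by
    intro k x hx
    have hle : Q x {ω' : ℕ → S | ω' 0 = x} ≤ Q x (E k) := by
      apply measure_mono
      intro ω' hω'
      exact ⟨0, by rw [Set.mem_setOf_eq] at hω'; rw [hω']; exact hx⟩
    rw [hq1 x] at hle
    have : Q x (E k) = 1 := le_antisymm (hQle1 x _) hle
    rw [hsk]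
    simp only [this, ENNReal.toReal_one]
  have hsk_super : ∀ k x, ∑' y, P x y * sk k y ≤ sk k x := by
    intro k x
    have hsub : BRW8.shf ⁻¹' E k ⊆ E k := by
      rintro ω' ⟨n, hn⟩
      exact ⟨n + 1, hn⟩
    have hEnn : ∑' y, ENNReal.ofReal (P x y) * Q y (E k) ≤ Q x (E k) := by
      rw [← BRW8.markov_apply P hP0 hP1 Q hQprob hQcyl x (hEmeas k)]
      exact measure_mono hsub
    have hrw : ∑' y, P x y * sk k y
        = (∑' y, ENNReal.ofReal (P x y) * Q y (E k)).toReal := by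
      rw [ENNReal.tsum_toReal_eq
        (fun y => ENNReal.mul_ne_top ENNReal.ofReal_ne_top (hQfin y _))]
      exact tsum_congr fun y => by
        rw [ENNReal.toReal_mul, ENNReal.toReal_ofReal (hP0 x y)]
    rw [hrw, hsk]
    exact ENNReal.toReal_mono (hQfin x _) hEnn
  have hhsk : ∀ k x, h x ≤ sk k x := by
    intro k x
    refine ENNReal.toReal_mono (hQfin x _) ?_
    refine measure_mono_ae ?_
    filter_upwards [hXconv x] with ω' hω' hmem
    have hXV : Xinf ω' ∈ V := hmem
    have hzero : Metric.infDist (Xinf ω') V = 0 := Metric.infDist_zero_of_mem hXV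
    have hconv2 : Tendsto (fun n => Metric.infDist (ι (ω' n)) V) atTop (𝓝 0) := by
      have := (Metric.continuous_infDist_pt V).tendsto (Xinf ω')
      rw [hzero] at this
      exact this.comp hω'.2
    have hev : ∀ᶠ n in atTop, Metric.infDist (ι (ω' n)) V < 1 / ((k : ℝ) + 1) :=
      hconv2.eventually_lt_const (by positivity)
    obtain ⟨n, hn⟩ := hev.exists
    exact ⟨n, hn⟩
  -- the intersection of the hitting events is contained in `{Xinf ∈ V}`, a.e.
  have hinter : Q o (⋂ k, E k) ≤ Q o (Xinf ⁻¹' V) := by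
    refine measure_mono_ae ?_
    filter_upwards [hXconv o] with ω' hω' hmem
    show Xinf ω' ∈ V
    by_contra hnot
    have hnotV : ∀ n : ℕ, ι (ω' n) ∉ V := by
      intro n hc
      exact (hVsub hc) ⟨ω' n, rfl⟩
    have hpos : ∀ n : ℕ, 0 < Metric.infDist (ι (ω' n)) V :=
      fun n => (hVclosed.notMem_iff_infDist_pos hVne).mp (hnotV n)
    have hδ : 0 < Metric.infDist (Xinf ω') V :=
      (hVclosed.notMem_iff_infDist_pos hVne).mp hnot
    have hconv2 : Tendsto (fun n => Metric.infDist (ι (ω' n)) V) atTop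
        (𝓝 (Metric.infDist (Xinf ω') V)) :=
      ((Metric.continuous_infDist_pt V).tendsto (Xinf ω')).comp hω'.2
    have hev : ∀ᶠ n in atTop,
        Metric.infDist (Xinf ω') V / 2 < Metric.infDist (ι (ω' n)) V :=
      hconv2.eventually_const_lt (half_lt_self hδ)
    obtain ⟨N, hN⟩ := eventually_atTop.mp hev
    set ε : ℝ := min (Metric.infDist (Xinf ω') V / 2)
      ((Finset.range (N + 1)).inf' (by simp) fun n => Metric.infDist (ι (ω' n)) V) with hε
    have hεpos : 0 < ε := by
      rw [hε]
      refine lt_min (half_pos hδ) ?_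
      rw [Finset.lt_inf'_iff]
      intro n _
      exact hpos n
    obtain ⟨k, hk⟩ := exists_nat_one_div_lt hεpos
    obtain ⟨n, hn⟩ := Set.mem_iInter.mp hmem k
    have hlt : Metric.infDist (ι (ω' n)) V < ε := lt_trans hn hk
    rcases le_or_gt n N with hnN | hNn
    · have : ε ≤ Metric.infDist (ι (ω' n)) V := by
        rw [hε]
        exact (min_le_right _ _).trans
          (Finset.inf'_le _ (Finset.mem_range.mpr (Nat.lt_succ_of_le hnN)))
      exact absurd hlt (not_lt.mpr this)
    · have h1 : Metric.infDist (Xinf ω') V / 2 < Metric.infDist (ι (ω' n)) V :=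
        hN n hNn.le
      have h2 : ε ≤ Metric.infDist (Xinf ω') V / 2 := by rw [hε]; exact min_le_left _ _
      linarith
  -- `g k := sk k - h` tends to zero at `o`
  set g : ℕ → S → ℝ := fun k x => sk k x - h x with hg
  have hg0 : ∀ k x, 0 ≤ g k x := fun k x => sub_nonneg.mpr (hhsk k x)
  have hg1 : ∀ k x, g k x ≤ 1 := by
    intro k x
    rw [hg]
    simp only
    have := hsk1' k x
    have := hh0 x
    linarith
  have hsummable_sk : ∀ k x, Summable fun y => P x y * sk k y := fun k x =>
    Summable.of_nonneg_of_le (fun y => mul_nonneg (hP0 x y) (hsk0 k y))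
      (fun y => mul_le_of_le_one_right (hP0 x y) (hsk1' k y)) (hP1 x).summable
  have hsummable_h : ∀ x, Summable fun y => P x y * h y := fun x =>
    Summable.of_nonneg_of_le (fun y => mul_nonneg (hP0 x y) (hh0 y))
      (fun y => mul_le_of_le_one_right (hP0 x y) (hh1 y)) (hP1 x).summable
  have hg_super : ∀ k x, ∑' y, P x y * g k y ≤ g k x := by
    intro k x
    have hrw : ∑' y, P x y * g k y = (∑' y, P x y * sk k y) - ∑' y, P x y * h y := by
      rw [← Summable.tsum_sub (hsummable_sk k x) (hsummable_h x)]
      exact tsum_congr fun y => by rw [hg]; ring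
    rw [hrw, hg]
    simp only
    have h1 := hsk_super k x
    have h2 := (hharR x).symm
    linarith [h2.le, h2.ge]
  have hgo_tendsto : Tendsto (fun k => ENNReal.ofReal (g k o)) atTop (𝓝 0) := by
    have htend : Tendsto (fun k => Q o (E k)) atTop (𝓝 (Q o (⋂ k, E k))) :=
      tendsto_measure_iInter_atTop (fun k => (hEmeas k).nullMeasurableSet) hEanti
        ⟨0, hQfin o _⟩
    have htendR : Tendsto (fun k => sk k o) atTop (𝓝 ((Q o (⋂ k, E k)).toReal)) :=
      (ENNReal.tendsto_toReal (hQfin o _)).comp htend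
    have h1 : Tendsto (fun k => g k o) atTop (𝓝 ((Q o (⋂ k, E k)).toReal - h o)) :=
      htendR.sub_const _
    have h2 : (Q o (⋂ k, E k)).toReal - h o ≤ 0 := by
      rw [sub_nonpos, hh]
      exact ENNReal.toReal_mono (hQfin o _) hinter
    have h3 := (ENNReal.continuous_ofReal.tendsto _).comp h1
    rwa [show ENNReal.ofReal ((Q o (⋂ k, E k)).toReal - h o) = 0 from
      ENNReal.ofReal_eq_zero.mpr h2] at h3
  -- supermartingales
  have hsm_h : Supermartingale (BRW8.Mf m B h) F μ :=
    BRW8.Mf_supermartingale μ F B P m o hadapt hfin hint hB0 hbranch hP0 hP1 hm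
      hh0 hh1 (fun x => (hharR x).ge)
  have hsm_g : ∀ k, Supermartingale (BRW8.Mf m B (g k)) F μ := fun k =>
    BRW8.Mf_supermartingale μ F B P m o hadapt hfin hint hB0 hbranch hP0 hP1 hm
      (hg0 k) (hg1 k) (hg_super k)
  have hconv_h := (BRW8.super_conv μ F hsm_h
    (fun n ω => BRW8.Mf_nonneg B m hh0 hm n ω)).1
  have hconv_g : ∀ k, ∀ᵐ ω ∂μ, Tendsto (fun n => BRW8.Mf m B (g k) n ω) atTop
      (𝓝 ((Filter.liminf (fun n => ENNReal.ofReal (BRW8.Mf m B (g k) n ω)) atTop).toReal)) :=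
    fun k => (BRW8.super_conv μ F (hsm_g k)
      (fun n ω => BRW8.Mf_nonneg B m (hg0 k) hm n ω)).1
  -- the liminf-process tends to `0` in the limit `k → ∞`
  have hDmeas : ∀ k, Measurable fun ω =>
      Filter.liminf (fun n => ENNReal.ofReal (BRW8.Mf m B (g k) n ω)) atTop := by
    intro k
    exact Measurable.liminf fun n =>
      ((BRW8.Mf_meas F B m hadapt hfin (hg0 k) n).mono (F.le n) le_rfl).ennreal_ofReal
  have hz : ∀ᵐ ω ∂μ,
      (⨅ k, Filter.liminf (fun n => ENNReal.ofReal (BRW8.Mf m B (g k) n ω)) atTop) = 0 := by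
    have hDle : ∀ k, ∫⁻ ω,
        Filter.liminf (fun n => ENNReal.ofReal (BRW8.Mf m B (g k) n ω)) atTop ∂μ
        ≤ ENNReal.ofReal (g k o) := by
      intro k
      have h1 := (BRW8.super_conv μ F (hsm_g k)
        (fun n ω => BRW8.Mf_nonneg B m (hg0 k) hm n ω)).2
      rwa [BRW8.integral_Mf_zero μ B m o hB0 (g k)] at h1
    have hint0 : ∫⁻ ω, (⨅ k, Filter.liminf
        (fun n => ENNReal.ofReal (BRW8.Mf m B (g k) n ω)) atTop) ∂μ = 0 := by
      refine le_antisymm ?_ zero_le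
      have hle2 : ∀ k, ∫⁻ ω, (⨅ k', Filter.liminf
          (fun n => ENNReal.ofReal (BRW8.Mf m B (g k') n ω)) atTop) ∂μ
          ≤ ENNReal.ofReal (g k o) :=
        fun k => (lintegral_mono fun ω => iInf_le _ k).trans (hDle k)
      have hle3 : ∫⁻ ω, (⨅ k', Filter.liminf
          (fun n => ENNReal.ofReal (BRW8.Mf m B (g k') n ω)) atTop) ∂μ
          ≤ Filter.liminf (fun k => ENNReal.ofReal (g k o)) atTop :=
        Filter.le_liminf_of_le (by isBoundedDefault)
          (Eventually.of_forall fun k => hle2 k)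
      rwa [hgo_tendsto.liminf_eq] at hle3
    have := (lintegral_eq_zero_iff (Measurable.iInf fun k => hDmeas k)).mp hint0
    filter_upwards [this] with ω hω
    exact hω
  -- the comparison functions on `C`
  have hfk : ∀ k : ℕ, ∃ fk : BoundedContinuousFunction C ℝ,
      (∀ c, 0 ≤ fk c) ∧ (∀ c, c ∈ V → fk c = 1) ∧ (∀ x : S, fk (ι x) ≤ sk k x) := by
    intro k
    have hcont : Continuous fun c : C => max (1 - ((k : ℝ) + 1) * Metric.infDist c V) 0 :=
      (continuous_const.sub (continuous_const.mul (Metric.continuous_infDist_pt V))).max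
        continuous_const
    refine ⟨BoundedContinuousFunction.mkOfCompact ⟨_, hcont⟩, ?_, ?_, ?_⟩
    · intro c
      simp only [BoundedContinuousFunction.mkOfCompact_apply, ContinuousMap.coe_mk]
      exact le_max_right _ _
    · intro c hc
      simp only [BoundedContinuousFunction.mkOfCompact_apply, ContinuousMap.coe_mk]
      rw [Metric.infDist_zero_of_mem hc]
      simp
    · intro x
      simp only [BoundedContinuousFunction.mkOfCompact_apply, ContinuousMap.coe_mk]
      by_cases hx : x ∈ A k
      · rw [hsk_one k x hx]
        refine max_le ?_ zero_le_one
        have : 0 ≤ ((k : ℝ) + 1) * Metric.infDist (ι x) V :=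
          mul_nonneg (by positivity) Metric.infDist_nonneg
        linarith
      · have hd : 1 / ((k : ℝ) + 1) ≤ Metric.infDist (ι x) V := by
          rw [hA] at hx
          exact not_lt.mp hx
        have h1 : (1 : ℝ) ≤ ((k : ℝ) + 1) * Metric.infDist (ι x) V := by
          have hk1 : (0:ℝ) < (k : ℝ) + 1 := by positivity
          calc (1:ℝ) = ((k : ℝ) + 1) * (1 / ((k : ℝ) + 1)) := by field_simp
            _ ≤ ((k : ℝ) + 1) * Metric.infDist (ι x) V :=
                mul_le_mul_of_nonneg_left hd hk1.le
        have : max (1 - ((k : ℝ) + 1) * Metric.infDist (ι x) V) 0 = 0 :=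
          max_eq_right (by linarith)
        rw [this]
        exact hsk0 k x
  -- the almost sure conclusion
  filter_upwards [hconv_h, ae_all_iff.mpr hconv_g, hz] with ω hωh hωg hωz
  set L : ℝ :=
    (Filter.liminf (fun n => ENNReal.ofReal (BRW8.Mf m B h n ω)) atTop).toReal with hL
  refine ⟨L, ?_, ?_⟩
  · have : (fun n => (m ^ n)⁻¹ * ∑' x, (Q x (Xinf ⁻¹' V)).toReal * (B n ω x : ℝ))
        = fun n => BRW8.Mf m B h n ω := by
      funext n
      rw [BRW8.Mf, hh]
    rw [this]
    exact hωh
  · intro W instW hW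
    obtain ⟨φ, hφmono, hφconv⟩ := hW
    -- a uniform bound for each k
    have hkey : ∀ k : ℕ, W V ≤ ENNReal.ofReal (L +
        (Filter.liminf (fun n => ENNReal.ofReal (BRW8.Mf m B (g k) n ω)) atTop).toReal) := by
      intro k
      obtain ⟨fk, hfk0, hfkV, hfkle⟩ := hfk k
      set ck : ℝ :=
        (Filter.liminf (fun n => ENNReal.ofReal (BRW8.Mf m B (g k) n ω)) atTop).toReal
        with hck
      -- `Mf (sk k) = Mf h + Mf (g k)` converges to `L + ck`
      have hsum_pt : ∀ n, BRW8.Mf m B (sk k) n ω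
          = BRW8.Mf m B h n ω + BRW8.Mf m B (g k) n ω := by
        intro n
        rw [BRW8.Mf, BRW8.Mf, BRW8.Mf, ← mul_add,
          ← Summable.tsum_add (BRW8.summable_mul_B B (hfin n ω)) (BRW8.summable_mul_B B (hfin n ω))]
        refine congrArg (fun z => (m ^ n)⁻¹ * z) (tsum_congr fun x => ?_)
        rw [hg]
        ring
      have hks : Tendsto (fun n => BRW8.Mf m B (sk k) n ω) atTop (𝓝 (L + ck)) := by
        have := hωh.add (hωg k)
        simp only [← hsum_pt] at this
        exact this
      -- integral bound against the random measures
      have hIb : ∀ n : ℕ, ∫ c, fk c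
          ∂(brwMeasure ι fun x => ENNReal.ofReal ((m ^ n)⁻¹ * (B n ω x : ℝ)))
          ≤ BRW8.Mf m B (sk k) n ω := by
        intro n
        have hfkmeas : Measurable fun c => ENNReal.ofReal (fk c) :=
          fk.continuous.measurable.ennreal_ofReal
        have hAq : ∫⁻ c, ENNReal.ofReal (fk c)
            ∂(brwMeasure ι fun x => ENNReal.ofReal ((m ^ n)⁻¹ * (B n ω x : ℝ)))
            = ∑' x, ENNReal.ofReal ((m ^ n)⁻¹ * (B n ω x : ℝ))
              * ENNReal.ofReal (fk (ι x)) := by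
          rw [brwMeasure, lintegral_sum_measure]
          exact tsum_congr fun x => by
            rw [lintegral_smul_measure, lintegral_dirac' _ hfkmeas, smul_eq_mul]
        have hsummable2 : Summable fun x => sk k x * ((m ^ n)⁻¹ * (B n ω x : ℝ)) := by
          refine summable_of_ne_finset_zero (s := (hfin n ω).toFinset) fun x hx => ?_
          have : B n ω x = 0 := by
            by_contra hB
            exact hx ((hfin n ω).mem_toFinset.mpr hB)
          simp [this]
        have hrepr : BRW8.Mf m B (sk k) n ω
            = ∑' x, sk k x * ((m ^ n)⁻¹ * (B n ω x : ℝ)) := by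
          rw [BRW8.Mf, ← tsum_mul_left]
          exact tsum_congr fun x => by ring
        have hCq : ∑' x, ENNReal.ofReal ((m ^ n)⁻¹ * (B n ω x : ℝ))
            * ENNReal.ofReal (fk (ι x))
            ≤ ENNReal.ofReal (BRW8.Mf m B (sk k) n ω) := by
          rw [hrepr, ENNReal.ofReal_tsum_of_nonneg
            (fun x => mul_nonneg (hsk0 k x)
              (mul_nonneg (inv_nonneg.mpr (pow_nonneg hm0.le n)) (Nat.cast_nonneg _)))
            hsummable2]
          refine ENNReal.tsum_le_tsum fun x => ?_
          rw [ENNReal.ofReal_mul (hsk0 k x)]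
          calc ENNReal.ofReal ((m ^ n)⁻¹ * (B n ω x : ℝ)) * ENNReal.ofReal (fk (ι x))
              ≤ ENNReal.ofReal ((m ^ n)⁻¹ * (B n ω x : ℝ)) * ENNReal.ofReal (sk k x) :=
                mul_le_mul_right (ENNReal.ofReal_le_ofReal (hfkle x)) _
            _ = ENNReal.ofReal (sk k x) * ENNReal.ofReal ((m ^ n)⁻¹ * (B n ω x : ℝ)) :=
                mul_comm _ _
        have hBq : ∫ c, fk c
            ∂(brwMeasure ι fun x => ENNReal.ofReal ((m ^ n)⁻¹ * (B n ω x : ℝ)))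
            = (∫⁻ c, ENNReal.ofReal (fk c)
              ∂(brwMeasure ι fun x => ENNReal.ofReal ((m ^ n)⁻¹ * (B n ω x : ℝ)))).toReal := by
          rw [integral_eq_lintegral_of_nonneg_ae (Eventually.of_forall hfk0)
            fk.continuous.measurable.aestronglyMeasurable]
        rw [hBq, hAq]
        calc (∑' x, ENNReal.ofReal ((m ^ n)⁻¹ * (B n ω x : ℝ))
              * ENNReal.ofReal (fk (ι x))).toReal
            ≤ (ENNReal.ofReal (BRW8.Mf m B (sk k) n ω)).toReal :=
              ENNReal.toReal_mono ENNReal.ofReal_ne_top hCq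
          _ = BRW8.Mf m B (sk k) n ω :=
              ENNReal.toReal_ofReal (BRW8.Mf_nonneg B m (hsk0 k) hm n ω)
      -- pass to the limit along the subsequence
      have hWk : ∫ c, fk c ∂W ≤ L + ck := by
        refine le_of_tendsto_of_tendsto' (hφconv fk)
          (hks.comp hφmono.tendsto_atTop) fun j => hIb (φ j)
      -- portmanteau-type estimate
      have hWV : W V ≤ ENNReal.ofReal (∫ c, fk c ∂W) := by
        have h1 : W V = ∫⁻ _ in V, (1 : ENNReal) ∂W := (setLIntegral_one V).symm
        have h2 : ∫⁻ _ in V, (1 : ENNReal) ∂W ≤ ∫⁻ c in V, ENNReal.ofReal (fk c) ∂W := by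
          refine setLIntegral_mono fk.continuous.measurable.ennreal_ofReal fun c hc => ?_
          rw [hfkV c hc]
          simp
        have h3 : ∫⁻ c in V, ENNReal.ofReal (fk c) ∂W ≤ ∫⁻ c, ENNReal.ofReal (fk c) ∂W :=
          lintegral_mono' Measure.restrict_le_self le_rfl
        have h4 : ∫⁻ c, ENNReal.ofReal (fk c) ∂W = ENNReal.ofReal (∫ c, fk c ∂W) :=
          (ofReal_integral_eq_lintegral_ofReal (fk.integrable W)
            (Eventually.of_forall hfk0)).symm
        rw [h1]
        exact (h2.trans h3).trans_eq h4
      exact hWV.trans (ENNReal.ofReal_le_ofReal hWk)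
    -- let `k → ∞`
    have hεbound : ∀ ε : ℝ, 0 < ε → W V ≤ ENNReal.ofReal (L + ε) := by
      intro ε hε
      have h1 : (⨅ k, Filter.liminf
          (fun n => ENNReal.ofReal (BRW8.Mf m B (g k) n ω)) atTop) < ENNReal.ofReal ε := by
        rw [hωz]
        exact ENNReal.ofReal_pos.mpr hε
      obtain ⟨k, hk⟩ := iInf_lt_iff.mp h1
      have hck : (Filter.liminf (fun n => ENNReal.ofReal (BRW8.Mf m B (g k) n ω)) atTop).toReal
          < ε := ENNReal.toReal_lt_of_lt_ofReal hk
      exact (hkey k).trans (ENNReal.ofReal_le_ofReal (by linarith))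
    have htend : Tendsto (fun j : ℕ => ENNReal.ofReal (L + 1 / ((j : ℝ) + 1))) atTop
        (𝓝 (ENNReal.ofReal L)) := by
      have h1 : Tendsto (fun j : ℕ => L + 1 / ((j : ℝ) + 1)) atTop (𝓝 L) := by
        have h0 : Tendsto (fun j : ℕ => 1 / ((j : ℝ) + 1)) atTop (𝓝 0) :=
          tendsto_one_div_add_atTop_nhds_zero_nat
        have h2 : Tendsto (fun j : ℕ => L + 1 / ((j : ℝ) + 1)) atTop (𝓝 (L + 0)) :=
          tendsto_const_nhds.add h0
        simpa using h2
      have := (ENNReal.continuous_ofReal.tendsto L).comp h1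
      exact this
    refine ge_of_tendsto htend (Eventually.of_forall fun j => hεbound _ (by positivity))
end

section
/- Let ∂_harm denote the support of the law of X_∞ under 𝐏_o, i.e. the smallest closed subset of ∂ with 𝐏_o(X_∞ ∈ ∂_harm) = 1. Then almost surely, every subsequential weak limit W of the sequence of random finite measures (B̄_n)_{n≥0} on C is supported on ∂_harm, that is, W(C ∖ ∂_harm) = 0. -/
open MeasureTheory Filter Topology ENNReal
set_option linter.unusedSectionVars false
set_option maxHeartbeats 1600000

namespace BRWaux

variable {S : Type*} [Countable S] [DecidableEq S] [MeasurableSpace S] [MeasurableSingletonClass S]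

lemma measurableSet_all (s : Set S) : MeasurableSet s :=
  s.to_countable.measurableSet

/-- prefix cylinder -/
def cyl (n : ℕ) (s : ℕ → S) : Set (ℕ → S) := {ω | ∀ i ≤ n, ω i = s i}

lemma measurableSet_cyl (n : ℕ) (s : ℕ → S) : MeasurableSet (cyl n s) := by
  have : cyl n s = ⋂ i ∈ Finset.range (n + 1), (fun ω : ℕ → S => ω i) ⁻¹' {s i} := by
    ext ω
    simp [cyl, Nat.lt_succ_iff]
  rw [this]
  exact MeasurableSet.biInter (Set.to_countable _)
    (fun i _ => (measurable_pi_apply i) (measurableSet_all _))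

lemma isPiSystem_cyl : IsPiSystem {t : Set (ℕ → S) | ∃ n s, t = cyl n s} := by
  rintro _ ⟨n, s, rfl⟩ _ ⟨n', s', rfl⟩ ⟨ω₀, hω₀⟩
  refine ⟨max n n', ω₀, ?_⟩
  obtain ⟨h1, h2⟩ := hω₀
  ext ω
  constructor
  · rintro ⟨g1, g2⟩ i hi
    rcases le_max_iff.mp hi with h | h
    · rw [g1 i h, ← h1 i h]
    · rw [g2 i h, ← h2 i h]
  · intro hg
    constructor
    · intro i hi
      rw [hg i (le_trans hi (le_max_left _ _)), h1 i hi]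
    · intro i hi
      rw [hg i (le_trans hi (le_max_right _ _)), h2 i hi]

lemma pi_eq_generateFrom_cyl :
    (inferInstance : MeasurableSpace (ℕ → S)) =
      MeasurableSpace.generateFrom {t : Set (ℕ → S) | ∃ n s, t = cyl n s} := by
  refine le_antisymm ?_ ?_
  · -- pi ≤ generateFrom
    refine iSup_le fun i => ?_
    rw [MeasurableSpace.comap_le_iff_le_map]
    intro t _
    show MeasurableSet[MeasurableSpace.generateFrom {t : Set (ℕ → S) | ∃ n s, t = cyl n s}]
      ((fun ω : ℕ → S => ω i) ⁻¹' t)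
    have hsingle : ∀ a : S,
        MeasurableSet[MeasurableSpace.generateFrom {t : Set (ℕ → S) | ∃ n s, t = cyl n s}]
          ((fun ω : ℕ → S => ω i) ⁻¹' {a}) := by
      intro a
      have : (fun ω : ℕ → S => ω i) ⁻¹' {a} =
          ⋃ v : Fin i → S, cyl i (fun j => if h : j < i then v ⟨j, h⟩ else a) := by
        ext ω
        simp only [Set.mem_preimage, Set.mem_singleton_iff, Set.mem_iUnion]
        constructor
        · intro h
          refine ⟨fun j => ω j, fun j hj => ?_⟩
          by_cases h' : j < i
          · simp [h']
          · have hji : j = i := by omega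
            simp [hji, h]
        · rintro ⟨v, hv⟩
          have := hv i le_rfl
          simpa using this
      rw [this]
      exact MeasurableSet.iUnion fun v =>
        MeasurableSpace.measurableSet_generateFrom ⟨i, _, rfl⟩
    have : (fun ω : ℕ → S => ω i) ⁻¹' t = ⋃ a ∈ t, (fun ω : ℕ → S => ω i) ⁻¹' {a} := by
      rw [Set.biUnion_preimage_singleton]
    rw [this]
    exact MeasurableSet.biUnion (Set.to_countable t) fun a _ => hsingle a
  · exact MeasurableSpace.generateFrom_le (by rintro _ ⟨n, s, rfl⟩; exact measurableSet_cyl n s)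


/-- prepend -/
def cns (y : S) (s : ℕ → S) : ℕ → S
  | 0 => y
  | (i + 1) => s i

/-- the shift on trajectories -/
def shft : (ℕ → S) → ℕ → S := fun ω n => ω (n + 1)

lemma measurable_shft : Measurable (shft (S := S)) :=
  measurable_pi_lambda _ fun n => measurable_pi_apply (n + 1)

lemma shft_iterate (n : ℕ) (ω : ℕ → S) (j : ℕ) : (shft^[n]) ω j = ω (j + n) := by
  induction n generalizing ω j with
  | zero => rfl
  | succ n ih =>
    rw [Function.iterate_succ_apply, ih]
    show ω (j + n + 1) = ω (j + (n + 1))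
    rw [Nat.add_assoc]

variable (P : S → S → ℝ) (Q : S → Measure (ℕ → S))

lemma rowsum_one (hP0 : ∀ x y, 0 ≤ P x y) (hP1 : ∀ x, HasSum (fun y => P x y) 1) (x : S) :
    ∑' y, ENNReal.ofReal (P x y) = 1 := by
  rw [← ENNReal.ofReal_tsum_of_nonneg (hP0 x) (hP1 x).summable, (hP1 x).tsum_eq,
    ENNReal.ofReal_one]

theorem shift_eq (hP0 : ∀ x y, 0 ≤ P x y) (hP1 : ∀ x, HasSum (fun y => P x y) 1)
    (hQprob : ∀ x, IsProbabilityMeasure (Q x))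
    (hQcyl : ∀ (x : S) (n : ℕ) (s : ℕ → S),
      Q x {ω | ∀ i ≤ n, ω i = s i} =
        (if s 0 = x then 1 else 0) *
          ∏ i ∈ Finset.range n, ENNReal.ofReal (P (s i) (s (i + 1))))
    (x : S) :
    (Q x).map shft = Measure.sum (fun y => ENNReal.ofReal (P x y) • Q y) := by
  have hQcyl' : ∀ (x : S) (n : ℕ) (s : ℕ → S),
      Q x (cyl n s) = (if s 0 = x then 1 else 0) *
          ∏ i ∈ Finset.range n, ENNReal.ofReal (P (s i) (s (i + 1))) := hQcyl
  haveI : IsProbabilityMeasure ((Q x).map shft) :=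
    Measure.isProbabilityMeasure_map measurable_shft.aemeasurable
  haveI : IsFiniteMeasure (Measure.sum (fun y => ENNReal.ofReal (P x y) • Q y)) := by
    constructor
    rw [Measure.sum_apply _ MeasurableSet.univ]
    simp only [Measure.smul_apply, smul_eq_mul, measure_univ, mul_one]
    rw [rowsum_one P hP0 hP1 x]
    exact ENNReal.one_lt_top
  refine ext_of_generate_finite _ pi_eq_generateFrom_cyl isPiSystem_cyl ?_ ?_
  · rintro _ ⟨n, s, rfl⟩
    -- LHS
    have hpre : shft ⁻¹' cyl n s = ⋃ y : S, cyl (n + 1) (cns y s) := by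
      ext ω
      simp only [Set.mem_preimage, cyl, Set.mem_setOf_eq, Set.mem_iUnion, shft]
      constructor
      · intro h
        refine ⟨ω 0, fun i hi => ?_⟩
        match i with
        | 0 => rfl
        | (j + 1) => exact h j (Nat.succ_le_succ_iff.mp hi)
      · rintro ⟨y, hy⟩ i hi
        exact hy (i + 1) (Nat.succ_le_succ hi)
    have hdisj : Pairwise (Function.onFun Disjoint
        fun y : S => cyl (n + 1) (cns y s)) := by
      intro y y' hyy'
      refine Set.disjoint_left.mpr fun ω h1 h2 => hyy' ?_
      have e1 := h1 0 (Nat.zero_le _)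
      have e2 := h2 0 (Nat.zero_le _)
      exact e1.symm.trans e2
    have hcylval : ∀ y : S, Q x (cyl (n + 1) (cns y s)) =
        (if y = x then 1 else 0) * (ENNReal.ofReal (P y (s 0)) *
          ∏ i ∈ Finset.range n, ENNReal.ofReal (P (s i) (s (i + 1)))) := by
      intro y
      rw [hQcyl' x (n + 1) _]
      congr 1
      rw [Finset.prod_range_succ', mul_comm]
      rfl
    rw [Measure.map_apply measurable_shft (measurableSet_cyl n s), hpre,
      measure_iUnion hdisj (fun y => measurableSet_cyl _ _)]
    rw [Measure.sum_apply _ (measurableSet_cyl n s)]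
    rw [tsum_eq_single x (by
      intro y hy
      rw [hcylval y, if_neg hy, zero_mul])]
    rw [hcylval x, if_pos rfl, one_mul]
    -- RHS side computation
    have : ∀ y : S, (ENNReal.ofReal (P x y) • Q y) (cyl n s)
        = ENNReal.ofReal (P x y) * ((if s 0 = y then 1 else 0) *
            ∏ i ∈ Finset.range n, ENNReal.ofReal (P (s i) (s (i + 1)))) := by
      intro y
      rw [Measure.smul_apply, smul_eq_mul, hQcyl' y n s]
    rw [tsum_congr this, tsum_eq_single (s 0) (by
      intro y hy
      rw [if_neg (fun h => hy h.symm), zero_mul, mul_zero])]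
    rw [if_pos rfl, one_mul]
  · rw [measure_univ]
    rw [Measure.sum_apply _ MeasurableSet.univ]
    simp only [Measure.smul_apply, smul_eq_mul, measure_univ, mul_one]
    rw [rowsum_one P hP0 hP1 x]

theorem shift_apply (hP0 : ∀ x y, 0 ≤ P x y) (hP1 : ∀ x, HasSum (fun y => P x y) 1)
    (hQprob : ∀ x, IsProbabilityMeasure (Q x))
    (hQcyl : ∀ (x : S) (n : ℕ) (s : ℕ → S),
      Q x {ω | ∀ i ≤ n, ω i = s i} =
        (if s 0 = x then 1 else 0) *
          ∏ i ∈ Finset.range n, ENNReal.ofReal (P (s i) (s (i + 1))))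
    (x : S) {E : Set (ℕ → S)} (hE : MeasurableSet E) :
    Q x (shft ⁻¹' E) = ∑' y, ENNReal.ofReal (P x y) * Q y E := by
  rw [← Measure.map_apply measurable_shft hE, shift_eq P Q hP0 hP1 hQprob hQcyl x,
    Measure.sum_apply _ hE]
  simp only [Measure.smul_apply, smul_eq_mul]


lemma summable_mul_B (v : S → ℝ) (b : S → ℕ) (hb : (Function.support b).Finite) :
    Summable (fun x => v x * (b x : ℝ)) := by
  refine summable_of_ne_finset_zero (s := hb.toFinset) fun x hx => ?_
  have hbx : b x = 0 := by
    by_contra h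
    exact hx (hb.mem_toFinset.mpr h)
  simp [hbx]

lemma ofReal_scaled_tsum (c : ℝ) (hc : 0 ≤ c) (v : S → ℝ) (hv : ∀ x, 0 ≤ v x)
    (b : S → ℕ) (hb : (Function.support b).Finite) :
    ENNReal.ofReal (c * ∑' x, v x * (b x : ℝ)) =
      ENNReal.ofReal c * ∑' x, ENNReal.ofReal (v x) * (b x : ℝ≥0∞) := by
  rw [ENNReal.ofReal_mul hc,
    ENNReal.ofReal_tsum_of_nonneg (fun x => mul_nonneg (hv x) (Nat.cast_nonneg _))
      (summable_mul_B v b hb)]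
  refine congrArg _ (tsum_congr fun x => ?_)
  rw [ENNReal.ofReal_mul (hv x), ENNReal.ofReal_natCast]

lemma toReal_scaled_tsum (c : ℝ) (hc : 0 ≤ c) (v : S → ℝ) (hv : ∀ x, 0 ≤ v x)
    (b : S → ℕ) (hb : (Function.support b).Finite) :
    c * ∑' x, v x * (b x : ℝ) =
      (ENNReal.ofReal c * ∑' x, ENNReal.ofReal (v x) * (b x : ℝ≥0∞)).toReal := by
  rw [← ofReal_scaled_tsum c hc v hv b hb, ENNReal.toReal_ofReal]
  exact mul_nonneg hc (tsum_nonneg fun x => mul_nonneg (hv x) (Nat.cast_nonneg _))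

variable {Ω : Type*} {mΩ : MeasurableSpace Ω}

lemma measurable_B_coe {B : Ω → S → ℕ} (hB : ∀ y, Measurable fun ω => B ω y) (y : S) :
    Measurable fun ω => (B ω y : ℝ≥0∞) :=
  measurable_from_top.comp (hB y)

/-- the generic lintegral computation for scaled sums against the population -/
lemma lint_eq (μ' : Measure Ω) (c : ℝ) (hc : 0 ≤ c) (v : S → ℝ) (hv : ∀ x, 0 ≤ v x)
    (B : Ω → S → ℕ) (hfin : ∀ ω, (Function.support (B ω)).Finite)
    (hB : ∀ y, Measurable fun ω => B ω y) :
    ∫⁻ ω, ENNReal.ofReal (c * ∑' x, v x * (B ω x : ℝ)) ∂μ' =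
      ENNReal.ofReal c * ∑' x, ENNReal.ofReal (v x) * ∫⁻ ω, (B ω x : ℝ≥0∞) ∂μ' := by
  have h1 : ∀ ω, ENNReal.ofReal (c * ∑' x, v x * (B ω x : ℝ)) =
      ENNReal.ofReal c * ∑' x, ENNReal.ofReal (v x) * (B ω x : ℝ≥0∞) := fun ω =>
    ofReal_scaled_tsum c hc v hv (B ω) (hfin ω)
  rw [lintegral_congr h1, lintegral_const_mul' _ _ ENNReal.ofReal_ne_top,
    lintegral_tsum fun x => ((measurable_B_coe hB x).const_mul _).aemeasurable]
  exact congrArg _ (tsum_congr fun x => lintegral_const_mul' _ _ ENNReal.ofReal_ne_top)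

/-- one-step recursion for the lintegrals of the population, for a generic measure `μ'`. -/
lemma lint_step (P : S → S → ℝ) (hP0 : ∀ x y, 0 ≤ P x y) (μ' : Measure Ω)
    (m : ℝ) (hm : 0 < m) (B B' : Ω → S → ℕ)
    (hfin : ∀ ω, (Function.support (B ω)).Finite)
    (hB : ∀ y, Measurable fun ω => B ω y) (x : S)
    (hi1 : Integrable (fun ω => (B' ω x : ℝ)) μ')
    (hi2 : Integrable (fun ω => m * ∑' y, (B ω y : ℝ) * P y x) μ')
    (heq : ∫ ω, (B' ω x : ℝ) ∂μ' = ∫ ω, m * ∑' y, (B ω y : ℝ) * P y x ∂μ') :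
    ∫⁻ ω, (B' ω x : ℝ≥0∞) ∂μ' =
      ENNReal.ofReal m * ∑' y, ENNReal.ofReal (P y x) * ∫⁻ ω, (B ω y : ℝ≥0∞) ∂μ' := by
  have h0 : ∫⁻ ω, (B' ω x : ℝ≥0∞) ∂μ' = ∫⁻ ω, ENNReal.ofReal ((B' ω x : ℝ)) ∂μ' := by
    refine lintegral_congr fun ω => ?_
    rw [ENNReal.ofReal_natCast]
  rw [h0, ← ofReal_integral_eq_lintegral_ofReal hi1 (ae_of_all _ fun ω => Nat.cast_nonneg _),
    heq, ofReal_integral_eq_lintegral_ofReal hi2 (ae_of_all _ fun ω =>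
      mul_nonneg hm.le (tsum_nonneg fun y => mul_nonneg (Nat.cast_nonneg _) (hP0 y x)))]
  have h1 : ∀ ω, ENNReal.ofReal (m * ∑' y, (B ω y : ℝ) * P y x) =
      ENNReal.ofReal m * ∑' y, ENNReal.ofReal (P y x) * (B ω y : ℝ≥0∞) := by
    intro ω
    have : ∀ y, (B ω y : ℝ) * P y x = P y x * (B ω y : ℝ) := fun y => mul_comm _ _
    rw [tsum_congr this, ofReal_scaled_tsum m hm.le (fun y => P y x) (fun y => hP0 y x)
      (B ω) (hfin ω)]
  rw [lintegral_congr h1, lintegral_const_mul' _ _ ENNReal.ofReal_ne_top,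
    lintegral_tsum fun y => ((measurable_B_coe hB y).const_mul _).aemeasurable]
  exact congrArg _ (tsum_congr fun y => lintegral_const_mul' _ _ ENNReal.ofReal_ne_top)


/-- ENNReal tsum rearrangement helper -/
lemma swap_helper (c : ℝ≥0∞) (f h : S → ℝ≥0∞) (g : S → S → ℝ≥0∞) :
    ∑' x, f x * (c * ∑' y, g y x * h y) = c * ∑' y, h y * ∑' x, g y x * f x := by
  calc ∑' x, f x * (c * ∑' y, g y x * h y)
      = ∑' x, ∑' y, c * (g y x * (f x * h y)) := by
        refine tsum_congr fun x => ?_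
        rw [← ENNReal.tsum_mul_left, ← ENNReal.tsum_mul_left]
        exact tsum_congr fun y => by ring
    _ = ∑' y, ∑' x, c * (g y x * (f x * h y)) := ENNReal.tsum_comm
    _ = c * ∑' y, h y * ∑' x, g y x * f x := by
        rw [← ENNReal.tsum_mul_left]
        refine tsum_congr fun y => ?_
        rw [← ENNReal.tsum_mul_left, ← ENNReal.tsum_mul_left]
        exact tsum_congr fun x => by ring

theorem key
    (P : S → S → ℝ) (hP0 : ∀ x y, 0 ≤ P x y) (hP1 : ∀ x, HasSum (fun y => P x y) 1)
    (m : ℝ) (hm : 1 < m) (o : S)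
    {Ω : Type*} {mΩ : MeasurableSpace Ω}
    (μ : Measure Ω) [IsProbabilityMeasure μ] (F : Filtration ℕ mΩ)
    (B : ℕ → Ω → S → ℕ)
    (hadapt : ∀ n x, Measurable[F n] fun ω => B n ω x)
    (hfin : ∀ n ω, (Function.support (B n ω)).Finite)
    (hint : ∀ n x, Integrable (fun ω => (B n ω x : ℝ)) μ)
    (hB0 : ∀ ω x, B 0 ω x = if x = o then 1 else 0)
    (hbranch : ∀ n x,
      μ[fun ω => (B (n + 1) ω x : ℝ)|F n]
        =ᵐ[μ] fun ω => m * ∑' y, (B n ω y : ℝ) * P y x)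
    (Q : S → Measure (ℕ → S))
    (hQprob : ∀ x, IsProbabilityMeasure (Q x))
    (hQcyl : ∀ (x : S) (n : ℕ) (s : ℕ → S),
      Q x {ω | ∀ i ≤ n, ω i = s i} =
        (if s 0 = x then 1 else 0) *
          ∏ i ∈ Finset.range n, ENNReal.ofReal (P (s i) (s (i + 1))))
    (A : Set S)
    (hQA : Tendsto (fun n => Q o {ω : ℕ → S | ∃ j, ω (j + n) ∈ A}) atTop (𝓝 0)) :
    ∀ᵐ ω ∂μ, Tendsto
      (fun n => (m ^ n)⁻¹ * ∑' x, A.indicator (fun _ => (1:ℝ)) x * (B n ω x : ℝ))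
      atTop (𝓝 0) := by
  classical
  haveI := hQprob
  have hm0 : (0:ℝ) < m := lt_trans one_pos hm
  have hmn : ∀ n, (0:ℝ) < (m ^ n)⁻¹ := fun n => inv_pos.mpr (pow_pos hm0 n)
  -- hitting event
  set E : Set (ℕ → S) := ⋃ j, (fun ω : ℕ → S => ω j) ⁻¹' A with hE_def
  have hEmeas : MeasurableSet E :=
    MeasurableSet.iUnion fun j => (measurable_pi_apply j) (measurableSet_all A)
  -- u and pu
  set u : S → ℝ := fun x => (Q x E).toReal with hu_def
  have hQE_ne : ∀ x, Q x E ≠ ∞ := fun x => (lt_of_le_of_lt prob_le_one ENNReal.one_lt_top).ne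
  have hu0 : ∀ x, 0 ≤ u x := fun x => ENNReal.toReal_nonneg
  have hu1 : ∀ x, u x ≤ 1 := by
    intro x
    have h := ENNReal.toReal_mono (by simp) (prob_le_one (μ := Q x) (s := E))
    simpa using h
  have hofRealu : ∀ x, ENNReal.ofReal (u x) = Q x E := fun x => ENNReal.ofReal_toReal (hQE_ne x)
  have huA : ∀ x ∈ A, u x = 1 := by
    intro x hx
    have h1 : Q x {ω : ℕ → S | ∀ i ≤ 0, ω i = (fun _ => x) i} = 1 := by
      rw [hQcyl]; simp
    have hsub : {ω : ℕ → S | ∀ i ≤ 0, ω i = (fun _ => x) i} ⊆ E := by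
      intro ω hω
      refine Set.mem_iUnion.mpr ⟨0, ?_⟩
      rw [Set.mem_preimage, hω 0 le_rfl]
      exact hx
    have hQxE : Q x E = 1 := le_antisymm prob_le_one (h1 ▸ measure_mono hsub)
    rw [hu_def]
    simp [hQxE]
  have hshiftsub : shft ⁻¹' E ⊆ E := by
    intro ω hω
    rcases Set.mem_iUnion.mp hω with ⟨j, hj⟩
    exact Set.mem_iUnion.mpr ⟨j + 1, hj⟩
  set pu : S → ℝ := fun x => ∑' y, P x y * u y with hpu_def
  have hpu_sum : ∀ x, Summable fun y => P x y * u y := fun x =>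
    Summable.of_nonneg_of_le (fun y => mul_nonneg (hP0 x y) (hu0 y))
      (fun y => by nlinarith [hu1 y, hu0 y, hP0 x y]) (hP1 x).summable
  have hpu0 : ∀ x, 0 ≤ pu x := fun x => tsum_nonneg fun y => mul_nonneg (hP0 x y) (hu0 y)
  have hofRealpu : ∀ x, ENNReal.ofReal (pu x) = ∑' y, ENNReal.ofReal (P x y) * ENNReal.ofReal (u y) := by
    intro x
    rw [hpu_def]
    rw [ENNReal.ofReal_tsum_of_nonneg (fun y => mul_nonneg (hP0 x y) (hu0 y)) (hpu_sum x)]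
    exact tsum_congr fun y => ENNReal.ofReal_mul (hP0 x y)
  have hpuQ : ∀ x, ENNReal.ofReal (pu x) = Q x (shft ⁻¹' E) := by
    intro x
    rw [hofRealpu, shift_apply P Q hP0 hP1 hQprob hQcyl x hEmeas]
    exact tsum_congr fun y => by rw [hofRealu]
  have hpu_le : ∀ x, pu x ≤ u x := by
    intro x
    have h : ENNReal.ofReal (pu x) ≤ ENNReal.ofReal (u x) := by
      rw [hpuQ, hofRealu]
      exact measure_mono hshiftsub
    exact (ENNReal.ofReal_le_ofReal_iff (hu0 x)).mp h
  have hpu1 : ∀ x, pu x ≤ 1 := fun x => le_trans (hpu_le x) (hu1 x)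
  -- ambient measurability of B
  have hBmeas : ∀ n y, Measurable fun ω => B n ω y := fun n y => (hadapt n y).mono (F.le n) le_rfl
  -- measurability of scaled sums
  have hMeasGen : ∀ (v : S → ℝ), (∀ x, 0 ≤ v x) → ∀ (c : ℝ), 0 ≤ c → ∀ (n : ℕ)
      (m' : MeasurableSpace Ω), (∀ y, Measurable[m'] fun ω => B n ω y) →
      Measurable[m'] fun ω => c * ∑' x, v x * (B n ω x : ℝ) := by
    intro v hv c hc n m' hBm
    have heq : (fun ω => c * ∑' x, v x * (B n ω x : ℝ)) =
        fun ω => (ENNReal.ofReal c * ∑' x, ENNReal.ofReal (v x) * (B n ω x : ℝ≥0∞)).toReal := by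
      funext ω
      exact toReal_scaled_tsum c hc v hv (B n ω) (hfin n ω)
    rw [heq]
    refine ENNReal.measurable_toReal.comp ?_
    refine Measurable.const_mul ?_ _
    exact Measurable.ennreal_tsum fun x =>
      (measurable_from_top.comp (hBm x)).const_mul _
  -- L
  set L : ℕ → S → ℝ≥0∞ := fun n x => ∫⁻ ω, (B n ω x : ℝ≥0∞) ∂μ with hL_def
  have hL0 : ∀ x, L 0 x = if x = o then 1 else 0 := by
    intro x
    have h : ∀ ω : Ω, ((B 0 ω x : ℕ) : ℝ≥0∞) = if x = o then 1 else 0 := by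
      intro ω
      rw [hB0 ω x]
      split <;> simp
    rw [hL_def]
    simp only
    rw [lintegral_congr h]
    split <;> simp
  have hintRHS : ∀ n x, Integrable (fun ω => m * ∑' y, (B n ω y : ℝ) * P y x) μ :=
    fun n x => integrable_condExp.congr (hbranch n x)
  have hL_rec : ∀ n x, L (n+1) x = ENNReal.ofReal m * ∑' y, ENNReal.ofReal (P y x) * L n y := by
    intro n x
    refine lint_step P hP0 μ m hm0 (B n) (B (n+1)) (hfin n) (hBmeas n) x
      (hint (n+1) x) (hintRHS n x) ?_
    exact ((integral_condExp (F.le n)).symm).trans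
      (integral_congr_ae (hbranch n x))
  have hL_tot : ∀ n, ∑' x, L n x = ENNReal.ofReal (m ^ n) := by
    intro n
    induction n with
    | zero =>
      rw [tsum_eq_single o (fun x hx => by rw [hL0, if_neg hx])]
      rw [hL0, if_pos rfl]
      simp
    | succ n ih =>
      calc ∑' x, L (n+1) x
          = ENNReal.ofReal m * ∑' x, ∑' y, ENNReal.ofReal (P y x) * L n y := by
            rw [tsum_congr fun x => hL_rec n x, ENNReal.tsum_mul_left]
        _ = ENNReal.ofReal m * ∑' y, ∑' x, ENNReal.ofReal (P y x) * L n y := by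
            rw [ENNReal.tsum_comm]
        _ = ENNReal.ofReal m * ∑' y, L n y := by
            refine congrArg _ (tsum_congr fun y => ?_)
            rw [ENNReal.tsum_mul_right, rowsum_one P hP0 hP1 y, one_mul]
        _ = ENNReal.ofReal m * ENNReal.ofReal (m ^ n) := by rw [ih]
        _ = ENNReal.ofReal (m ^ (n+1)) := by
            rw [← ENNReal.ofReal_mul hm0.le, ← pow_succ']
  have hL_le : ∀ n x, L n x ≤ ENNReal.ofReal (m ^ n) := fun n x =>
    (ENNReal.le_tsum x).trans (hL_tot n).le
  have hinvm : ∀ n : ℕ, ENNReal.ofReal ((m ^ n)⁻¹) * ENNReal.ofReal (m ^ n) = 1 := by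
    intro n
    rw [← ENNReal.ofReal_mul (hmn n).le, inv_mul_cancel₀ (pow_ne_zero n hm0.ne'),
      ENNReal.ofReal_one]
  -- lintegral bound for scaled sums with v ≤ 1
  have hlintBound : ∀ (v : S → ℝ), (∀ x, 0 ≤ v x) → (∀ x, v x ≤ 1) → ∀ n,
      ∫⁻ ω, ENNReal.ofReal ((m ^ n)⁻¹ * ∑' x, v x * (B n ω x : ℝ)) ∂μ ≤ 1 := by
    intro v hv0 hv1 n
    rw [lint_eq μ _ (hmn n).le v hv0 (B n) (hfin n) (hBmeas n)]
    calc ENNReal.ofReal ((m ^ n)⁻¹) * ∑' x, ENNReal.ofReal (v x) * L n x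
        ≤ ENNReal.ofReal ((m ^ n)⁻¹) * ∑' x, L n x := by
          refine mul_le_mul_right (ENNReal.tsum_le_tsum fun x => ?_) _
          calc ENNReal.ofReal (v x) * L n x ≤ 1 * L n x :=
                mul_le_mul_left (ENNReal.ofReal_le_one.mpr (hv1 x)) _
            _ = L n x := one_mul _
      _ = 1 := by rw [hL_tot n, hinvm n]
  -- integrability of scaled sums with 0 ≤ v ≤ 1
  have hIntGen : ∀ (v : S → ℝ), (∀ x, 0 ≤ v x) → (∀ x, v x ≤ 1) → ∀ n,
      Integrable (fun ω => (m ^ n)⁻¹ * ∑' x, v x * (B n ω x : ℝ)) μ := by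
    intro v hv0 hv1 n
    have hmeas := hMeasGen v hv0 _ (hmn n).le n mΩ (hBmeas n)
    refine ⟨hmeas.aestronglyMeasurable, ?_⟩
    rw [hasFiniteIntegral_iff_ofReal (ae_of_all _ fun ω =>
      mul_nonneg (hmn n).le (tsum_nonneg fun x => mul_nonneg (hv0 x) (Nat.cast_nonneg _)))]
    exact lt_of_le_of_lt (hlintBound v hv0 hv1 n) ENNReal.one_lt_top
  -- the supermartingale
  set M : ℕ → Ω → ℝ := fun n ω => (m ^ n)⁻¹ * ∑' x, u x * (B n ω x : ℝ) with hM_def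
  have hM0 : ∀ n ω, 0 ≤ M n ω := fun n ω =>
    mul_nonneg (hmn n).le (tsum_nonneg fun x => mul_nonneg (hu0 x) (Nat.cast_nonneg _))
  -- ν and the induction identity
  set ν : ℕ → S → ℝ≥0∞ := fun n x => ENNReal.ofReal ((m ^ n)⁻¹) * L n x with hν_def
  have hν_rec : ∀ n x, ν (n+1) x = ∑' y, (ν n y * ENNReal.ofReal (P y x)) := by
    intro n x
    rw [hν_def]
    simp only
    rw [hL_rec n x, ← mul_assoc, ← ENNReal.ofReal_mul (hmn (n+1)).le]
    have harith : (m ^ (n+1))⁻¹ * m = (m ^ n)⁻¹ := by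
      rw [pow_succ]
      field_simp
    rw [harith, ← ENNReal.tsum_mul_left]
    exact tsum_congr fun y => by ring
  have hr : ∀ n (E' : Set (ℕ → S)), MeasurableSet E' →
      ∑' x, ν n x * Q x E' = Q o ((shft^[n]) ⁻¹' E') := by
    intro n
    induction n with
    | zero =>
      intro E' hE'
      have hterm : ∀ x, ν 0 x * Q x E' = (if x = o then 1 else 0) * Q x E' := by
        intro x
        rw [hν_def]
        simp only [pow_zero, inv_one, ENNReal.ofReal_one, one_mul, hL0 x]
      rw [tsum_congr hterm, tsum_eq_single o (fun x hx => by rw [if_neg hx, zero_mul]),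
        if_pos rfl, one_mul]
      rfl
    | succ n ih =>
      intro E' hE'
      calc ∑' x, ν (n+1) x * Q x E'
          = ∑' x, Q x E' * (1 * ∑' y, (ν n y * ENNReal.ofReal (P y x)) * 1) := by
            refine tsum_congr fun x => ?_
            rw [hν_rec n x, one_mul, mul_comm]
            exact congrArg _ (tsum_congr fun y => (mul_one _).symm)
        _ = 1 * ∑' y, 1 * ∑' x, (ν n y * ENNReal.ofReal (P y x)) * Q x E' :=
            swap_helper 1 (fun x => Q x E') (fun _ => (1:ℝ≥0∞)) (fun y x => ν n y * ENNReal.ofReal (P y x))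
        _ = ∑' y, ν n y * ∑' x, ENNReal.ofReal (P y x) * Q x E' := by
            rw [one_mul]
            refine tsum_congr fun y => ?_
            rw [one_mul, ← ENNReal.tsum_mul_left]
            exact tsum_congr fun x => by ring
        _ = ∑' y, ν n y * Q y (shft ⁻¹' E') := by
            refine tsum_congr fun y => ?_
            rw [shift_apply P Q hP0 hP1 hQprob hQcyl y hE']
        _ = Q o ((shft^[n]) ⁻¹' (shft ⁻¹' E')) := ih _ (measurable_shft hE')
        _ = Q o ((shft^[n+1]) ⁻¹' E') := by
            rw [Function.iterate_succ', Set.preimage_comp]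
  -- value of the lintegral of M n
  have hMlint : ∀ n, ∫⁻ ω, ENNReal.ofReal (M n ω) ∂μ = Q o ((shft^[n]) ⁻¹' E) := by
    intro n
    rw [hM_def]
    simp only
    rw [lint_eq μ _ (hmn n).le u hu0 (B n) (hfin n) (hBmeas n), ← hr n E hEmeas,
      ← ENNReal.tsum_mul_left]
    refine tsum_congr fun x => ?_
    rw [hν_def]
    simp only
    rw [← hofRealu x]
    ring
  have hsetn : ∀ n, (shft^[n]) ⁻¹' E = {ω : ℕ → S | ∃ j, ω (j + n) ∈ A} := by
    intro n
    ext ω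
    rw [Set.mem_preimage, hE_def]
    simp only [Set.mem_iUnion, Set.mem_preimage, Set.mem_setOf_eq]
    exact exists_congr fun j => by rw [shft_iterate]
  have hQAtend : Tendsto (fun n => ∫⁻ ω, ENNReal.ofReal (M n ω) ∂μ) atTop (𝓝 0) := by
    have : (fun n => ∫⁻ ω, ENNReal.ofReal (M n ω) ∂μ)
        = fun n => Q o {ω : ℕ → S | ∃ j, ω (j + n) ∈ A} := by
      funext n
      rw [hMlint n, hsetn n]
    rw [this]
    exact hQA
  -- supermartingale structure
  have hMadp : StronglyAdapted F M := fun n =>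
    (hMeasGen u hu0 _ (hmn n).le n (F n) (hadapt n)).stronglyMeasurable
  have hMint : ∀ n, Integrable (M n) μ := fun n => hIntGen u hu0 hu1 n
  have hcond : ∀ n, μ[M (n+1)|F n] ≤ᵐ[μ] M n := by
    intro n
    set h : Ω → ℝ := fun ω => (m ^ n)⁻¹ * ∑' x, pu x * (B n ω x : ℝ) with hh_def
    have hle : ∀ ω, h ω ≤ M n ω := by
      intro ω
      refine mul_le_mul_of_nonneg_left ?_ (hmn n).le
      exact Summable.tsum_le_tsum
        (fun x => mul_le_mul_of_nonneg_right (hpu_le x) (Nat.cast_nonneg _))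
        (summable_mul_B pu (B n ω) (hfin n ω)) (summable_mul_B u (B n ω) (hfin n ω))
    have hsetint : ∀ s : Set Ω, MeasurableSet[F n] s →
        ∫ ω in s, h ω ∂μ = ∫ ω in s, M (n+1) ω ∂μ := by
      intro s hs
      have hs' : MeasurableSet s := F.le n s hs
      set μs := μ.restrict s with hμs_def
      have hK : ∀ x, ∫⁻ ω, (B (n+1) ω x : ℝ≥0∞) ∂μs =
          ENNReal.ofReal m * ∑' y, ENNReal.ofReal (P y x) * ∫⁻ ω, (B n ω y : ℝ≥0∞) ∂μs := by
        intro x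
        refine lint_step P hP0 μs m hm0 (B n) (B (n+1)) (hfin n) (hBmeas n) x
          ((hint (n+1) x).restrict) ((hintRHS n x).restrict) ?_
        calc ∫ ω, (B (n+1) ω x : ℝ) ∂μs
            = ∫ ω in s, (μ[fun ω => (B (n + 1) ω x : ℝ)|F n]) ω ∂μ :=
              (setIntegral_condExp (F.le n) (hint (n+1) x) hs).symm
          _ = ∫ ω, m * ∑' y, (B n ω y : ℝ) * P y x ∂μs :=
              integral_congr_ae (ae_restrict_of_ae (hbranch n x))
      have hJfin : ∀ y, ∫⁻ ω, (B n ω y : ℝ≥0∞) ∂μs ≠ ∞ := by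
        intro y
        refine ne_of_lt (lt_of_le_of_lt ?_ (lt_of_le_of_lt (hL_le n y) ENNReal.ofReal_lt_top))
        rw [hμs_def, hL_def]
        exact lintegral_mono' Measure.restrict_le_self le_rfl
      -- both sides as toReal of lintegrals
      have hM1 : ∫ ω in s, M (n+1) ω ∂μ =
          (ENNReal.ofReal ((m ^ (n+1))⁻¹) *
            ∑' x, ENNReal.ofReal (u x) * ∫⁻ ω, (B (n+1) ω x : ℝ≥0∞) ∂μs).toReal := by
        rw [integral_eq_lintegral_of_nonneg_ae (ae_of_all _ fun ω => hM0 (n+1) ω)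
          ((hMeasGen u hu0 _ (hmn (n+1)).le (n+1) mΩ (hBmeas (n+1))).aestronglyMeasurable)]
        rw [hM_def]
        simp only
        rw [lint_eq μs _ (hmn (n+1)).le u hu0 (B (n+1)) (hfin (n+1)) (hBmeas (n+1))]
      have hh1 : ∫ ω in s, h ω ∂μ =
          (ENNReal.ofReal ((m ^ n)⁻¹) *
            ∑' y, ENNReal.ofReal (pu y) * ∫⁻ ω, (B n ω y : ℝ≥0∞) ∂μs).toReal := by
        rw [integral_eq_lintegral_of_nonneg_ae (ae_of_all _ fun ω =>
            mul_nonneg (hmn n).le (tsum_nonneg fun x => mul_nonneg (hpu0 x) (Nat.cast_nonneg _)))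
          ((hMeasGen pu hpu0 _ (hmn n).le n mΩ (hBmeas n)).aestronglyMeasurable)]
        try rw [hh_def]
        try simp only
        rw [lint_eq μs _ (hmn n).le pu hpu0 (B n) (hfin n) (hBmeas n)]
      rw [hM1, hh1]
      congr 1
      symm
      calc ENNReal.ofReal ((m ^ (n+1))⁻¹) *
            ∑' x, ENNReal.ofReal (u x) * ∫⁻ ω, (B (n+1) ω x : ℝ≥0∞) ∂μs
          = ENNReal.ofReal ((m ^ (n+1))⁻¹) * (ENNReal.ofReal m *
              ∑' y, (∫⁻ ω, (B n ω y : ℝ≥0∞) ∂μs) *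
                ∑' x, ENNReal.ofReal (P y x) * ENNReal.ofReal (u x)) := by
            rw [tsum_congr fun x => by rw [hK x]]
            rw [swap_helper (ENNReal.ofReal m) (fun x => ENNReal.ofReal (u x))
              (fun y => ∫⁻ ω, (B n ω y : ℝ≥0∞) ∂μs) (fun y x => ENNReal.ofReal (P y x))]
        _ = ENNReal.ofReal ((m ^ n)⁻¹) *
              ∑' y, ENNReal.ofReal (pu y) * ∫⁻ ω, (B n ω y : ℝ≥0∞) ∂μs := by
            rw [← mul_assoc, ← ENNReal.ofReal_mul (hmn (n+1)).le]
            have harith : (m ^ (n+1))⁻¹ * m = (m ^ n)⁻¹ := by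
              rw [pow_succ]
              field_simp
            rw [harith]
            refine congrArg _ (tsum_congr fun y => ?_)
            rw [← hofRealpu y]
            ring
    have hh_eq : h =ᵐ[μ] μ[M (n+1)|F n] := by
      refine ae_eq_condExp_of_forall_setIntegral_eq (F.le n) (hMint (n+1)) ?_ ?_ ?_
      · intro s hs hμs
        exact (hIntGen pu hpu0 hpu1 n).integrableOn
      · intro s hs hμs
        exact (hsetint s hs).trans rfl
      · exact ((hMeasGen pu hpu0 _ (hmn n).le n (F n) (hadapt n)).stronglyMeasurable).aestronglyMeasurable
    calc μ[M (n+1)|F n] =ᵐ[μ] h := hh_eq.symm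
      _ ≤ᵐ[μ] M n := ae_of_all _ hle
  have hsuper : Supermartingale M F μ := supermartingale_nat hMadp hMint hcond
  -- a.e. convergence
  have hsnorm : ∀ n, eLpNorm (M n) 1 μ ≤ ((1 : NNReal) : ℝ≥0∞) := by
    intro n
    rw [eLpNorm_one_eq_lintegral_enorm]
    have hnn : ∀ ω, ‖M n ω‖ₑ = ENNReal.ofReal (M n ω) := fun ω =>
      Real.enorm_eq_ofReal (hM0 n ω)
    rw [lintegral_congr hnn]
    simpa using hlintBound u hu0 hu1 n
  have hconv : ∀ᵐ ω ∂μ, ∃ c, Tendsto (fun n => (-M) n ω) atTop (𝓝 c) :=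
    hsuper.neg.exists_ae_tendsto_of_bdd (R := 1) fun n => by
      have hMn : (-M) n = -(M n) := rfl
      rw [hMn, eLpNorm_neg]
      exact hsnorm n
  -- Fatou
  have hMambmeas : ∀ n, Measurable (M n) := fun n =>
    hMeasGen u hu0 _ (hmn n).le n mΩ (hBmeas n)
  have hliminf0 : ∀ᵐ ω ∂μ, liminf (fun n => ENNReal.ofReal (M n ω)) atTop = 0 := by
    have hmeaslim : Measurable fun ω => liminf (fun n => ENNReal.ofReal (M n ω)) atTop :=
      Measurable.liminf fun n => ENNReal.measurable_ofReal.comp (hMambmeas n)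
    have hlim0 : ∫⁻ ω, liminf (fun n => ENNReal.ofReal (M n ω)) atTop ∂μ = 0 := by
      refine le_antisymm ?_ zero_le
      calc ∫⁻ ω, liminf (fun n => ENNReal.ofReal (M n ω)) atTop ∂μ
          ≤ liminf (fun n => ∫⁻ ω, ENNReal.ofReal (M n ω) ∂μ) atTop :=
            lintegral_liminf_le fun n => ENNReal.measurable_ofReal.comp (hMambmeas n)
        _ = 0 := hQAtend.liminf_eq
    exact (lintegral_eq_zero_iff hmeaslim).mp hlim0
  filter_upwards [hconv, hliminf0] with ω hωc hωl
  obtain ⟨c, hc⟩ := hωc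
  have hMtend : Tendsto (fun n => M n ω) atTop (𝓝 (-c)) := by
    have := hc.neg
    simpa using this
  have h1 : Tendsto (fun n => ENNReal.ofReal (M n ω)) atTop (𝓝 (ENNReal.ofReal (-c))) :=
    (ENNReal.continuous_ofReal.tendsto _).comp hMtend
  have h2 : ENNReal.ofReal (-c) = 0 := by
    rw [← hωl, h1.liminf_eq]
  have h3 : -c ≤ 0 := by
    by_contra hcon
    push_neg at hcon
    rw [ENNReal.ofReal_eq_zero] at h2
    linarith
  have h4 : (0:ℝ) ≤ -c := ge_of_tendsto hMtend (Eventually.of_forall fun n => hM0 n ω)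
  have hc0 : -c = 0 := le_antisymm h3 h4
  have hMzero : Tendsto (fun n => M n ω) atTop (𝓝 0) := hc0 ▸ hMtend
  -- squeeze
  have hind0 : ∀ x, (0:ℝ) ≤ A.indicator (fun _ => (1:ℝ)) x := fun x =>
    Set.indicator_nonneg (fun _ _ => zero_le_one) x
  have hindu : ∀ x, A.indicator (fun _ => (1:ℝ)) x ≤ u x := by
    intro x
    by_cases hx : x ∈ A
    · rw [Set.indicator_of_mem hx]
      exact le_of_eq (huA x hx).symm
    · rw [Set.indicator_of_notMem hx]
      exact hu0 x
  refine squeeze_zero (fun n => mul_nonneg (hmn n).le (tsum_nonneg fun x =>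
    mul_nonneg (hind0 x) (Nat.cast_nonneg _))) (fun n => ?_) hMzero
  refine mul_le_mul_of_nonneg_left ?_ (hmn n).le
  exact Summable.tsum_le_tsum
    (fun x => mul_le_mul_of_nonneg_right (hindu x) (Nat.cast_nonneg _))
    (summable_mul_B _ (B n ω) (hfin n ω)) (summable_mul_B u (B n ω) (hfin n ω))


end BRWaux

/-- Let `∂harm` be the support of the law of `X_∞` under `𝐏ₒ`, i.e. the
smallest closed subset of `∂` carrying all the mass of `X_∞`. Almost surely, every
subsequential weak limit `W` of the random measures `B̄ₙ` on `C` is supported on `∂harm`,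
i.e. `W(C \ ∂harm) = 0`. -/
theorem brw_subseq_limits_supported_on_harmonic_boundary
    {S : Type*} [Countable S] [DecidableEq S]
    (P : S → S → ℝ)
    (hP0 : ∀ x y, 0 ≤ P x y)
    (hP1 : ∀ x, HasSum (fun y => P x y) 1)
    (m : ℝ) (hm : 1 < m) (o : S)
    {Ω : Type*} {mΩ : MeasurableSpace Ω}
    (μ : Measure Ω) [IsProbabilityMeasure μ]
    (F : Filtration ℕ mΩ)
    (B : ℕ → Ω → S → ℕ)
    (hadapt : ∀ n x, Measurable[F n] (fun ω => B n ω x))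
    (hfin : ∀ n ω, (Function.support (B n ω)).Finite)
    (hint : ∀ n x, Integrable (fun ω => (B n ω x : ℝ)) μ)
    (hB0 : ∀ ω x, B 0 ω x = if x = o then 1 else 0)
    (hbranch : ∀ n x,
      μ[fun ω => (B (n + 1) ω x : ℝ)|F n]
        =ᵐ[μ] fun ω => m * ∑' y, (B n ω y : ℝ) * P y x)
    {C : Type*} [TopologicalSpace C] [CompactSpace C]
    [TopologicalSpace.MetrizableSpace C] [MeasurableSpace C] [BorelSpace C]
    [TopologicalSpace S] [DiscreteTopology S]
    (ι : S → C) (hι : IsOpenEmbedding ι)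
    [MeasurableSpace S] [MeasurableSingletonClass S]
    (Q : S → Measure (ℕ → S))
    (hQprob : ∀ x, IsProbabilityMeasure (Q x))
    (hQcyl : ∀ (x : S) (n : ℕ) (s : ℕ → S),
      Q x {ω | ∀ i ≤ n, ω i = s i} =
        (if s 0 = x then 1 else 0) *
          ∏ i ∈ Finset.range n, ENNReal.ofReal (P (s i) (s (i + 1))))
    (Xinf : (ℕ → S) → C)
    (hXmeas : Measurable Xinf)
    (hXconv : ∀ x : S, ∀ᵐ ω ∂(Q x),
      Xinf ω ∈ (Set.range ι)ᶜ ∧ Tendsto (fun n => ι (ω n)) atTop (𝓝 (Xinf ω)))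
    (H : Set C) (hHclosed : IsClosed H) (hHsub : H ⊆ (Set.range ι)ᶜ)
    (hHfull : Q o (Xinf ⁻¹' H) = 1)
    (hHmin : ∀ H' : Set C, IsClosed H' → H' ⊆ (Set.range ι)ᶜ →
      Q o (Xinf ⁻¹' H') = 1 → H ⊆ H') :
    ∀ᵐ ω ∂μ, ∀ W : Measure C, IsFiniteMeasure W →
      IsSubseqWeakLimit
        (fun n => brwMeasure ι fun x => ENNReal.ofReal ((m ^ n)⁻¹ * (B n ω x : ℝ))) W →
      W Hᶜ = 0 := by
  classical
  letI : MetricSpace C := TopologicalSpace.metrizableSpaceMetric C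
  haveI := hQprob
  have hm0 : (0:ℝ) < m := lt_trans one_pos hm
  have hmn : ∀ n : ℕ, (0:ℝ) < (m ^ n)⁻¹ := fun n => inv_pos.mpr (pow_pos hm0 n)
  have hHne : H.Nonempty := by
    by_contra hne
    rw [Set.not_nonempty_iff_eq_empty] at hne
    rw [hne] at hHfull
    simp at hHfull
  set ε : ℕ → ℝ := fun k => ((k : ℝ) + 1)⁻¹ with hε_def
  have hε0 : ∀ k, 0 < ε k := fun k => by positivity
  set A : ℕ → Set S := fun k => {x | ε k ≤ Metric.infDist (ι x) H} with hA_def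
  -- decay of the tail hitting probabilities
  have hQA : ∀ k, Tendsto (fun n => Q o {ω : ℕ → S | ∃ j, ω (j + n) ∈ A k}) atTop (𝓝 0) := by
    intro k
    set s : ℕ → Set (ℕ → S) := fun n => {ω : ℕ → S | ∃ j, ω (j + n) ∈ A k} with hs_def
    have hsmeas : ∀ n, MeasurableSet (s n) := by
      intro n
      have hs_eq : s n = ⋃ j, (fun ω : ℕ → S => ω (j + n)) ⁻¹' (A k) := by
        ext ω
        simp [hs_def]
      rw [hs_eq]
      exact MeasurableSet.iUnion fun j =>
        (measurable_pi_apply _) (BRWaux.measurableSet_all _)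
    have hanti : Antitone s := by
      refine antitone_nat_of_succ_le fun n ω hω => ?_
      obtain ⟨j, hj⟩ := hω
      exact ⟨j + 1, by rwa [show j + 1 + n = j + (n + 1) by omega]⟩
    have hlim : Tendsto (fun n => Q o (s n)) atTop (𝓝 (Q o (⋂ n, s n))) :=
      tendsto_measure_iInter_atTop (μ := Q o)
        (fun n => (hsmeas n).nullMeasurableSet) hanti ⟨0, measure_ne_top _ _⟩
    have hgood : ∀ᵐ ω ∂(Q o), Xinf ω ∈ H ∧
        Tendsto (fun n => ι (ω n)) atTop (𝓝 (Xinf ω)) := by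
      have h1 : ∀ᵐ ω ∂(Q o), Xinf ω ∈ H := by
        have hms : MeasurableSet (Xinf ⁻¹' H) := hXmeas hHclosed.measurableSet
        have : Q o (Xinf ⁻¹' H)ᶜ = 0 := (prob_compl_eq_zero_iff hms).mpr hHfull
        rw [ae_iff]
        exact this
      filter_upwards [h1, hXconv o] with ω hω1 hω2 using ⟨hω1, hω2.2⟩
    have hnull : Q o (⋂ n, s n) = 0 := by
      refine measure_mono_null ?_ (ae_iff.mp hgood)
      intro ω hω
      simp only [Set.mem_setOf_eq]
      intro hP
      obtain ⟨hH, htd⟩ := hP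
      have hd : Tendsto (fun n => Metric.infDist (ι (ω n)) H) atTop (𝓝 0) := by
        have := (Metric.continuous_infDist_pt H).tendsto (Xinf ω) |>.comp htd
        rwa [Metric.infDist_zero_of_mem hH] at this
      have hev : ∀ᶠ n in atTop, Metric.infDist (ι (ω n)) H < ε k :=
        hd.eventually_lt_const (hε0 k)
      obtain ⟨N, hN⟩ := eventually_atTop.mp hev
      obtain ⟨j, hj⟩ := Set.mem_iInter.mp hω N
      have hjA : ε k ≤ Metric.infDist (ι (ω (j + N))) H := hj
      have := hN (j + N) (by omega)
      linarith
    rw [hnull] at hlim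
    exact hlim
  -- apply the key lemma for every k
  have hkey : ∀ᵐ ω ∂μ, ∀ k : ℕ, Tendsto (fun n => (m ^ n)⁻¹ *
      ∑' x, (A k).indicator (fun _ => (1:ℝ)) x * (B n ω x : ℝ)) atTop (𝓝 0) := by
    rw [ae_all_iff]
    intro k
    exact BRWaux.key P hP0 hP1 m hm o μ F B hadapt hfin hint hB0 hbranch Q hQprob hQcyl
      (A k) (hQA k)
  filter_upwards [hkey] with ω hω
  rintro W hWfin ⟨φ, hφ, hconv⟩
  -- bounded continuous test functions
  have hcont : ∀ k : ℕ, Continuous fun c : C =>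
      min 1 (max 0 ((ε k)⁻¹ * Metric.infDist c H - 1)) := by
    intro k
    exact continuous_const.min (continuous_const.max
      ((continuous_const.mul (Metric.continuous_infDist_pt H)).sub continuous_const))
  set g : ℕ → BoundedContinuousFunction C ℝ := fun k =>
    BoundedContinuousFunction.mkOfCompact ⟨_, hcont k⟩ with hg_def
  have hg_apply : ∀ k c, g k c = min 1 (max 0 ((ε k)⁻¹ * Metric.infDist c H - 1)) :=
    fun k c => rfl
  have hg0 : ∀ k c, 0 ≤ g k c := fun k c => by
    rw [hg_apply]
    exact le_min zero_le_one (le_max_left _ _)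
  have hg1 : ∀ k c, g k c ≤ 1 := fun k c => by
    rw [hg_apply]
    exact min_le_left _ _
  have hgind : ∀ k x, g k (ι x) ≤ (A k).indicator (fun _ => (1:ℝ)) x := by
    intro k x
    by_cases hx : x ∈ A k
    · rw [Set.indicator_of_mem hx]
      exact hg1 k _
    · rw [Set.indicator_of_notMem hx]
      have hlt : Metric.infDist (ι x) H < ε k := not_le.mp hx
      have hd0 : (0:ℝ) ≤ Metric.infDist (ι x) H := Metric.infDist_nonneg
      have h2 : (ε k)⁻¹ * Metric.infDist (ι x) H ≤ 1 := by
        have h3 : (ε k)⁻¹ * Metric.infDist (ι x) H ≤ (ε k)⁻¹ * ε k :=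
          mul_le_mul_of_nonneg_left hlt.le (inv_pos.mpr (hε0 k)).le
        rwa [inv_mul_cancel₀ (hε0 k).ne'] at h3
      rw [hg_apply, max_eq_left (by linarith)]
      simp
  set T : ℕ → Set C := fun k => {c | 2 * ε k ≤ Metric.infDist c H} with hT_def
  have hgT : ∀ k, ∀ c ∈ T k, g k c = 1 := by
    intro k c hc
    have hc' : 2 * ε k ≤ Metric.infDist c H := hc
    have h2 : (1:ℝ) ≤ (ε k)⁻¹ * Metric.infDist c H - 1 := by
      have h3 : (ε k)⁻¹ * (2 * ε k) ≤ (ε k)⁻¹ * Metric.infDist c H :=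
        mul_le_mul_of_nonneg_left hc' (inv_pos.mpr (hε0 k)).le
      have h4 : (ε k)⁻¹ * (2 * ε k) = 2 := by
        field_simp
        exact div_self (hε0 k).ne'
      linarith
    rw [hg_apply, max_eq_right (by linarith), min_eq_left h2]
  -- the random measures are finite
  set w : ℕ → S → ℝ≥0∞ := fun n x => ENNReal.ofReal ((m ^ n)⁻¹ * (B n ω x : ℝ)) with hw_def
  have hwfin : ∀ n : ℕ, IsFiniteMeasure (Measure.sum fun x => w n x • Measure.dirac (ι x)) := by
    intro n
    constructor
    rw [Measure.sum_apply _ MeasurableSet.univ]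
    simp only [Measure.smul_apply, smul_eq_mul, measure_univ, mul_one]
    have hzero : ∀ x ∉ (hfin n ω).toFinset, w n x = 0 := by
      intro x hx
      have hBx : B n ω x = 0 := by
        by_contra hB
        exact hx ((hfin n ω).mem_toFinset.mpr hB)
      rw [hw_def]
      simp [hBx]
    rw [tsum_eq_sum hzero]
    exact ENNReal.sum_lt_top.mpr fun x _ => ENNReal.ofReal_lt_top
  -- integral of g k against the random measures
  have hgint : ∀ (k n : ℕ), ∫ c, g k c ∂(brwMeasure ι (w n)) =
      ∑' x, ((m ^ n)⁻¹ * (B n ω x : ℝ)) * g k (ι x) := by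
    intro k n
    haveI := hwfin n
    rw [brwMeasure, integral_sum_measure ((g k).integrable _)]
    refine tsum_congr fun x => ?_
    rw [integral_smul_measure, integral_dirac' _ _ ((g k).continuous.stronglyMeasurable)]
    rw [hw_def]
    simp only
    rw [ENNReal.toReal_ofReal (mul_nonneg (hmn n).le (Nat.cast_nonneg _))]
    rw [smul_eq_mul]
  -- summability facts
  have hsum1 : ∀ (k n : ℕ), Summable fun x => ((m ^ n)⁻¹ * (B n ω x : ℝ)) * g k (ι x) := by
    intro k n
    refine summable_of_ne_finset_zero (s := (hfin n ω).toFinset) fun x hx => ?_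
    have hBx : B n ω x = 0 := by
      by_contra hB
      exact hx ((hfin n ω).mem_toFinset.mpr hB)
    simp [hBx]
  have hsum2 : ∀ (k n : ℕ),
      Summable fun x => (m ^ n)⁻¹ * ((A k).indicator (fun _ => (1:ℝ)) x * (B n ω x : ℝ)) := by
    intro k n
    refine summable_of_ne_finset_zero (s := (hfin n ω).toFinset) fun x hx => ?_
    have hBx : B n ω x = 0 := by
      by_contra hB
      exact hx ((hfin n ω).mem_toFinset.mpr hB)
    simp [hBx]
  -- the limit of the integrals along the subsequence is 0
  have hWg : ∀ k, ∫ c, g k c ∂W = 0 := by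
    intro k
    have h1 : Tendsto (fun j => ∫ c, g k c ∂(brwMeasure ι (w (φ j)))) atTop
        (𝓝 (∫ c, g k c ∂W)) := hconv (g k)
    have hsubseq : Tendsto (fun j => (m ^ φ j)⁻¹ *
        ∑' x, (A k).indicator (fun _ => (1:ℝ)) x * (B (φ j) ω x : ℝ)) atTop (𝓝 0) :=
      (hω k).comp hφ.tendsto_atTop
    have h2 : Tendsto (fun j => ∫ c, g k c ∂(brwMeasure ι (w (φ j)))) atTop (𝓝 0) := by
      refine squeeze_zero (fun j => ?_) (fun j => ?_) hsubseq
      · rw [hgint k (φ j)]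
        exact tsum_nonneg fun x =>
          mul_nonneg (mul_nonneg (hmn (φ j)).le (Nat.cast_nonneg _)) (hg0 k _)
      · rw [hgint k (φ j), ← tsum_mul_left]
        refine Summable.tsum_le_tsum (fun x => ?_) (hsum1 k (φ j)) (hsum2 k (φ j))
        calc ((m ^ φ j)⁻¹ * (B (φ j) ω x : ℝ)) * g k (ι x)
            ≤ ((m ^ φ j)⁻¹ * (B (φ j) ω x : ℝ)) * (A k).indicator (fun _ => (1:ℝ)) x := by
              refine mul_le_mul_of_nonneg_left (hgind k x) ?_
              exact mul_nonneg (hmn (φ j)).le (Nat.cast_nonneg _)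
          _ = (m ^ φ j)⁻¹ * ((A k).indicator (fun _ => (1:ℝ)) x * (B (φ j) ω x : ℝ)) := by
              ring
    exact tendsto_nhds_unique h1 h2
  -- hence W vanishes on each T k
  have hTclosed : ∀ k, IsClosed (T k) := fun k =>
    isClosed_le continuous_const (Metric.continuous_infDist_pt H)
  have hWT : ∀ k, W (T k) = 0 := by
    intro k
    have h0 : W (T k) ≤ ∫⁻ c, ENNReal.ofReal (g k c) ∂W := by
      calc W (T k) = ∫⁻ _ in T k, 1 ∂W := (setLIntegral_one _).symm
        _ ≤ ∫⁻ c in T k, ENNReal.ofReal (g k c) ∂W := by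
            refine setLIntegral_mono
              (ENNReal.measurable_ofReal.comp (g k).continuous.measurable) ?_
            intro c hc
            rw [hgT k c hc]
            simp
        _ ≤ ∫⁻ c, ENNReal.ofReal (g k c) ∂W := setLIntegral_le_lintegral _ _
    rw [← ofReal_integral_eq_lintegral_ofReal ((g k).integrable W)
      (ae_of_all _ (hg0 k)), hWg k] at h0
    simpa using le_antisymm (by simpa using h0) zero_le
  -- conclusion
  have hsubset : Hᶜ ⊆ ⋃ k, T k := by
    intro c hc
    have hpos : 0 < Metric.infDist c H :=
      (hHclosed.notMem_iff_infDist_pos hHne).mp hc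
    obtain ⟨k, hk⟩ := exists_nat_gt (2 / Metric.infDist c H)
    refine Set.mem_iUnion.mpr ⟨k, ?_⟩
    show 2 * ε k ≤ Metric.infDist c H
    rw [hε_def]
    have hk1 : (2:ℝ) / Metric.infDist c H < (k:ℝ) + 1 := by
      have : (k:ℝ) < (k:ℝ) + 1 := by linarith
      linarith
    rw [div_lt_iff₀ hpos] at hk1
    have hkpos : (0:ℝ) < (k:ℝ) + 1 := by positivity
    rw [mul_comm] at hk1
    calc 2 * ((k:ℝ) + 1)⁻¹ ≤ Metric.infDist c H * ((k:ℝ) + 1) * ((k:ℝ) + 1)⁻¹ := by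
          refine mul_le_mul_of_nonneg_right hk1.le (by positivity)
      _ = Metric.infDist c H := by
          field_simp
  have : W Hᶜ ≤ 0 := by
    calc W Hᶜ ≤ W (⋃ k, T k) := measure_mono hsubset
      _ = 0 := measure_iUnion_null fun k => hWT k
  exact le_antisymm this zero_le
end
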